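/- arXiv:1603.00650 — 7 statements merged into one kernel-verified Lean document; each statement's English description precedes it below -/
import Mathlib

section
/- Let P = ∏_{n=1}^∞ X_n be a product of a sequence of completely regular (Tychonoff) spaces and let X ⊆ P be a subspace such that either P is perfectly normal or X is Lindelöf. Let (Y,d) be a path-connected separable metric space which is an R-space. Then every function f : X → Y of the first Lebesgue class is the pointwise limit of a sequence of functions from CF(X,Y). -/
open Filter Topology

/-- A map on a subspace `S` of a countable product depends on finitely many coordinates. -/
def FinDetOn {X : ℕ → Type*} {Y : Type*} (S : Set (∀ n, X n)) (f : S → Y) : Prop :=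
  ∃ N : ℕ, ∀ x y : S, (∀ i ≤ N, (x : ∀ n, X n) i = (y : ∀ n, X n) i) → f x = f y

/-- A set `A` is an F_σ-set: a countable union of closed sets. -/
def IsFsigma {X : Type*} [TopologicalSpace X] (A : Set X) : Prop :=
  ∃ F : ℕ → Set X, (∀ n, IsClosed (F n)) ∧ A = ⋃ n, F n

/-- A map is of the first Lebesgue class: preimages of open sets are F_σ. -/
def LebesgueOne {X Y : Type*} [TopologicalSpace X] [TopologicalSpace Y] (f : X → Y) : Prop :=
  ∀ V : Set Y, IsOpen V → IsFsigma (f ⁻¹' V)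

/-- A metric space is an R-space. -/
def IsRSpace (Y : Type*) [MetricSpace Y] : Prop :=
  ∀ ε : ℝ, 0 < ε → ∃ r : Y × Y → Y, Continuous r ∧
    (∀ y z : Y, dist y z ≤ ε → r (y, z) = y) ∧ ∀ y z : Y, dist (r (y, z)) z ≤ ε

section Aux
open Set

namespace FinDetOn
variable {X : ℕ → Type*} {Y Z W : Type*} {S : Set (∀ n, X n)}

theorem const (c : Y) : FinDetOn S (fun _ => c) := ⟨0, fun _ _ _ => rfl⟩

theorem comp {f : S → Y} (hf : FinDetOn S f) (g : Y → Z) : FinDetOn S (fun x => g (f x)) := by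
  obtain ⟨N, hN⟩ := hf
  exact ⟨N, fun x y h => congrArg g (hN x y h)⟩

theorem prodMk {f : S → Y} {g : S → Z} (hf : FinDetOn S f) (hg : FinDetOn S g) :
    FinDetOn S (fun x => (f x, g x)) := by
  obtain ⟨N, hN⟩ := hf; obtain ⟨M, hM⟩ := hg
  refine ⟨max N M, fun x y h => ?_⟩
  have h1 := hN x y fun i hi => h i (hi.trans (le_max_left _ _))
  have h2 := hM x y fun i hi => h i (hi.trans (le_max_right _ _))
  simp [h1, h2]

theorem comp2 {f : S → Y} {g : S → Z} (hf : FinDetOn S f) (hg : FinDetOn S g)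
    (op : Y → Z → W) : FinDetOn S (fun x => op (f x) (g x)) :=
  (hf.prodMk hg).comp fun p => op p.1 p.2

theorem finsetSum {ι : Type*} (s : Finset ι) (f : ι → S → ℝ)
    (h : ∀ i ∈ s, FinDetOn S (f i)) : FinDetOn S (fun x => ∑ i ∈ s, f i x) := by
  classical
  induction s using Finset.induction_on with
  | empty => simpa using const (0:ℝ)
  | @insert a s ha ih =>
      have h1 : FinDetOn S (f a) := h a (Finset.mem_insert_self a s)
      have h2 : FinDetOn S (fun x => ∑ i ∈ s, f i x) :=
        ih fun i hi => h i (Finset.mem_insert_of_mem hi)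
      simpa [Finset.sum_insert ha] using h1.comp2 h2 (· + ·)

theorem finsetProd {ι : Type*} (s : Finset ι) (f : ι → S → ℝ)
    (h : ∀ i ∈ s, FinDetOn S (f i)) : FinDetOn S (fun x => ∏ i ∈ s, f i x) := by
  classical
  induction s using Finset.induction_on with
  | empty => simpa using const (1:ℝ)
  | @insert a s ha ih =>
      have h1 : FinDetOn S (f a) := h a (Finset.mem_insert_self a s)
      have h2 : FinDetOn S (fun x => ∏ i ∈ s, f i x) :=
        ih fun i hi => h i (Finset.mem_insert_of_mem hi)
      simpa [Finset.prod_insert ha] using h1.comp2 h2 (· * ·)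

end FinDetOn

theorem geomHalf : ∀ m : ℕ, ∑ p ∈ Finset.range m, ((2:ℝ)⁻¹)^(p+1) = 1 - (2⁻¹)^m := by
  intro m
  induction m with
  | zero => simp
  | succ m ih => rw [Finset.sum_range_succ, ih]; ring

theorem summable_halfpow : Summable (fun n : ℕ => (2⁻¹:ℝ)^(n+1)) := by
  simpa [pow_succ] using
    (summable_geometric_of_lt_one (r := (2⁻¹:ℝ)) (by norm_num) (by norm_num)).mul_right 2⁻¹

/-- In a perfectly normal space, every closed set admits a nonnegative continuous
function vanishing exactly on it. -/
theorem pn_zero_fun {P : Type*} [TopologicalSpace P] [PerfectlyNormalSpace P]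
    {C : Set P} (hC : IsClosed C) :
    ∃ ζ : P → ℝ, Continuous ζ ∧ (∀ x, 0 ≤ ζ x) ∧ (∀ x ∈ C, ζ x = 0) ∧
      (∀ x, x ∉ C → 0 < ζ x) := by
  have hGδ : IsGδ C := PerfectlyNormalSpace.closed_gdelta hC
  rw [isGδ_iff_eq_iInter_nat] at hGδ
  obtain ⟨U, hUo, hUC⟩ := hGδ
  have hsub : ∀ n, C ⊆ U n := fun n => by rw [hUC]; exact iInter_subset U n
  have hdisj : ∀ n, Disjoint C (U n)ᶜ := fun n =>
    disjoint_compl_right_iff_subset.mpr (hsub n)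
  have := fun n => exists_continuous_zero_one_of_isClosed hC (hUo n).isClosed_compl (hdisj n)
  choose g hg0 hg1 hg01 using this
  have hbnd : ∀ (n : ℕ) (x : P), ‖(2⁻¹:ℝ)^(n+1) * g n x‖ ≤ (2⁻¹:ℝ)^(n+1) := by
    intro n x
    have h1 := (hg01 n x).1
    have h2 := (hg01 n x).2
    rw [Real.norm_eq_abs, abs_mul, abs_of_nonneg (by positivity : (0:ℝ) ≤ (2⁻¹:ℝ)^(n+1))]
    have : |g n x| ≤ 1 := by rw [abs_le]; constructor <;> linarith
    calc (2⁻¹:ℝ)^(n+1) * |g n x| ≤ (2⁻¹:ℝ)^(n+1) * 1 :=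
          mul_le_mul_of_nonneg_left this (by positivity)
      _ = (2⁻¹:ℝ)^(n+1) := mul_one _
  refine ⟨fun x => ∑' n, (2⁻¹:ℝ)^(n+1) * g n x, ?_, ?_, ?_, ?_⟩
  · exact continuous_tsum (fun n => continuous_const.mul (g n).continuous)
      summable_halfpow hbnd
  · intro x
    apply tsum_nonneg
    intro n
    have := (hg01 n x).1
    positivity
  · intro x hx
    have : ∀ n, (2⁻¹:ℝ)^(n+1) * g n x = 0 := fun n => by
      rw [hg0 n hx]; simp
    simp only [this, tsum_zero]
  · intro x hx
    rw [hUC] at hx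
    simp only [mem_iInter, not_forall] at hx
    obtain ⟨n, hn⟩ := hx
    have hsum : Summable (fun n => (2⁻¹:ℝ)^(n+1) * g n x) := by
      apply Summable.of_nonneg_of_le (fun m => by have := (hg01 m x).1; positivity)
        (fun m => ?_) summable_halfpow
      have := hbnd m x
      rw [Real.norm_eq_abs, abs_of_nonneg (by have := (hg01 m x).1; positivity)] at this
      exact this
    have hterm : (2⁻¹:ℝ)^(n+1) * g n x = (2⁻¹:ℝ)^(n+1) := by
      rw [hg1 n hn]; simp
    calc (0:ℝ) < (2⁻¹:ℝ)^(n+1) := by positivity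
      _ = (2⁻¹:ℝ)^(n+1) * g n x := hterm.symm
      _ ≤ ∑' m, (2⁻¹:ℝ)^(m+1) * g m x := by
          apply Summable.le_tsum hsum
          intro m _
          have := (hg01 m x).1
          positivity

/-- Cozero neighborhoods determined by finitely many coordinates. -/
theorem exists_cozero_nbhd {X : ℕ → Type*} [∀ n, TopologicalSpace (X n)]
    [∀ n, T35Space (X n)] (S : Set (∀ n, X n)) {U : Set S} (hU : IsOpen U)
    {x : S} (hx : x ∈ U) :
    ∃ ρ : S → ℝ, Continuous ρ ∧ FinDetOn S ρ ∧ (∀ y, 0 ≤ ρ y) ∧ ρ x = 1 ∧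
      ∀ y, ρ y ≠ 0 → y ∈ U := by
  classical
  rw [isOpen_induced_iff] at hU
  obtain ⟨V, hV, hVU⟩ := hU
  have hxV : (x : ∀ n, X n) ∈ V := by rw [← hVU] at hx; exact hx
  obtain ⟨I, u, hu, hpi⟩ := (isOpen_pi_iff.mp hV) _ hxV
  -- for each i ∈ I choose a separating function
  have hsep : ∀ i ∈ I, ∃ κ : X i → ℝ, Continuous κ ∧ (∀ t, κ t ∈ Icc (0:ℝ) 1) ∧
      κ ((x : ∀ n, X n) i) = 1 ∧ ∀ t, t ∉ u i → κ t = 0 := by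
    intro i hi
    obtain ⟨fi, hfi, hfix, hfiK⟩ := CompletelyRegularSpace.completely_regular
      ((x : ∀ n, X n) i) (u i)ᶜ (hu i hi).1.isClosed_compl
      (by simp [(hu i hi).2])
    refine ⟨fun t => 1 - (fi t : ℝ), (continuous_const.sub
      (continuous_induced_dom.comp hfi)), ?_, ?_, ?_⟩
    · intro t
      have h1 := (fi t).2.1
      have h2 := (fi t).2.2
      constructor <;> simp <;> linarith
    · simp only []
      rw [hfix]; simp
    · intro t ht
      have h1 : fi t = 1 := hfiK ht
      simp only []
      rw [h1]
      simp
  choose κ hκc hκ01 hκx hκ0 using hsep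
  refine ⟨fun y => ∏ i ∈ I.attach, κ i.1 i.2 ((y : ∀ n, X n) i.1), ?_, ?_, ?_, ?_, ?_⟩
  · exact continuous_finset_prod _ fun i _ =>
      (hκc i.1 i.2).comp ((continuous_apply i.1).comp continuous_subtype_val)
  · refine ⟨I.sup id, fun a b hab => ?_⟩
    apply Finset.prod_congr rfl
    intro i _
    congr 1
    exact hab i.1 (Finset.le_sup (f := id) i.2)
  · intro y
    apply Finset.prod_nonneg
    intro i _
    exact (hκ01 i.1 i.2 _).1
  · simp only []
    rw [Finset.prod_eq_one]
    intro i _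
    exact hκx i.1 i.2
  · intro y hy
    have hne : ∀ i ∈ I.attach, κ i.1 i.2 ((y : ∀ n, X n) i.1) ≠ 0 := by
      intro i hi hz
      exact hy (Finset.prod_eq_zero hi hz)
    have hmem : (y : ∀ n, X n) ∈ (I : Set ℕ).pi u := by
      intro i hi
      by_contra hni
      exact hne ⟨i, hi⟩ (Finset.mem_attach _ _) (hκ0 i hi _ hni)
    rw [← hVU]
    exact hpi hmem

noncomputable def pathChain {Y : Type*} [TopologicalSpace Y] (z : ℕ → Y)
    (γ : ∀ p, Path (z p) (z (p+1))) : (m k : ℕ) → Path (z k) (z (k + m))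
  | 0, k => Path.refl (z k)
  | (m+1), k => (γ k).trans ((pathChain z γ m (k+1)).cast rfl (congrArg z (by omega)))

theorem pathChain_station {Y : Type*} [TopologicalSpace Y] (z : ℕ → Y)
    (γ : ∀ p, Path (z p) (z (p+1))) :
    ∀ (m p k : ℕ), p ≤ m → (pathChain z γ m k).extend (1 - (2⁻¹:ℝ)^p) = z (k + p) := by
  intro m
  induction m with
  | zero =>
      intro p k hp
      interval_cases p
      simp [pathChain]
  | succ m ih =>
      intro p k hp
      match p with
      | 0 => simp [pathChain]
      | 1 =>
          have ht : (1 - (2⁻¹:ℝ)^1) ∈ Icc (0:ℝ) 1 := by norm_num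
          rw [Path.extend_apply _ ht, pathChain, Path.trans_apply]
          have hc : ((⟨1 - (2⁻¹:ℝ)^1, ht⟩ : unitInterval) : ℝ) ≤ 1/2 := by norm_num
          rw [dif_pos hc]
          convert (γ k).target using 2
          apply Subtype.ext; norm_num
      | (p+2) =>
          have hpow : (2⁻¹:ℝ)^(p+2) < 2⁻¹ := by
            have : (2⁻¹:ℝ)^(p+2) ≤ (2⁻¹)^2 :=
              pow_le_pow_of_le_one (by norm_num) (by norm_num) (by omega)
            norm_num at this ⊢; linarith
          have ht : (1 - (2⁻¹:ℝ)^(p+2)) ∈ Icc (0:ℝ) 1 := by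
            constructor
            · nlinarith
            · nlinarith [pow_pos (by norm_num : (0:ℝ) < 2⁻¹) (p+2)]
          rw [Path.extend_apply _ ht, pathChain, Path.trans_apply]
          have hc : ¬ (((⟨1 - (2⁻¹:ℝ)^(p+2), ht⟩ : unitInterval) : ℝ) ≤ 1/2) := by
            simp only []
            push_neg
            nlinarith
          rw [dif_neg hc]
          have h2 : (2 * (1 - (2⁻¹:ℝ)^(p+2)) - 1) = 1 - (2⁻¹:ℝ)^(p+1) := by ring
          have ht' : (1 - (2⁻¹:ℝ)^(p+1)) ∈ Icc (0:ℝ) 1 := by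
            constructor
            · have : (2⁻¹:ℝ)^(p+1) ≤ 1 := by
                apply pow_le_one₀ <;> norm_num
              linarith
            · nlinarith [pow_pos (by norm_num : (0:ℝ) < 2⁻¹) (p+1)]
          have := ih (p+1) (k+1) (by omega)
          calc ((pathChain z γ m (k+1)).cast rfl (congrArg z (by omega : k + (m+1) = (k+1) + m)))
                ⟨2 * (1 - (2⁻¹:ℝ)^(p+2)) - 1, _⟩
              = (pathChain z γ m (k+1)) ⟨1 - (2⁻¹:ℝ)^(p+1), ht'⟩ := by
                rw [Path.cast_coe]; congr 1; apply Subtype.ext; exact h2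
            _ = (pathChain z γ m (k+1)).extend (1 - (2⁻¹:ℝ)^(p+1)) :=
                (Path.extend_apply _ ht').symm
            _ = z (k + (p+2)) := by rw [this]; congr 1; omega
theorem lemmaV {X : ℕ → Type*} [∀ n, TopologicalSpace (X n)] [∀ n, T35Space (X n)]
    (S : Set (∀ n, X n)) (hne : Nonempty S)
    (hPX : PerfectlyNormalSpace (∀ n, X n) ∨ LindelofSpace S)
    {F D : Set S} (hF : IsClosed F) (hD : IsFsigma D) (hdisj : ∀ x ∈ D, x ∉ F) :
    ∃ V : ℕ → S → ℝ,
      (∀ n, Continuous (V n)) ∧ (∀ n, FinDetOn S (V n)) ∧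
      (∀ n x, 0 ≤ V n x) ∧
      (∀ n, ∀ x ∈ F, V n x = 0) ∧
      (∀ x, Monotone fun n => V n x) ∧
      (∀ x ∈ D, ∃ n, 0 < V n x) := by
  classical
  rcases hPX with hPN | hLin
  · -- perfectly normal case
    obtain ⟨x₀⟩ := hne
    set a : ∀ n, X n := (x₀ : ∀ n, X n) with ha
    set mm : ℕ → (∀ n, X n) → (∀ n, X n) := fun N x i => if i ≤ N then x i else a i with hmm
    have hmcont : ∀ N, Continuous (mm N) := by
      intro N
      apply continuous_pi
      intro i
      by_cases h : i ≤ N <;> simp only [hmm, h, if_true, if_false]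
      · exact continuous_apply i
      · exact continuous_const
    set C : Set (∀ n, X n) := closure (Subtype.val '' F) with hC
    obtain ⟨C', hC'closed, hC'⟩ := isClosed_induced_iff.mp hF
    have hCF : ∀ w : S, (w : ∀ n, X n) ∈ C → w ∈ F := by
      intro w hw
      have h1 : Subtype.val '' F ⊆ C' := by
        rintro _ ⟨v, hv, rfl⟩
        rw [← hC'] at hv
        exact hv
      have h2 : C ⊆ C' := closure_minimal h1 hC'closed
      rw [← hC']
      exact h2 hw
    have hFC : ∀ w : S, w ∈ F → (w : ∀ n, X n) ∈ C :=
      fun w hw => subset_closure (mem_image_of_mem _ hw)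
    have := fun N => pn_zero_fun (P := ∀ n, X n)
      (isClosed_closure (s := mm N '' C))
    choose ζ hζc hζ0 hζvan hζpos using this
    refine ⟨fun n w => ∑ N ∈ Finset.range (n+1), (2⁻¹:ℝ)^N * ζ N (mm N (w : ∀ n, X n)),
      ?_, ?_, ?_, ?_, ?_, ?_⟩
    · intro n
      exact continuous_finset_sum _ fun N _ => continuous_const.mul
        ((hζc N).comp ((hmcont N).comp continuous_subtype_val))
    · intro n
      apply FinDetOn.finsetSum
      intro N _
      have hbase : FinDetOn S (fun w : S => ζ N (mm N (w : ∀ n, X n))) := by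
        refine ⟨N, fun u v huv => ?_⟩
        have heq : mm N (u : ∀ n, X n) = mm N (v : ∀ n, X n) := by
          funext i
          simp only [hmm]
          split
          · exact huv i (by assumption)
          · rfl
        show ζ N (mm N (u : ∀ n, X n)) = ζ N (mm N (v : ∀ n, X n))
        rw [heq]
      simpa using hbase.comp (fun t => (2⁻¹:ℝ)^N * t)
    · intro n x
      apply Finset.sum_nonneg
      intro N _
      have := hζ0 N (mm N (x : ∀ n, X n))
      positivity
    · intro n x hx
      apply Finset.sum_eq_zero
      intro N _
      have : mm N (x : ∀ n, X n) ∈ closure (mm N '' C) :=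
        subset_closure (mem_image_of_mem _ (hFC x hx))
      rw [hζvan N _ this, mul_zero]
    · intro x n n' hnn'
      apply Finset.sum_le_sum_of_subset_of_nonneg
      · exact Finset.range_subset_range.mpr (by omega)
      · intro N _ _
        have := hζ0 N (mm N (x : ∀ n, X n))
        positivity
    · intro x hxD
      have hxF : x ∉ F := hdisj x hxD
      have hkey : ∃ N, mm N (x : ∀ n, X n) ∉ closure (mm N '' C) := by
        by_contra h
        push_neg at h
        have hxC : (x : ∀ n, X n) ∈ closure C := by
          rw [mem_closure_iff]
          intro o ho hxo
          obtain ⟨I, u, hu, hpi⟩ := isOpen_pi_iff.mp ho _ hxo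
          set N := I.sup id with hN
          have hbox_open : IsOpen ((I : Set ℕ).pi u) :=
            isOpen_set_pi I.finite_toSet (fun i hi => (hu i hi).1)
          have hmem : mm N (x : ∀ n, X n) ∈ (I : Set ℕ).pi u := by
            intro i hi
            have hiN : i ≤ N := Finset.le_sup (f := id) hi
            simp only [hmm, hiN, if_true]
            exact (hu i hi).2
          obtain ⟨w, hwbox, hwim⟩ := (mem_closure_iff.mp (h N)) _ hbox_open hmem
          obtain ⟨c, hcC, rfl⟩ := hwim
          refine ⟨c, hpi ?_, hcC⟩
          intro i hi
          have hiN : i ≤ N := Finset.le_sup (f := id) hi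
          have hci : mm N c i = c i := by simp only [hmm, hiN, if_true]
          rw [← hci]
          exact hwbox i hi
        rw [closure_closure] at hxC
        exact hxF (hCF x hxC)
      obtain ⟨N, hN⟩ := hkey
      refine ⟨N, ?_⟩
      have hpos : 0 < (2⁻¹:ℝ)^N * ζ N (mm N (x : ∀ n, X n)) := by
        have := hζpos N _ hN
        positivity
      calc (0:ℝ) < (2⁻¹:ℝ)^N * ζ N (mm N (x : ∀ n, X n)) := hpos
        _ ≤ ∑ K ∈ Finset.range (N+1), (2⁻¹:ℝ)^K * ζ K (mm K (x : ∀ n, X n)) := by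
            apply Finset.single_le_sum (f := fun K => (2⁻¹:ℝ)^K * ζ K (mm K (x : ∀ n, X n)))
            · intro K _
              have := hζ0 K (mm K (x : ∀ n, X n))
              positivity
            · exact Finset.self_mem_range_succ N
  · -- Lindelöf case
    obtain ⟨G, hGclosed, hGD⟩ := hD
    have hstep : ∀ k : ℕ, ∃ σ : ℕ → S → ℝ,
        (∀ l, Continuous (σ l) ∧ FinDetOn S (σ l) ∧ (∀ y, 0 ≤ σ l y) ∧
          (∀ y ∈ F, σ l y = 0)) ∧ (∀ x ∈ G k, ∃ l, σ l x ≠ 0) := by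
      intro k
      rcases isEmpty_or_nonempty (G k) with hempty | hnonempty
      · exact ⟨fun _ _ => 0,
          fun l => ⟨continuous_const, FinDetOn.const 0, fun y => le_refl 0, fun y _ => rfl⟩,
          fun x hx => (hempty.false ⟨x, hx⟩).elim⟩
      · have hsub : ∀ w : (G k), (w : S) ∈ (Fᶜ : Set S) := by
          intro w
          have hwD : (w : S) ∈ D := by rw [hGD]; exact mem_iUnion.mpr ⟨k, w.2⟩
          exact hdisj _ hwD
        have := fun w : (G k) => exists_cozero_nbhd S hF.isOpen_compl (hsub w)
        choose ρ hρc hρfd hρ0 hρ1 hρU using this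
        have hLG : IsLindelof (G k) := (hGclosed k).isLindelof
        have hopen : ∀ w : (G k), IsOpen {y | ρ w y ≠ 0} := by
          intro w
          have : {y | ρ w y ≠ 0} = (ρ w) ⁻¹' ({0}ᶜ) := rfl
          rw [this]
          exact isOpen_compl_singleton.preimage (hρc w)
        have hcover : G k ⊆ ⋃ w : (G k), {y | ρ w y ≠ 0} := by
          intro x hx
          refine mem_iUnion.mpr ⟨⟨x, hx⟩, ?_⟩
          simp only [mem_setOf_eq, hρ1 ⟨x, hx⟩]
          norm_num
        obtain ⟨t, ht⟩ := hLG.indexed_countable_subcover _ hopen hcover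
        refine ⟨fun l => ρ (t l), fun l => ⟨hρc _, hρfd _, hρ0 _, fun y hy => ?_⟩,
          fun x hx => ?_⟩
        · by_contra hz
          exact (hρU (t l) y hz) hy
        · obtain ⟨l, hl⟩ := mem_iUnion.mp (ht hx)
          exact ⟨l, hl⟩
    choose σ hσprop hσdet using hstep
    set e : ℕ ≃ ℕ × ℕ := (Denumerable.eqv (ℕ × ℕ)).symm with he
    refine ⟨fun n x => ∑ p ∈ Finset.range (n+1),
        (2⁻¹:ℝ)^p * min (σ (e p).1 (e p).2 x) 1, ?_, ?_, ?_, ?_, ?_, ?_⟩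
    · intro n
      exact continuous_finset_sum _ fun p _ => continuous_const.mul
        (((hσprop (e p).1 (e p).2).1).min continuous_const)
    · intro n
      apply FinDetOn.finsetSum
      intro p _
      simpa using ((hσprop (e p).1 (e p).2).2.1).comp (fun t => (2⁻¹:ℝ)^p * min t 1)
    · intro n x
      apply Finset.sum_nonneg
      intro p _
      have h0 := (hσprop (e p).1 (e p).2).2.2.1 x
      have : (0:ℝ) ≤ min (σ (e p).1 (e p).2 x) 1 := le_min h0 zero_le_one
      positivity
    · intro n x hx
      apply Finset.sum_eq_zero
      intro p _
      rw [(hσprop (e p).1 (e p).2).2.2.2 x hx]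
      norm_num
    · intro x n n' hnn'
      apply Finset.sum_le_sum_of_subset_of_nonneg
      · exact Finset.range_subset_range.mpr (by omega)
      · intro p _ _
        have h0 := (hσprop (e p).1 (e p).2).2.2.1 x
        have : (0:ℝ) ≤ min (σ (e p).1 (e p).2 x) 1 := le_min h0 zero_le_one
        positivity
    · intro x hxD
      rw [hGD] at hxD
      obtain ⟨k, hk⟩ := mem_iUnion.mp hxD
      obtain ⟨l, hl⟩ := hσdet k x hk
      have hσpos : 0 < σ k l x := lt_of_le_of_ne ((hσprop k l).2.2.1 x) (Ne.symm hl)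
      set p₀ := e.symm (k, l) with hp₀
      have hep : e p₀ = (k, l) := e.apply_symm_apply (k, l)
      refine ⟨p₀, ?_⟩
      have hterm : 0 < (2⁻¹:ℝ)^p₀ * min (σ (e p₀).1 (e p₀).2 x) 1 := by
        rw [hep]
        have : (0:ℝ) < min (σ k l x) 1 := lt_min hσpos one_pos
        positivity
      calc (0:ℝ) < (2⁻¹:ℝ)^p₀ * min (σ (e p₀).1 (e p₀).2 x) 1 := hterm
        _ ≤ ∑ p ∈ Finset.range (p₀+1), (2⁻¹:ℝ)^p * min (σ (e p).1 (e p).2 x) 1 := by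
            apply Finset.single_le_sum
              (f := fun p => (2⁻¹:ℝ)^p * min (σ (e p).1 (e p).2 x) 1)
            · intro p _
              have h0 := (hσprop (e p).1 (e p).2).2.2.1 x
              have : (0:ℝ) ≤ min (σ (e p).1 (e p).2 x) 1 := le_min h0 zero_le_one
              positivity
            · exact Finset.self_mem_range_succ p₀
theorem epsLemma {X : ℕ → Type*} [∀ n, TopologicalSpace (X n)] [∀ n, T35Space (X n)]
    (S : Set (∀ n, X n)) (hne : Nonempty S)
    (hPX : PerfectlyNormalSpace (∀ n, X n) ∨ LindelofSpace S)
    {Y : Type*} [MetricSpace Y] [PathConnectedSpace Y] [TopologicalSpace.SeparableSpace Y]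
    (f : S → Y) (hf : LebesgueOne f) {ε : ℝ} (hε : 0 < ε) :
    ∃ h : ℕ → S → Y, (∀ n, Continuous (h n) ∧ FinDetOn S (h n)) ∧
      ∀ x : S, ∃ N, ∀ n ≥ N, dist (h n x) (f x) ≤ 2 * ε := by
  classical
  have hYne : Nonempty Y := PathConnectedSpace.nonempty
  obtain ⟨y, hy⟩ := TopologicalSpace.exists_dense_seq Y
  have hA : ∀ j : ℕ, IsFsigma (f ⁻¹' (Metric.ball (y j) ε)) := fun j => hf _ Metric.isOpen_ball
  choose Fc hFcClosed hFcEq using hA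
  have hDopen : ∀ j : ℕ, IsOpen {w : Y | 2*ε < dist w (y j)} := fun j =>
    isOpen_lt continuous_const (continuous_id.dist continuous_const)
  set e : ℕ ≃ ℕ × ℕ := (Denumerable.eqv (ℕ × ℕ)).symm with he
  have hVex : ∀ p : ℕ, ∃ V : ℕ → S → ℝ,
      (∀ n, Continuous (V n)) ∧ (∀ n, FinDetOn S (V n)) ∧ (∀ n x, 0 ≤ V n x) ∧
      (∀ n, ∀ x ∈ Fc (e p).1 (e p).2, V n x = 0) ∧ (∀ x, Monotone fun n => V n x) ∧
      (∀ x ∈ f ⁻¹' {w : Y | 2*ε < dist w (y (e p).1)}, ∃ n, 0 < V n x) := by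
    intro p
    apply lemmaV S hne hPX (hFcClosed _ _) (hf _ (hDopen (e p).1))
    intro x hxD hxF
    have hxball : f x ∈ Metric.ball (y (e p).1) ε := by
      have : x ∈ ⋃ m, Fc (e p).1 m := mem_iUnion.mpr ⟨(e p).2, hxF⟩
      rw [← hFcEq] at this
      exact this
    rw [Metric.mem_ball] at hxball
    have hxD' : 2*ε < dist (f x) (y (e p).1) := hxD
    linarith
  choose V hVc hVfd hV0 hVvanish hVmono hVdet using hVex
  set b : ℕ → ℕ → S → ℝ := fun q n x => min 1 ((n:ℝ) * V q n x) with hb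
  set φ : ℕ → S → ℝ := fun n x =>
    ∑ p ∈ Finset.range n, (2⁻¹:ℝ)^(p+1) * ∏ q ∈ Finset.range (p+1), b q n x with hφ
  set z : ℕ → Y := fun p => y ((e p).1) with hz
  set γ : ∀ p, Path (z p) (z (p+1)) :=
    fun p => (PathConnectedSpace.joined (z p) (z (p+1))).somePath with hγ
  have hφc : ∀ n, Continuous (φ n) := by
    intro n
    apply continuous_finset_sum
    intro p _
    apply continuous_const.mul
    apply continuous_finset_prod
    intro q _
    exact continuous_const.min (continuous_const.mul (hVc q n))
  have hφfd : ∀ n, FinDetOn S (φ n) := by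
    intro n
    apply FinDetOn.finsetSum
    intro p _
    have hprod : FinDetOn S (fun x => ∏ q ∈ Finset.range (p+1), b q n x) := by
      apply FinDetOn.finsetProd
      intro q _
      simpa using (hVfd q n).comp (fun t => min 1 ((n:ℝ) * t))
    simpa using hprod.comp (fun t => (2⁻¹:ℝ)^(p+1) * t)
  refine ⟨fun n x => (pathChain z γ n 0).extend (φ n x), fun n =>
    ⟨(pathChain z γ n 0).continuous_extend.comp (hφc n), (hφfd n).comp _⟩, ?_⟩
  intro x
  obtain ⟨j₀, hj₀⟩ := hy.exists_dist_lt (f x) hε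
  have hxA : x ∈ ⋃ m, Fc j₀ m := by
    rw [← hFcEq j₀]
    exact Metric.mem_ball.mpr hj₀
  obtain ⟨m₀, hm₀⟩ := mem_iUnion.mp hxA
  have hex : ∃ q, ∀ n, V q n x = 0 := by
    refine ⟨e.symm (j₀, m₀), fun n => hVvanish _ n x ?_⟩
    rw [Equiv.apply_symm_apply]
    exact hm₀
  set σ := Nat.find hex with hσdef
  have hσZ : ∀ n, V σ n x = 0 := Nat.find_spec hex
  have hguard : ∀ q, ∃ Nq : ℕ, q < σ → ∀ n ≥ Nq, b q n x = 1 := by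
    intro q
    by_cases hq : q < σ
    · obtain ⟨n₀, hn₀⟩ := not_forall.mp (Nat.find_min hex hq)
      have hc : 0 < V q n₀ x := lt_of_le_of_ne (hV0 q n₀ x) (Ne.symm hn₀)
      obtain ⟨M, hM⟩ := exists_nat_ge (1 / V q n₀ x)
      refine ⟨max n₀ M, fun _ n hn => ?_⟩
      have h1 : V q n₀ x ≤ V q n x := hVmono q x (le_trans (le_max_left _ _) hn)
      have hM' : (M:ℝ) ≤ (n:ℝ) := Nat.cast_le.mpr (le_trans (le_max_right _ _) hn)
      have hMc : 1 ≤ (M:ℝ) * V q n₀ x := by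
        rw [div_le_iff₀ hc] at hM
        linarith
      have h2 : (1:ℝ) ≤ (n:ℝ) * V q n x := by nlinarith
      simp only [hb]
      exact min_eq_left h2
    · exact ⟨0, fun h => absurd h hq⟩
  choose Nq hNq using hguard
  refine ⟨max (σ+1) ((Finset.range σ).sup Nq), fun n hn => ?_⟩
  have hσn : σ ≤ n := by
    have := le_trans (le_max_left (σ+1) _) hn
    omega
  have hφval : φ n x = 1 - (2⁻¹:ℝ)^σ := by
    show ∑ p ∈ Finset.range n, (2⁻¹:ℝ)^(p+1) * ∏ q ∈ Finset.range (p+1), b q n x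
      = 1 - (2⁻¹:ℝ)^σ
    have hvanish : ∀ p ∈ Finset.range n, p ∉ Finset.range σ →
        (2⁻¹:ℝ)^(p+1) * ∏ q ∈ Finset.range (p+1), b q n x = 0 := by
      intro p _ hnp
      have hσp : σ ≤ p := by
        by_contra hc
        exact hnp (Finset.mem_range.mpr (by omega))
      have hbσ : b σ n x = 0 := by
        simp only [hb, hσZ n, mul_zero]
        exact min_eq_right zero_le_one
      rw [Finset.prod_eq_zero (Finset.mem_range.mpr (by omega : σ < p+1)) hbσ, mul_zero]
    rw [← Finset.sum_subset (Finset.range_subset_range.mpr hσn) hvanish]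
    rw [← geomHalf σ]
    apply Finset.sum_congr rfl
    intro p hp
    have hpσ : p < σ := Finset.mem_range.mp hp
    have hone : ∏ q ∈ Finset.range (p+1), b q n x = 1 := by
      apply Finset.prod_eq_one
      intro q hq
      have hqσ : q < σ := by
        have := Finset.mem_range.mp hq
        omega
      apply hNq q hqσ n
      calc Nq q ≤ (Finset.range σ).sup Nq := Finset.le_sup (Finset.mem_range.mpr hqσ)
        _ ≤ max (σ+1) ((Finset.range σ).sup Nq) := le_max_right _ _
        _ ≤ n := hn
    rw [hone, mul_one]
  have hstation : (pathChain z γ n 0).extend (1 - (2⁻¹:ℝ)^σ) = z σ := by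
    have := pathChain_station z γ n σ 0 hσn
    simpa using this
  have hdist : dist (z σ) (f x) ≤ 2*ε := by
    by_contra hcon
    push_neg at hcon
    have hxD : x ∈ f ⁻¹' {w : Y | 2*ε < dist w (y ((e σ).1))} := by
      have : dist (f x) (z σ) = dist (z σ) (f x) := dist_comm _ _
      simp only [Set.mem_preimage, Set.mem_setOf_eq]
      rw [hz] at hcon
      calc 2*ε < dist (z σ) (f x) := hcon
        _ = dist (f x) (y ((e σ).1)) := by rw [dist_comm]
    obtain ⟨n', hn'⟩ := hVdet σ x hxD
    rw [hσZ n'] at hn'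
    exact lt_irrefl 0 hn'
  show dist ((pathChain z γ n 0).extend (φ n x)) (f x) ≤ 2*ε
  rw [hφval, hstation]
  exact hdist

end Aux

/-- Let `P = ∏ₙ Xₙ` be a product of Tychonoff spaces, `X ⊆ P` a subspace such
that `P` is perfectly normal or `X` is Lindelöf, and `(Y, d)` a path-connected separable
metric R-space.  Then every first Lebesgue class function `f : X → Y` is the pointwise limit
of a sequence of continuous finitely determined functions `X → Y`. -/
theorem stmt0 {X : ℕ → Type*} [∀ n, TopologicalSpace (X n)] [∀ n, T35Space (X n)]
    (S : Set (∀ n, X n))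
    (hPX : PerfectlyNormalSpace (∀ n, X n) ∨ LindelofSpace S)
    {Y : Type*} [MetricSpace Y] [PathConnectedSpace Y] [TopologicalSpace.SeparableSpace Y]
    (hY : IsRSpace Y) (f : S → Y) (hf : LebesgueOne f) :
    ∃ g : ℕ → S → Y, (∀ n, Continuous (g n) ∧ FinDetOn S (g n)) ∧
      ∀ x : S, Tendsto (fun n => g n x) atTop (𝓝 (f x)) := by
  classical
  cases isEmpty_or_nonempty S with
  | inl hempty =>
      refine ⟨fun _ => f, fun n => ⟨?_, ⟨0, fun x => (hempty.false x).elim⟩⟩,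
        fun x => (hempty.false x).elim⟩
      exact continuous_iff_continuousAt.mpr fun x => (hempty.false x).elim
  | inr hne =>
      have hYne : Nonempty Y := PathConnectedSpace.nonempty
      have heps : ∀ k : ℕ, ∃ h : ℕ → S → Y, (∀ n, Continuous (h n) ∧ FinDetOn S (h n)) ∧
          ∀ x : S, ∃ N, ∀ n ≥ N, dist (h n x) (f x) ≤ 2 * ((2⁻¹:ℝ)^(k+1)) :=
        fun k => epsLemma S hne hPX f hf (by positivity)
      choose h hhcf hhconv using heps
      have hbound : ∀ k (x : S), ∃ N, ∀ n ≥ N, dist (h k n x) (f x) ≤ (2⁻¹:ℝ)^k := by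
        intro k x
        obtain ⟨N, hN⟩ := hhconv k x
        refine ⟨N, fun n hn => ?_⟩
        have h1 := hN n hn
        have heq : 2 * ((2⁻¹:ℝ)^(k+1)) = (2⁻¹:ℝ)^k := by
          rw [pow_succ]; ring
        linarith
      have hrex : ∀ k : ℕ, ∃ r : Y × Y → Y, Continuous r ∧
          (∀ u v : Y, dist u v ≤ (2⁻¹:ℝ)^k + (2⁻¹:ℝ)^(k+1) → r (u, v) = u) ∧
          ∀ u v : Y, dist (r (u, v)) v ≤ (2⁻¹:ℝ)^k + (2⁻¹:ℝ)^(k+1) :=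
        fun k => hY _ (by positivity)
      choose r hrc hr1 hr2 using hrex
      set ψ : ℕ → ℕ → S → Y := fun k => Nat.rec (motive := fun _ => ℕ → S → Y) (h 0)
        (fun k ih => fun n x => r k (h (k+1) n x, ih n x)) k with hψ
      have hψs : ∀ k n x, ψ (k+1) n x = r k (h (k+1) n x, ψ k n x) := fun k n x => rfl
      have hψcf : ∀ k n, Continuous (ψ k n) ∧ FinDetOn S (ψ k n) := by
        intro k
        induction k with
        | zero => exact hhcf 0
        | succ k ih =>
            intro n
            constructor
            · exact (hrc k).comp ((((hhcf (k+1)) n).1).prodMk ((ih n).1))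
            · exact (((hhcf (k+1)) n).2.prodMk ((ih n).2)).comp (r k)
      have claimA : ∀ k (x : S), ∃ N, ∀ n ≥ N, dist (ψ k n x) (f x) ≤ (2⁻¹:ℝ)^k := by
        intro k
        induction k with
        | zero => intro x; exact hbound 0 x
        | succ k ih =>
            intro x
            obtain ⟨N1, hN1⟩ := ih x
            obtain ⟨N2, hN2⟩ := hbound (k+1) x
            refine ⟨max N1 N2, fun n hn => ?_⟩
            have h1 := hN1 n (le_trans (le_max_left _ _) hn)
            have h2 := hN2 n (le_trans (le_max_right _ _) hn)
            have hdd : dist (h (k+1) n x) (ψ k n x) ≤ (2⁻¹:ℝ)^k + (2⁻¹:ℝ)^(k+1) := by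
              calc dist (h (k+1) n x) (ψ k n x)
                  ≤ dist (h (k+1) n x) (f x) + dist (f x) (ψ k n x) := dist_triangle _ _ _
                _ ≤ (2⁻¹:ℝ)^(k+1) + (2⁻¹:ℝ)^k := by
                    rw [dist_comm (f x)]
                    exact add_le_add h2 h1
                _ = (2⁻¹:ℝ)^k + (2⁻¹:ℝ)^(k+1) := add_comm _ _
            rw [hψs, hr1 k _ _ hdd]
            exact h2
      have claimB : ∀ k n (x : S), dist (ψ (k+1) n x) (ψ k n x) ≤
          (2⁻¹:ℝ)^k + (2⁻¹:ℝ)^(k+1) := by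
        intro k n x
        rw [hψs]
        exact hr2 k _ _
      have claimC : ∀ K j n (x : S), dist (ψ (K+j) n x) (ψ K n x) ≤
          3*(2⁻¹:ℝ)^K - 3*(2⁻¹:ℝ)^(K+j) := by
        intro K j n x
        induction j with
        | zero => simp
        | succ j ih =>
            have e1 : K+(j+1) = (K+j)+1 := by omega
            calc dist (ψ (K+(j+1)) n x) (ψ K n x)
                ≤ dist (ψ ((K+j)+1) n x) (ψ (K+j) n x) + dist (ψ (K+j) n x) (ψ K n x) := by
                  rw [e1]
                  exact dist_triangle _ _ _
              _ ≤ ((2⁻¹:ℝ)^(K+j) + (2⁻¹:ℝ)^((K+j)+1)) + (3*(2⁻¹:ℝ)^K - 3*(2⁻¹:ℝ)^(K+j)) :=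
                  add_le_add (claimB _ _ _) ih
              _ = 3*(2⁻¹:ℝ)^K - 3*(2⁻¹:ℝ)^(K+(j+1)) := by
                  rw [e1, pow_succ]
                  ring
      refine ⟨fun n => ψ n n, fun n => hψcf n n, ?_⟩
      intro x
      rw [Metric.tendsto_atTop]
      intro ε hε
      obtain ⟨K, hK⟩ : ∃ K : ℕ, (2⁻¹:ℝ)^K < ε/4 :=
        exists_pow_lt_of_lt_one (by positivity) (by norm_num)
      obtain ⟨N, hN⟩ := claimA K x
      refine ⟨max K N, fun n hn => ?_⟩
      have hKn : K ≤ n := le_trans (le_max_left _ _) hn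
      have hNn : N ≤ n := le_trans (le_max_right _ _) hn
      have h1 : dist (ψ n n x) (ψ K n x) ≤ 3*(2⁻¹:ℝ)^K := by
        have hc := claimC K (n - K) n x
        rw [Nat.add_sub_cancel' hKn] at hc
        have hp : (0:ℝ) < (2⁻¹:ℝ)^n := by positivity
        linarith
      have h2 := hN n hNn
      calc dist (ψ n n x) (f x)
          ≤ dist (ψ n n x) (ψ K n x) + dist (ψ K n x) (f x) := dist_triangle _ _ _
        _ ≤ 3*(2⁻¹:ℝ)^K + (2⁻¹:ℝ)^K := add_le_add h1 h2
        _ = 4*(2⁻¹:ℝ)^K := by ring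
        _ < ε := by linarith
end

section
/- Let X be a topological space, (Y,d) be a metric space which is an R-space, and 𝓕 be a Δ-closed family of maps from X to Y. If a sequence (f_n) of maps f_n : X → Y converges uniformly on X to a map f : X → Y, and each f_n is the pointwise limit of a sequence of maps from 𝓕, then f is the pointwise limit of a sequence of maps from 𝓕. -/
open Filter Topology

/-- A family `𝓕` of maps `X → Y` is Δ-closed if for every finite collection `f₁, …, f_k ∈ 𝓕`
and every continuous `g : Y^k → Y`, the map `x ↦ g (f₁ x, …, f_k x)` belongs to `𝓕`. -/
def DeltaClosed {X Y : Type*} [TopologicalSpace Y] (F : Set (X → Y)) : Prop :=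
  ∀ (k : ℕ) (f : Fin k → X → Y), (∀ i, f i ∈ F) →
    ∀ g : (Fin k → Y) → Y, Continuous g → (fun x => g fun i => f i x) ∈ F

/-- Iterated gluing: `Ubuild r y m j` is `u_{m-j}` where `u_m = y m` and
`u_k = r k (u_{k+1}, y k)`. -/
def Ubuild {Y : Type*} (r : ℕ → Y × Y → Y) (y : ℕ → Y) (m : ℕ) : ℕ → Y
  | 0 => y m
  | j + 1 => r (m - (j + 1)) (Ubuild r y m j, y (m - (j + 1)))

lemma Ubuild_congr {Y : Type*} (r : ℕ → Y × Y → Y) (y y' : ℕ → Y) (m : ℕ)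
    (h : ∀ n ≤ m, y n = y' n) : ∀ j, Ubuild r y m j = Ubuild r y' m j := by
  intro j
  induction j with
  | zero => exact h m le_rfl
  | succ j ih =>
      simp only [Ubuild, ih, h (m - (j + 1)) (by omega)]

lemma Ubuild_continuous {Y : Type*} [TopologicalSpace Y] (r : ℕ → Y × Y → Y)
    (hr : ∀ k, Continuous (r k)) (m : ℕ) :
    ∀ j, Continuous fun y : ℕ → Y => Ubuild r y m j := by
  intro j
  induction j with
  | zero => exact continuous_apply m
  | succ j ih =>
      exact (hr _).comp (ih.prodMk (continuous_apply _))

lemma numeric_aux (N k : ℕ) (hk : k < N) :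
    ((1 / 2 : ℝ) ^ N + (1 / 2) ^ (N + 2) + (1 / 2) ^ (N + 3)) +
      ((1 / 2) ^ (k + 2) + (1 / 2) ^ (N + 3)) ≤ (1 / 2) ^ k := by
  have h1 : (1 / 2 : ℝ) ^ N ≤ (1 / 2) ^ (k + 1) :=
    pow_le_pow_of_le_one (by norm_num) (by norm_num) (by omega)
  have h2 : (0:ℝ) < (1/2:ℝ) ^ k := by positivity
  rw [pow_add, pow_add, pow_add] at *
  nlinarith [h1, h2]

lemma main_est {Y : Type*} [MetricSpace Y] (r : ℕ → Y × Y → Y)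
    (hr1 : ∀ k (y z : Y), dist y z ≤ (1 / 2 : ℝ) ^ k → r k (y, z) = y)
    (hr2 : ∀ k (y z : Y), dist (r k (y, z)) z ≤ (1 / 2 : ℝ) ^ k)
    (y : ℕ → Y) (c : Y) (N m : ℕ) (hNm : N ≤ m)
    (hy : ∀ k ≤ N, dist (y k) c ≤ (1 / 2 : ℝ) ^ (k + 2) + (1 / 2) ^ (N + 3)) :
    dist (Ubuild r y m m) c ≤ 2 * (1 / 2 : ℝ) ^ N := by
  set δ : ℝ := (1 / 2 : ℝ) ^ N + (1 / 2) ^ (N + 2) + (1 / 2) ^ (N + 3) with hδ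
  have hδle : δ ≤ 2 * (1 / 2 : ℝ) ^ N := by
    have h2 : (0:ℝ) ≤ (1/2:ℝ) ^ N := by positivity
    rw [hδ, pow_add, pow_add]
    nlinarith
  -- base: level N
  have base : dist (Ubuild r y m (m - N)) c ≤ δ := by
    rcases eq_or_lt_of_le hNm with h | h
    · rw [← h]
      simp only [Nat.sub_self, Ubuild]
      have h1 := hy N le_rfl
      have hp : (0:ℝ) ≤ (1/2:ℝ) ^ N := by positivity
      refine h1.trans ?_
      rw [hδ]
      linarith
    · obtain ⟨j, hj⟩ : ∃ j, m - N = j + 1 := ⟨m - N - 1, by omega⟩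
      rw [hj]
      have hmN : m - (j + 1) = N := by omega
      show dist (r (m - (j+1)) (Ubuild r y m j, y (m - (j+1)))) c ≤ δ
      rw [hmN]
      calc dist (r N (Ubuild r y m j, y N)) c
          ≤ dist (r N (Ubuild r y m j, y N)) (y N) + dist (y N) c := dist_triangle _ _ _
        _ ≤ (1/2:ℝ)^N + ((1/2:ℝ)^(N+2) + (1/2)^(N+3)) :=
            add_le_add (hr2 N (Ubuild r y m j) (y N)) (hy N le_rfl)
        _ = δ := by rw [hδ]; ring
  -- downward induction
  have step : ∀ i ≤ N, dist (Ubuild r y m (m - N + i)) c ≤ δ := by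
    intro i
    induction i with
    | zero => intro _; simpa using base
    | succ i ih =>
        intro hi
        have ih' := ih (by omega)
        have hkey : m - N + (i + 1) = (m - N + i) + 1 := by omega
        rw [hkey]
        have hm : m - ((m - N + i) + 1) = N - i - 1 := by omega
        show dist (r (m - ((m-N+i)+1)) (Ubuild r y m (m-N+i), y (m - ((m-N+i)+1)))) c ≤ δ
        rw [hm]
        have hkN : N - i - 1 < N := by omega
        have hclose : dist (Ubuild r y m (m - N + i)) (y (N - i - 1)) ≤ (1/2:ℝ)^(N - i - 1) := by
          calc dist (Ubuild r y m (m - N + i)) (y (N - i - 1))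
              ≤ dist (Ubuild r y m (m - N + i)) c + dist (y (N - i - 1)) c := by
                rw [dist_comm (y _) c]; exact dist_triangle _ _ _
            _ ≤ δ + ((1/2:ℝ)^((N-i-1)+2) + (1/2)^(N+3)) :=
                add_le_add ih' (hy _ (by omega))
            _ ≤ (1/2:ℝ)^(N - i - 1) := numeric_aux N (N - i - 1) hkN
        rw [hr1 _ _ _ hclose]
        exact ih'
  have hfin := step N le_rfl
  rw [Nat.sub_add_cancel hNm] at hfin
  exact hfin.trans hδle

/-- Let `X` be a topological space, `(Y, d)` a metric R-space and `𝓕` a Δ-closed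
family of maps `X → Y`.  If a sequence `(fₙ)` converges uniformly to `f` on `X` and each `fₙ`
is a pointwise limit of maps from `𝓕`, then `f` is a pointwise limit of maps from `𝓕`. -/
theorem stmt3 {X Y : Type*} [TopologicalSpace X] [MetricSpace Y] (hY : IsRSpace Y)
    (F : Set (X → Y)) (hF : DeltaClosed F)
    (f : X → Y) (fs : ℕ → X → Y)
    (hunif : TendstoUniformly fs f atTop)
    (hfs : ∀ n, ∃ g : ℕ → X → Y, (∀ m, g m ∈ F) ∧
      ∀ x, Tendsto (fun m => g m x) atTop (𝓝 (fs n x))) :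
    ∃ g : ℕ → X → Y, (∀ m, g m ∈ F) ∧ ∀ x, Tendsto (fun m => g m x) atTop (𝓝 (f x)) := by
  -- choose retractions
  choose r hrc hr1 hr2 using fun k : ℕ => hY ((1/2 : ℝ)^k) (by positivity)
  have hr1' : ∀ k (y z : Y), dist y z ≤ (1/2:ℝ)^k → r k (y, z) = y := fun k y z h => hr1 k y z h
  have hr2' : ∀ k (y z : Y), dist (r k (y, z)) z ≤ (1/2:ℝ)^k := fun k y z => hr2 k y z
  -- choose subsequence uniformly close
  have hsel : ∀ k : ℕ, ∃ n, ∀ x, dist (f x) (fs n x) < (1/2:ℝ)^(k+2) := by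
    intro k
    exact ((Metric.tendstoUniformly_iff.mp hunif ((1/2:ℝ)^(k+2)) (by positivity))).exists
  choose φ hφ using hsel
  -- choose approximating families
  choose g hgF hgt using fun k : ℕ => hfs (φ k)
  -- the glued sequence
  refine ⟨fun m x => Ubuild r (fun n => g n m x) m m, ?_, ?_⟩
  · -- membership in F
    intro m
    set G : (Fin (m+1) → Y) → Y :=
      fun w => Ubuild r (fun n => if h : n ≤ m then w ⟨n, by omega⟩ else w 0) m m with hG
    have hGc : Continuous G := by
      apply (Ubuild_continuous r hrc m m).comp
      apply continuous_pi
      intro n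
      by_cases h : n ≤ m <;> simp [h, continuous_apply]
    have hmem := hF (m+1) (fun i => g i m) (fun i => hgF i m) G hGc
    have : (fun x => G fun i : Fin (m+1) => g i m x)
        = fun x => Ubuild r (fun n => g n m x) m m := by
      funext x
      apply Ubuild_congr
      intro n hn
      simp [hG, hn]
    rwa [this] at hmem
  · -- pointwise convergence
    intro x
    rw [Metric.tendsto_atTop]
    intro ε hε
    obtain ⟨N, hN⟩ : ∃ N : ℕ, (1/2:ℝ)^N < ε/2 :=
      exists_pow_lt_of_lt_one (by linarith) (by norm_num)
    -- for each k ≤ N get closeness threshold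
    have hclose : ∀ k : ℕ, ∃ M, ∀ m ≥ M, dist (g k m x) (fs (φ k) x) < (1/2:ℝ)^(N+3) := by
      intro k
      exact Metric.tendsto_atTop.mp (hgt k x) ((1/2:ℝ)^(N+3)) (by positivity)
    choose M hM using hclose
    refine ⟨max N ((Finset.range (N+1)).sup M), ?_⟩
    intro m hm
    have hmN : N ≤ m := le_trans (le_max_left _ _) hm
    have hsup : ∀ k ≤ N, M k ≤ m := by
      intro k hk
      exact le_trans (le_trans (Finset.le_sup (Finset.mem_range.mpr (by omega)))
        (le_max_right _ _)) hm
    have hy : ∀ k ≤ N, dist (g k m x) (f x) ≤ (1/2:ℝ)^(k+2) + (1/2)^(N+3) := by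
      intro k hk
      calc dist (g k m x) (f x)
          ≤ dist (g k m x) (fs (φ k) x) + dist (fs (φ k) x) (f x) := dist_triangle _ _ _
        _ ≤ (1/2:ℝ)^(N+3) + (1/2)^(k+2) := by
            refine add_le_add (le_of_lt (hM k m (hsup k hk))) ?_
            rw [dist_comm]
            exact le_of_lt (hφ k x)
        _ = (1/2:ℝ)^(k+2) + (1/2)^(N+3) := by ring
    calc dist (Ubuild r (fun n => g n m x) m m) (f x)
        ≤ 2 * (1/2:ℝ)^N := main_est r hr1' hr2' _ _ N m hmN hy
      _ < ε := by linarith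
end

section
/- Let P = ∏_{n=1}^∞ X_n be a product of a sequence of completely regular (Tychonoff) spaces, let X ⊆ P be a subspace such that either P is perfectly normal or X is Lindelöf, and let G be a functionally open set in X. Then there exists an increasing sequence of functions f_n ∈ CF(P,[0,1]) such that the characteristic function χ_G : X → [0,1] is the pointwise limit of the sequence of restrictions (f_n|_X). -/
open Filter Topology Set

/-- A map on a countable product depends on finitely many coordinates. -/
def FinDet {X : ℕ → Type*} {Y : Type*} (f : (∀ n, X n) → Y) : Prop :=
  ∃ N : ℕ, ∀ x y : ∀ n, X n, (∀ i ≤ N, x i = y i) → f x = f y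

/-- A set is functionally closed (a zero set). -/
def FunctionallyClosed {X : Type*} [TopologicalSpace X] (A : Set X) : Prop :=
  ∃ φ : X → ℝ, Continuous φ ∧ A = φ ⁻¹' {0}

/-- A set is functionally open (a cozero set): its complement is functionally closed. -/
def FunctionallyOpen {X : Type*} [TopologicalSpace X] (A : Set X) : Prop :=
  FunctionallyClosed Aᶜ
/-- In a normal space, a closed Gδ set is a zero set (with witness valued in `[0,1]`). -/
lemma zeroset_of_closed_gdelta' {P : Type*} [TopologicalSpace P] [NormalSpace P]
    {F : Set P} (hF : IsClosed F) (hGd : IsGδ F) :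
    ∃ ψ : P → ℝ, Continuous ψ ∧ (∀ x, ψ x ∈ Set.Icc (0:ℝ) 1) ∧ ∀ x, ψ x = 0 ↔ x ∈ F := by
  obtain ⟨U, Uopen, hU⟩ := hGd.eq_iInter_nat
  have A : ∀ n, ∃ f : C(P, ℝ), Set.EqOn f 0 F ∧ Set.EqOn f 1 (U n)ᶜ ∧
      ∀ x, f x ∈ Set.Icc (0:ℝ) 1 := by
    intro n
    apply exists_continuous_zero_one_of_isClosed hF (Uopen n).isClosed_compl
    rw [disjoint_compl_right_iff_subset]
    exact hU.le.trans (Set.iInter_subset U n)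
  choose f f0 f1 frange using A
  set u : ℕ → ℝ := fun n => 1/2/2^n with hu
  have u_pos : ∀ n, 0 < u n := fun n => by positivity
  have u_sum : Summable u := summable_geometric_two' 1
  have I' : ∀ n x, u n * f n x ≤ u n := fun n x =>
    mul_le_of_le_one_right (u_pos n).le (frange n x).2
  have nn : ∀ n x, 0 ≤ u n * f n x := fun n x => mul_nonneg (u_pos n).le (frange n x).1
  have S : ∀ x, Summable fun n => u n * f n x := fun x =>
    Summable.of_nonneg_of_le (fun n => nn n x) (fun n => I' n x) u_sum
  refine ⟨fun x => ∑' n, u n * f n x, ?_, fun x => ⟨?_, ?_⟩, fun x => ⟨?_, ?_⟩⟩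
  · apply continuous_tsum (fun n => continuous_const.mul (f n).continuous) u_sum (fun n x => ?_)
    rw [Real.norm_eq_abs]; show |u n * f n x| ≤ u n; rw [abs_of_nonneg (nn n x)]
    exact I' n x
  · exact tsum_nonneg fun n => nn n x
  · calc ∑' n, u n * f n x ≤ ∑' n, u n := Summable.tsum_le_tsum (fun n => I' n x) (S x) u_sum
      _ = 1 := tsum_geometric_two' 1
  · intro h0
    by_contra hxF
    obtain ⟨n, hn⟩ : ∃ n, x ∉ U n := by
      by_contra h
      push_neg at h
      exact hxF (hU ▸ Set.mem_iInter.mpr h)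
    have hle : u n * f n x ≤ ∑' m, u m * f m x :=
      Summable.le_tsum (S x) n (fun m _ => nn m x)
    have h1 : f n x = 1 := f1 n hn
    rw [h1, mul_one] at hle
    have : u n ≤ 0 := hle.trans_eq h0
    exact absurd this (not_le.mpr (u_pos n))
  · intro hxF
    have hz : ∀ n, u n * f n x = 0 := fun n => by
      have : f n x = 0 := f0 n hxF
      rw [this, mul_zero]
    simp [hz]

/-- The key covering family of continuous finitely determined bump functions. -/
lemma key_family {X : ℕ → Type*} [∀ n, TopologicalSpace (X n)] [∀ n, T35Space (X n)]
    (S : Set (∀ n, X n))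
    (hPX : PerfectlyNormalSpace (∀ n, X n) ∨ LindelofSpace S)
    (G : Set S) (hG : FunctionallyOpen G) (p : ∀ n, X n) :
    ∃ g : ℕ → (∀ n, X n) → ℝ,
      (∀ k, Continuous (g k) ∧ FinDet (g k) ∧ ∀ x, g k x ∈ Set.Icc (0:ℝ) 1) ∧
      (∀ x : S, x ∉ G → ∀ k, g k (x : ∀ n, X n) = 0) ∧
      (∀ x : S, x ∈ G → ∃ k, 0 < g k (x : ∀ n, X n)) := by
  classical
  obtain ⟨φ, hφc, hφ0⟩ := hG
  have hGco : IsClosed Gᶜ := hφ0 ▸ (isClosed_singleton.preimage hφc)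
  have hGopen : IsOpen G := by
    have := hGco.isOpen_compl
    rwa [compl_compl] at this
  obtain ⟨U, hUopen, hUG⟩ := isOpen_induced_iff.mp hGopen
  have hmem : ∀ x : S, (x ∈ G ↔ φ x ≠ 0) := by
    intro x
    constructor
    · intro hx h0
      have hxc : x ∈ Gᶜ := by rw [hφ0]; exact h0
      exact hxc hx
    · intro h
      by_contra hx
      have : x ∈ Gᶜ := hx
      rw [hφ0] at this
      exact h this
  rcases hPX with hPN | hLin
  · -- perfectly normal case
    haveI := hPN
    set W : ℕ → Set (∀ n, X n) := fun N =>
      ⋃₀ {C | (∃ u : ∀ n, Set (X n), (∀ i, IsOpen (u i)) ∧ C = Set.pi (Set.Iic N) u) ∧ C ⊆ U}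
      with hW
    have hWopen : ∀ N, IsOpen (W N) := by
      intro N
      apply isOpen_sUnion
      rintro C ⟨⟨u, hu, rfl⟩, -⟩
      exact isOpen_set_pi (Set.finite_Iic N) (fun i _ => hu i)
    have hWU : ∀ N, W N ⊆ U := by
      rintro N x ⟨C, ⟨-, hCU⟩, hxC⟩
      exact hCU hxC
    have hWfd : ∀ N (x y : ∀ n, X n), (∀ i ≤ N, x i = y i) → x ∈ W N → y ∈ W N := by
      rintro N x y hxy ⟨C, ⟨⟨u, hu, rfl⟩, hCU⟩, hxC⟩
      refine ⟨_, ⟨⟨u, hu, rfl⟩, hCU⟩, fun i hi => ?_⟩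
      rw [← hxy i hi]
      exact hxC i hi
    have hWcover : ∀ x ∈ U, ∃ N, x ∈ W N := by
      intro x hx
      obtain ⟨I, u, h1, h2⟩ := isOpen_pi_iff.mp hUopen x hx
      refine ⟨I.sup id, Set.pi (Set.Iic (I.sup id)) (fun i => if i ∈ I then u i else Set.univ),
        ⟨⟨_, fun i => ?_, rfl⟩, ?_⟩, fun i _ => ?_⟩
      · split_ifs with h
        exacts [(h1 i h).1, isOpen_univ]
      · intro z hz
        apply h2
        intro i hi
        have hiI : i ∈ I := hi
        have hz' := hz i (Set.mem_Iic.mpr (Finset.le_sup (f := id) hiI))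
        simpa only [if_pos hiI] using hz'
      · by_cases h : i ∈ I
        · simpa [h] using (h1 i h).2
        · simp [h]
    have hzero : ∀ N, ∃ ψ : (∀ n, X n) → ℝ, Continuous ψ ∧ (∀ x, ψ x ∈ Set.Icc (0:ℝ) 1) ∧
        ∀ x, ψ x = 0 ↔ x ∈ (W N)ᶜ := fun N =>
      zeroset_of_closed_gdelta' (hWopen N).isClosed_compl
        (PerfectlyNormalSpace.closed_gdelta (hWopen N).isClosed_compl)
    choose ψ hψc hψI hψ0 using hzero
    set r : ℕ → (∀ n, X n) → (∀ n, X n) := fun N x n => if n ≤ N then x n else p n with hr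
    have hrc : ∀ N, Continuous (r N) := by
      intro N
      apply continuous_pi
      intro n
      by_cases h : n ≤ N
      · simpa [hr, h] using (continuous_apply n)
      · simpa [hr, h] using (continuous_const : Continuous fun _ : (∀ n, X n) => p n)
    have hrW : ∀ N x, r N x ∈ W N ↔ x ∈ W N := by
      intro N x
      constructor
      · exact hWfd N (r N x) x (fun i hi => by simp [hr, hi])
      · exact hWfd N x (r N x) (fun i hi => by simp [hr, hi])
    refine ⟨fun N x => ψ N (r N x), fun N => ⟨(hψc N).comp (hrc N), ⟨N, fun x y hxy => ?_⟩,
        fun x => hψI N _⟩, ?_, ?_⟩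
    · have hxy' : r N x = r N y := by
        funext n
        by_cases h : n ≤ N
        · simp [hr, h, hxy n h]
        · simp [hr, h]
      show ψ N (r N x) = ψ N (r N y)
      rw [hxy']
    · intro x hx k
      have hxU : (x : ∀ n, X n) ∉ U := by
        intro h
        exact hx (by rw [← hUG]; exact h)
      have hrk : r k (x : ∀ n, X n) ∈ (W k)ᶜ := by
        intro hc
        exact hxU (hWU k ((hrW k _).mp hc))
      exact (hψ0 k _).mpr hrk
    · intro x hx
      have hxU : (x : ∀ n, X n) ∈ U := by rw [← hUG] at hx; exact hx
      obtain ⟨N, hN⟩ := hWcover _ hxU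
      refine ⟨N, lt_of_le_of_ne (hψI N _).1 ?_⟩
      intro h0
      exact ((hψ0 N _).mp h0.symm) ((hrW N _).mpr hN)
  · -- Lindelöf case
    haveI := hLin
    have bump : ∀ z : {y : S // y ∈ G}, ∃ gz : (∀ n, X n) → ℝ,
        Continuous gz ∧ FinDet gz ∧ (∀ w, gz w ∈ Set.Icc (0:ℝ) 1) ∧
        gz ((z : S) : ∀ n, X n) = 1 ∧ ∀ w, 0 < gz w → w ∈ U := by
      rintro ⟨z, hz⟩
      have hzU : (z : ∀ n, X n) ∈ U := by rw [← hUG] at hz; exact hz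
      obtain ⟨I, u, h1, h2⟩ := isOpen_pi_iff.mp hUopen _ hzU
      set u' : ∀ n, Set (X n) := fun i => if i ∈ I then u i else Set.univ with hu'
      have hu'o : ∀ i, IsOpen (u' i) := fun i => by
        by_cases h : i ∈ I
        · simpa [hu', h] using (h1 i h).1
        · simp [hu', h]
      have hzu' : ∀ i, (z : ∀ n, X n) i ∉ (u' i)ᶜ := fun i => by
        by_cases h : i ∈ I
        · simp only [hu', h, if_true, Set.mem_compl_iff, not_not]
          exact (h1 i h).2
        · simp [hu', h]
      have A : ∀ i, ∃ f : X i → unitInterval, Continuous f ∧ f ((z : ∀ n, X n) i) = 0 ∧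
          Set.EqOn f 1 (u' i)ᶜ := fun i =>
        CompletelyRegularSpace.completely_regular _ _ (hu'o i).isClosed_compl (hzu' i)
      choose f hfc hf0 hf1 using A
      have factmem : ∀ i (t : X i), (1 - ((f i t : ℝ))) ∈ Set.Icc (0:ℝ) 1 := by
        intro i t
        constructor
        · have := (f i t).2.2
          linarith
        · have := (f i t).2.1
          linarith
      refine ⟨fun w => ∏ i ∈ I, (1 - ((f i (w i) : ℝ))), ?_, ⟨I.sup id, fun x y hxy => ?_⟩,
          fun w => ⟨?_, ?_⟩, ?_, ?_⟩
      · exact continuous_finset_prod I fun i _ =>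
          continuous_const.sub (continuous_subtype_val.comp ((hfc i).comp (continuous_apply i)))
      · exact Finset.prod_congr rfl fun i hi => by
          rw [hxy i (Finset.le_sup (f := id) hi)]
      · exact Finset.prod_nonneg fun i _ => (factmem i _).1
      · exact Finset.prod_le_one (fun i _ => (factmem i _).1) (fun i _ => (factmem i _).2)
      · refine Finset.prod_eq_one fun i _ => ?_
        rw [hf0 i]
        norm_num
      · intro w hw
        apply h2
        intro i hi
        have hiI : i ∈ I := hi
        by_contra hwu
        have hwc : w i ∈ (u' i)ᶜ := by
          have hui : u' i = u i := by simp [hu', hiI]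
          rw [hui]
          exact hwu
        have hval : (f i (w i) : ℝ) = 1 := by
          have := hf1 i hwc
          rw [this]
          norm_num
        have hzero : (1 : ℝ) - (f i (w i) : ℝ) = 0 := by rw [hval]; ring
        have hprod : ∏ j ∈ I, (1 - ((f j (w j) : ℝ))) = 0 := Finset.prod_eq_zero hiI hzero
        have hw' : 0 < ∏ j ∈ I, (1 - ((f j (w j) : ℝ))) := hw
        rw [hprod] at hw'
        exact lt_irrefl _ hw'
    choose gz hgzc hgzfd hgzI hgz1 hgzU using bump
    set V : {y : S // y ∈ G} → Set S := fun z => Subtype.val ⁻¹' {w | 0 < gz z w} with hV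
    have hVopen : ∀ z, IsOpen (V z) :=
      fun z => (isOpen_lt continuous_const (hgzc z)).preimage continuous_subtype_val
    have hmemV : ∀ z : {y : S // y ∈ G}, (z : S) ∈ V z := fun z => by
      simp only [hV, Set.mem_preimage, Set.mem_setOf_eq, hgz1 z]
      norm_num
    set F : ℕ → Set S := fun m => {x | 1/(m+1 : ℝ) ≤ |φ x|} with hF
    have hFc : ∀ m, IsClosed (F m) := fun m => isClosed_le continuous_const hφc.abs
    have hFG : ∀ m, F m ⊆ ⋃ z : {y : S // y ∈ G}, V z := by
      intro m x hx
      have hxG : x ∈ G := by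
        rw [hmem x]
        intro h0
        have hle : (1:ℝ)/(m+1) ≤ 0 := by
          have : |φ x| = 0 := by rw [h0]; simp
          calc (1:ℝ)/(m+1) ≤ |φ x| := hx
            _ = 0 := this
        have : (0:ℝ) < 1/(m+1) := by positivity
        linarith
      exact Set.mem_iUnion.mpr ⟨⟨x, hxG⟩, hmemV _⟩
    have sub : ∀ m, ∃ rr : Set {y : S // y ∈ G}, rr.Countable ∧ F m ⊆ ⋃ z ∈ rr, V z := fun m =>
      ((hFc m).isLindelof).elim_countable_subcover V hVopen (hFG m)
    choose rr hrrc hrrsub using sub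
    set R : Set {y : S // y ∈ G} := ⋃ m, rr m with hR
    have hRc : R.Countable := Set.countable_iUnion hrrc
    have hGR : ∀ x : S, x ∈ G → x ∈ ⋃ z ∈ R, V z := by
      intro x hx
      have hφx : φ x ≠ 0 := (hmem x).mp hx
      obtain ⟨m, hm⟩ := exists_nat_one_div_lt (abs_pos.mpr hφx)
      have hxF : x ∈ F m := le_of_lt hm
      obtain ⟨z, hzr, hzV⟩ := Set.mem_iUnion₂.mp (hrrsub m hxF)
      exact Set.mem_iUnion₂.mpr ⟨z, Set.mem_iUnion.mpr ⟨m, hzr⟩, hzV⟩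
    by_cases hRne : R.Nonempty
    · obtain ⟨e, he⟩ := hRc.exists_eq_range hRne
      refine ⟨fun k => gz (e k), fun k => ⟨hgzc _, hgzfd _, hgzI _⟩, ?_, ?_⟩
      · intro x hx k
        by_contra hne
        have hlt : 0 < gz (e k) (x : ∀ n, X n) :=
          lt_of_le_of_ne (hgzI (e k) _).1 (Ne.symm hne)
        exact hx (by rw [← hUG]; exact hgzU (e k) _ hlt)
      · intro x hx
        obtain ⟨z, hzR, hzV⟩ := Set.mem_iUnion₂.mp (hGR x hx)
        have : z ∈ Set.range e := by rw [← he]; exact hzR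
        obtain ⟨k, rfl⟩ := this
        exact ⟨k, hzV⟩
    · have hGempty : ∀ x : S, x ∉ G := by
        intro x hx
        obtain ⟨z, hzR, -⟩ := Set.mem_iUnion₂.mp (hGR x hx)
        exact hRne ⟨z, hzR⟩
      refine ⟨fun _ _ => 0, fun k => ⟨continuous_const, ⟨0, fun _ _ _ => rfl⟩,
        fun x => ⟨le_rfl, zero_le_one⟩⟩, fun x hx k => rfl, fun x hx => absurd hx (hGempty x)⟩

/-- Let `P = ∏ₙ Xₙ` be a product of Tychonoff spaces, `X ⊆ P` a subspace such
that `P` is perfectly normal or `X` is Lindelöf, and `G` a functionally open set in `X`.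
Then there is an increasing sequence of continuous finitely determined functions
`fₙ : P → [0,1]` whose restrictions to `X` converge pointwise to `χ_G`. -/
theorem stmt5 {X : ℕ → Type*} [∀ n, TopologicalSpace (X n)] [∀ n, T35Space (X n)]
    (S : Set (∀ n, X n))
    (hPX : PerfectlyNormalSpace (∀ n, X n) ∨ LindelofSpace S)
    (G : Set S) (hG : FunctionallyOpen G) :
    ∃ f : ℕ → (∀ n, X n) → ℝ,
      (∀ n, Continuous (f n) ∧ FinDet (f n) ∧ ∀ x, f n x ∈ Set.Icc (0 : ℝ) 1) ∧
      (∀ x : ∀ n, X n, Monotone fun n => f n x) ∧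
      ∀ x : S, Tendsto (fun n => f n (x : ∀ n, X n)) atTop
        (𝓝 (G.indicator (fun _ => (1 : ℝ)) x)) := by
  classical
  by_cases hne : Nonempty (∀ n, X n)
  · obtain ⟨p⟩ := hne
    obtain ⟨g, hg, hg0, hg1⟩ := key_family S hPX G hG p
    choose Ng hNg using fun k => (hg k).2.1
    set f : ℕ → (∀ n, X n) → ℝ := fun n x =>
      min 1 ((n : ℝ) * ∑ k ∈ Finset.range (n+1), (1/2 : ℝ)^k * g k x) with hf
    have term_nonneg : ∀ (x : ∀ n, X n) (k : ℕ), 0 ≤ (1/2 : ℝ)^k * g k x :=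
      fun x k => mul_nonneg (by positivity) ((hg k).2.2 x).1
    have sum_nonneg' : ∀ (n : ℕ) (x : ∀ n, X n),
        0 ≤ ∑ k ∈ Finset.range (n+1), (1/2 : ℝ)^k * g k x :=
      fun n x => Finset.sum_nonneg fun k _ => term_nonneg x k
    refine ⟨f, fun n => ⟨?_, ?_, fun x => ⟨?_, ?_⟩⟩, ?_, ?_⟩
    · exact continuous_const.min (continuous_const.mul (continuous_finset_sum _ fun k _ =>
        continuous_const.mul (hg k).1))
    · refine ⟨(Finset.range (n+1)).sup Ng, fun x y hxy => ?_⟩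
      have hsum : ∑ k ∈ Finset.range (n+1), (1/2 : ℝ)^k * g k x
          = ∑ k ∈ Finset.range (n+1), (1/2 : ℝ)^k * g k y := by
        refine Finset.sum_congr rfl fun k hk => ?_
        rw [hNg k x y fun i hi => hxy i (le_trans hi (Finset.le_sup hk))]
      simp only [hf, hsum]
    · exact le_min zero_le_one (mul_nonneg (Nat.cast_nonneg n) (sum_nonneg' n x))
    · exact min_le_left _ _
    · intro x a b hab
      apply min_le_min le_rfl
      refine mul_le_mul (Nat.cast_le.mpr hab) ?_ (sum_nonneg' a x) (Nat.cast_nonneg b)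
      refine Finset.sum_le_sum_of_subset_of_nonneg
        (Finset.range_subset_range.mpr (by omega)) fun k _ _ => term_nonneg x k
    · intro x
      by_cases hx : x ∈ G
      · rw [Set.indicator_of_mem hx]
        obtain ⟨k, hk⟩ := hg1 x hx
        set d : ℝ := (1/2)^k * g k (x : ∀ n, X n) with hd
        have hdpos : 0 < d := mul_pos (by positivity) hk
        apply tendsto_atTop_of_eventually_const (i₀ := max k ⌈1/d⌉₊)
        intro n hn
        have hkn : k ≤ n := le_trans (le_max_left _ _) hn
        have hsum : d ≤ ∑ j ∈ Finset.range (n+1), (1/2:ℝ)^j * g j (x : ∀ n, X n) :=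
          Finset.single_le_sum (fun j _ => term_nonneg _ j)
            (Finset.mem_range.mpr (by omega))
        have hn' : 1/d ≤ (n : ℝ) :=
          le_trans (Nat.le_ceil _)
            (Nat.cast_le.mpr (le_trans (le_max_right _ _) hn))
        have h1 : (1:ℝ) ≤ (n : ℝ) * ∑ j ∈ Finset.range (n+1), (1/2:ℝ)^j * g j (x : ∀ n, X n) := by
          calc (1:ℝ) = (1/d) * d := by field_simp
            _ ≤ (n : ℝ) * ∑ j ∈ Finset.range (n+1), (1/2:ℝ)^j * g j (x : ∀ n, X n) :=
              mul_le_mul hn' hsum hdpos.le (le_trans (by positivity) hn')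
        simp only [hf]
        exact min_eq_left h1
      · rw [Set.indicator_of_notMem hx]
        have hzero : ∀ n : ℕ, f n (x : ∀ n, X n) = 0 := by
          intro n
          simp only [hf]
          rw [Finset.sum_eq_zero (fun k _ => by rw [hg0 x hx k, mul_zero]), mul_zero]
          exact min_eq_right zero_le_one
        simp only [hzero]
        exact tendsto_const_nhds
  · refine ⟨fun _ _ => 0, fun n => ⟨continuous_const, ⟨0, fun _ _ _ => rfl⟩,
      fun x => absurd ⟨x⟩ hne⟩, fun x => absurd ⟨x⟩ hne,
      fun x => absurd ⟨(x : ∀ n, X n)⟩ hne⟩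
end

section
/- Let P = ∏_{n=1}^∞ X_n be a product of a sequence of completely regular (Tychonoff) spaces, let X ⊆ P be a subspace such that either P is perfectly normal or X is Lindelöf, and let G be a functionally open set in X. Then there exists a sequence (f_n) of functions f_n ∈ CF(P,[0,1]) such that G is open in X with respect to the pseudometric d_𝓕(x,y) = ∑_{n=1}^∞ 2^{-n} |f_n(x) − f_n(y)|. -/
open Filter Topology

/-! ### Auxiliary material -/

/-- A set determined by the coordinates `≤ N`. -/
def DetSet {X : ℕ → Type*} (N : ℕ) (D : Set (∀ n, X n)) : Prop :=
  ∀ x y : ∀ n, X n, (∀ i ≤ N, x i = y i) → x ∈ D → y ∈ D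

section aux

variable {X : ℕ → Type*}

lemma detSet_interior [∀ n, TopologicalSpace (X n)] {N : ℕ} {D : Set (∀ n, X n)}
    (hD : DetSet N D) : DetSet N (interior D) := by
  intro x y hxy hx
  set R : (∀ n, X n) → (∀ n, X n) := fun z i => if i ≤ N then z i else x i with hR
  have hRc : Continuous R := by
    refine continuous_pi fun i => ?_
    by_cases h : i ≤ N
    · simpa [hR, h] using continuous_apply i
    · simpa [hR, h] using continuous_const
  have hRy : R y = x := by
    funext i
    by_cases h : i ≤ N
    · simp [hR, h, (hxy i h).symm]
    · simp [hR, h]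
  have hsub : R ⁻¹' (interior D) ⊆ D := by
    intro z hz
    refine hD (R z) z (fun i hi => by simp [hR, hi]) (interior_subset hz)
  have : y ∈ R ⁻¹' (interior D) := by
    simp [Set.mem_preimage, hRy, hx]
  exact mem_interior.2 ⟨R ⁻¹' (interior D), hsub, isOpen_interior.preimage hRc, this⟩

/-- Every open set in a countable product is a countable union of finitely determined
open sets. -/
lemma exists_detOpen [∀ n, TopologicalSpace (X n)] {V : Set (∀ n, X n)} (hV : IsOpen V) :
    ∃ O : ℕ → Set (∀ n, X n), (∀ N, IsOpen (O N)) ∧ (∀ N, DetSet N (O N)) ∧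
      (∀ N, O N ⊆ V) ∧ V ⊆ ⋃ N, O N := by
  set D : ℕ → Set (∀ n, X n) := fun N =>
    {x | ∀ y : ∀ n, X n, (∀ i ≤ N, x i = y i) → y ∈ V} with hD
  have hDdet : ∀ N, DetSet N (D N) := by
    intro N x y hxy hx z hz
    exact hx z (fun i hi => (hxy i hi).trans (hz i hi))
  have hDV : ∀ N, D N ⊆ V := fun N x hx => hx x (fun _ _ => rfl)
  refine ⟨fun N => interior (D N), fun N => isOpen_interior,
    fun N => detSet_interior (hDdet N), fun N => interior_subset.trans (hDV N), ?_⟩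
  intro x hx
  obtain ⟨I, u, hu, hsub⟩ := isOpen_pi_iff.mp hV x hx
  refine Set.mem_iUnion.2 ⟨I.sup id, ?_⟩
  refine mem_interior.2 ⟨(I : Set ℕ).pi u, ?_, ?_, ?_⟩
  · intro z hz y hzy
    refine hsub fun i hi => ?_
    have : z i = y i := hzy i (Finset.le_sup (f := id) hi)
    rw [← this]
    exact hz i hi
  · exact isOpen_set_pi I.finite_toSet (fun a ha => (hu a ha).1)
  · intro i hi
    exact (hu i hi).2

/-- In a normal space, a closed Gδ set is a zero set of a `[0,1]`-valued function. -/
lemma exists_zero_fun {P : Type*} [TopologicalSpace P] [NormalSpace P]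
    {C : Set P} (hC : IsClosed C) (hGδ : IsGδ C) :
    ∃ ψ : P → ℝ, Continuous ψ ∧ (∀ z, ψ z ∈ Set.Icc (0:ℝ) 1) ∧ C = ψ ⁻¹' {0} := by
  obtain ⟨U, Uopen, hU⟩ := hGδ.eq_iInter_nat
  have A : ∀ n, ∃ f : C(P, ℝ), Set.EqOn f 0 C ∧ Set.EqOn f 1 (U n)ᶜ ∧
      ∀ x, f x ∈ Set.Icc (0:ℝ) 1 := by
    intro n
    refine exists_continuous_zero_one_of_isClosed hC (Uopen n).isClosed_compl ?_
    rw [Set.disjoint_compl_right_iff_subset, hU]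
    exact Set.iInter_subset U n
  choose f hf0 hf1 hfI using A
  set u : ℕ → ℝ := fun n => (1/2 : ℝ) ^ (n+1) with hu
  have hupos : ∀ n, 0 < u n := fun n => by positivity
  have husum : Summable u := by
    have : Summable (fun n : ℕ => (1/2 : ℝ) ^ n) :=
      summable_geometric_of_lt_one (by norm_num) (by norm_num)
    simpa [hu, pow_succ, mul_comm] using this.mul_right (1/2 : ℝ)
  set ψ : P → ℝ := fun x => ∑' n, u n * f n x with hψ
  have hbd : ∀ n x, ‖u n * f n x‖ ≤ u n := by
    intro n x
    rw [Real.norm_eq_abs, abs_mul, abs_of_pos (hupos n),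
      abs_of_nonneg (hfI n x).1]
    exact mul_le_of_le_one_right (hupos n).le (hfI n x).2
  have hsum : ∀ x, Summable fun n => u n * f n x := by
    intro x
    exact Summable.of_norm_bounded husum (fun n => hbd n x)
  have hψc : Continuous ψ :=
    continuous_tsum (fun n => continuous_const.mul (f n).continuous) husum hbd
  have hnn : ∀ x n, 0 ≤ u n * f n x := fun x n =>
    mul_nonneg (hupos n).le (hfI n x).1
  refine ⟨ψ, hψc, fun z => ⟨tsum_nonneg (hnn z), ?_⟩, ?_⟩
  · calc ∑' n, u n * f n z ≤ ∑' n, u n := by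
          refine Summable.tsum_le_tsum (fun n => mul_le_of_le_one_right (hupos n).le (hfI n z).2)
            (hsum z) husum
      _ = 1 := by
          simpa [hu, pow_succ, mul_comm, div_eq_mul_inv] using tsum_geometric_two' 1
  · ext x
    simp only [Set.mem_preimage, Set.mem_singleton_iff]
    constructor
    · intro hx
      have : ∀ n, u n * f n x = 0 := fun n => by simp [hf0 n hx]
      simp [hψ, this]
    · intro hx
      by_contra hxC
      have hxU : ∃ n, x ∉ U n := by
        by_contra h
        push_neg at h
        exact hxC (hU ▸ Set.mem_iInter.2 h)
      obtain ⟨n, hn⟩ := hxU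
      have h1 : u n * f n x = u n := by
        rw [hf1 n hn]; simp
      have : u n ≤ ψ x := by
        rw [← h1]
        exact Summable.le_tsum (hsum x) n (fun m _ => hnn x m)
      rw [hx] at this
      exact absurd this (not_le.2 (hupos n))

/-- A bump function supported in a basic open box around a point. -/
lemma exists_box_fun [∀ n, TopologicalSpace (X n)]
    [∀ n, T35Space (X n)] {V : Set (∀ n, X n)} (hV : IsOpen V)
    {p : ∀ n, X n} (hp : p ∈ V) :
    ∃ g : (∀ n, X n) → ℝ, Continuous g ∧ FinDet g ∧
      (∀ z, g z ∈ Set.Icc (0:ℝ) 1) ∧ g p = 1 ∧ ∀ z, 0 < g z → z ∈ V := by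
  obtain ⟨I, u, hu, hsub⟩ := isOpen_pi_iff.mp hV p hp
  have A : ∀ i : ℕ, ∃ h : X i → unitInterval, Continuous h ∧
      (i ∈ I → (h (p i) = 0 ∧ Set.EqOn h 1 (u i)ᶜ)) := by
    intro i
    by_cases hi : i ∈ I
    · obtain ⟨h, hc, h0, h1⟩ := CompletelyRegularSpace.completely_regular (p i) (u i)ᶜ
        (hu i hi).1.isClosed_compl (by simp [(hu i hi).2])
      exact ⟨h, hc, fun _ => ⟨h0, h1⟩⟩
    · exact ⟨fun _ => 0, continuous_const, fun h => absurd h hi⟩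
  choose h hc hmem using A
  set g : (∀ n, X n) → ℝ := fun z => ∏ i ∈ I, (1 - (h i (z i) : ℝ)) with hg
  have hgc : Continuous g := by
    refine continuous_finset_prod I fun i _ => ?_
    exact continuous_const.sub
      (continuous_subtype_val.comp ((hc i).comp (continuous_apply i)))
  have hfac : ∀ i (x : X i), (1 - (h i x : ℝ)) ∈ Set.Icc (0:ℝ) 1 := by
    intro i x
    have := (h i x).2
    constructor <;> [linarith [this.2]; linarith [this.1]]
  refine ⟨g, hgc, ⟨I.sup id, ?_⟩, ?_, ?_, ?_⟩
  · intro x y hxy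
    refine Finset.prod_congr rfl fun i hi => ?_
    rw [hxy i (Finset.le_sup (f := id) hi)]
  · intro z
    exact ⟨Finset.prod_nonneg fun i _ => (hfac i (z i)).1,
      Finset.prod_le_one (fun i _ => (hfac i (z i)).1) (fun i _ => (hfac i (z i)).2)⟩
  · have : ∀ i ∈ I, (1 - (h i (p i) : ℝ)) = 1 := by
      intro i hi
      rw [(hmem i hi).1]; simp
    simp [hg, Finset.prod_congr rfl this]
  · intro z hz
    refine hsub fun i hi => ?_
    by_contra hzi
    have h1 : (h i (z i) : ℝ) = 1 := by
      rw [(hmem i hi).2 hzi]; simp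
    have : g z = 0 := Finset.prod_eq_zero hi (by rw [h1]; ring)
    rw [this] at hz
    exact lt_irrefl 0 hz

/-- Key deduction lemma: a pointwise positivity cover implies pseudometric openness. -/
lemma key_sum (S : Set (∀ n, X n)) (G : Set S)
    (f : ℕ → (∀ n, X n) → ℝ) (hbd : ∀ n x, f n x ∈ Set.Icc (0:ℝ) 1)
    (hcov : ∀ x ∈ G, ∃ n, 0 < f n (x : ∀ n, X n) ∧
      ∀ y : S, 0 < f n (y : ∀ n, X n) → y ∈ G) :
    ∀ x ∈ G, ∃ ε : ℝ, 0 < ε ∧ ∀ y : S,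
      (∑' n : ℕ, (1 / 2 : ℝ) ^ (n + 1) *
        |f n (x : ∀ n, X n) - f n (y : ∀ n, X n)|) < ε → y ∈ G := by
  intro x hx
  obtain ⟨n, hn, hcl⟩ := hcov x hx
  refine ⟨(1/2 : ℝ)^(n+1) * f n (x : ∀ n, X n), by positivity, ?_⟩
  intro y hy
  have habs : ∀ m, |f m (x : ∀ n, X n) - f m (y : ∀ n, X n)| ≤ 1 := by
    intro m
    have h1 := hbd m (x : ∀ n, X n)
    have h2 := hbd m (y : ∀ n, X n)
    rw [abs_sub_le_iff]
    constructor <;> [linarith [h1.2, h2.1]; linarith [h2.2, h1.1]]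
  have hnn : ∀ m : ℕ, 0 ≤ (1/2 : ℝ)^(m+1) * |f m (x : ∀ n, X n) - f m (y : ∀ n, X n)| :=
    fun m => mul_nonneg (by positivity) (abs_nonneg _)
  have hsumg : Summable (fun m : ℕ => (1/2 : ℝ)^(m+1)) := by
    have : Summable (fun m : ℕ => (1/2 : ℝ) ^ m) :=
      summable_geometric_of_lt_one (by norm_num) (by norm_num)
    simpa [pow_succ] using this.mul_right (1/2 : ℝ)
  have hsum : Summable (fun m : ℕ =>
      (1/2 : ℝ)^(m+1) * |f m (x : ∀ n, X n) - f m (y : ∀ n, X n)|) := by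
    refine Summable.of_nonneg_of_le hnn (fun m => ?_) hsumg
    exact mul_le_of_le_one_right (by positivity) (habs m)
  have hterm : (1/2 : ℝ)^(n+1) * |f n (x : ∀ n, X n) - f n (y : ∀ n, X n)| ≤
      ∑' m : ℕ, (1/2 : ℝ)^(m+1) * |f m (x : ∀ n, X n) - f m (y : ∀ n, X n)| :=
    Summable.le_tsum hsum n (fun m _ => hnn m)
  have hlt : |f n (x : ∀ n, X n) - f n (y : ∀ n, X n)| < f n (x : ∀ n, X n) := by
    have := lt_of_le_of_lt hterm hy
    have hpos : (0:ℝ) < (1/2 : ℝ)^(n+1) := by positivity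
    exact lt_of_mul_lt_mul_left (by linarith) hpos.le
  refine hcl y ?_
  have h1 := le_abs_self (f n (x : ∀ n, X n) - f n (y : ∀ n, X n))
  linarith [(hbd n (y : ∀ n, X n)).1, h1, hlt]

end aux

/-- Let `P = ∏ₙ Xₙ` be a product of Tychonoff spaces, `X ⊆ P` a subspace such
that `P` is perfectly normal or `X` is Lindelöf, and `G` a functionally open set in `X`.
Then there is a sequence of continuous finitely determined functions `fₙ : P → [0,1]` such
that `G` is open in `X` with respect to the pseudometric
`d(x,y) = ∑ₙ 2⁻ⁿ |fₙ x - fₙ y|`. -/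
theorem stmt6 {X : ℕ → Type*} [∀ n, TopologicalSpace (X n)] [∀ n, T35Space (X n)]
    (S : Set (∀ n, X n))
    (hPX : PerfectlyNormalSpace (∀ n, X n) ∨ LindelofSpace S)
    (G : Set S) (hG : FunctionallyOpen G) :
    ∃ f : ℕ → (∀ n, X n) → ℝ,
      (∀ n, Continuous (f n) ∧ FinDet (f n) ∧ ∀ x, f n x ∈ Set.Icc (0 : ℝ) 1) ∧
      ∀ x ∈ G, ∃ ε : ℝ, 0 < ε ∧ ∀ y : S,
        (∑' n : ℕ, (1 / 2 : ℝ) ^ (n + 1) *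
          |f n (x : ∀ n, X n) - f n (y : ∀ n, X n)|) < ε → y ∈ G := by
  classical
  obtain ⟨φ, hφc, hφe⟩ := hG
  -- `G` is open in `S`, hence the trace of an open set `V` of the product.
  have hGopen : IsOpen G := by
    have : IsClosed Gᶜ := by
      rw [hφe]; exact isClosed_singleton.preimage hφc
    simpa using this.isOpen_compl
  obtain ⟨V, hVopen, hVeq⟩ := isOpen_induced_iff.mp hGopen
  -- the trivial family, used in degenerate cases
  have htriv : ∀ n : ℕ, Continuous (fun _ : ∀ n, X n => (0:ℝ)) ∧
      FinDet (fun _ : ∀ n, X n => (0:ℝ)) ∧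
      ∀ x : ∀ n, X n, (fun _ : ∀ n, X n => (0:ℝ)) x ∈ Set.Icc (0 : ℝ) 1 :=
    fun n => ⟨continuous_const, ⟨0, fun _ _ _ => rfl⟩,
      fun _ => ⟨le_refl _, zero_le_one⟩⟩
  rcases hPX with hP | hL
  · -- Perfectly normal case
    by_cases hne : Nonempty (∀ n, X n)
    · obtain ⟨a⟩ := hne
      obtain ⟨O, hOopen, hOdet, hOV, hVcov⟩ := exists_detOpen hVopen
      have hzero : ∀ N : ℕ, ∃ ψ : (∀ n, X n) → ℝ, Continuous ψ ∧
          (∀ z, ψ z ∈ Set.Icc (0:ℝ) 1) ∧ (O N)ᶜ = ψ ⁻¹' {0} := fun N =>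
        exists_zero_fun (hOopen N).isClosed_compl
          (hP.closed_gdelta (hOopen N).isClosed_compl)
      choose ψ hψc hψI hψe using hzero
      have hψmem : ∀ N z, z ∈ O N ↔ 0 < ψ N z := by
        intro N z
        constructor
        · intro hz
          rcases lt_or_eq_of_le (hψI N z).1 with h | h
          · exact h
          · exfalso
            have : z ∈ (O N)ᶜ := by
              rw [hψe N]; simp [← h]
            exact this hz
        · intro hz
          by_contra hzO
          have : ψ N z = 0 := by
            have h2 : z ∈ ψ N ⁻¹' {0} := by rw [← hψe N]; exact hzO
            simpa using h2
          rw [this] at hz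
          exact lt_irrefl 0 hz
      -- retraction fixing the first coordinates
      set r : ℕ → (∀ n, X n) → (∀ n, X n) :=
        fun N z i => if i ≤ N then z i else a i with hr
      have hrc : ∀ N, Continuous (r N) := by
        intro N
        refine continuous_pi fun i => ?_
        by_cases h : i ≤ N
        · simpa [hr, h] using continuous_apply i
        · simpa [hr, h] using continuous_const
      have hrO : ∀ N z, r N z ∈ O N ↔ z ∈ O N := by
        intro N z
        have hag : ∀ i ≤ N, (r N z) i = z i := fun i hi => by simp [hr, hi]
        exact ⟨fun h => hOdet N _ _ hag h,
          fun h => hOdet N _ _ (fun i hi => (hag i hi).symm) h⟩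
      refine ⟨fun N z => ψ N (r N z), ?_, ?_⟩
      · intro N
        refine ⟨(hψc N).comp (hrc N), ⟨N, fun x y hxy => ?_⟩,
          fun z => hψI N (r N z)⟩
        have : r N x = r N y := by
          funext i
          by_cases h : i ≤ N
          · simp [hr, h, hxy i h]
          · simp [hr, h]
        show ψ N (r N x) = ψ N (r N y)
        rw [this]
      · refine key_sum S G _ (fun N z => hψI N (r N z)) ?_
        intro x hx
        have hxV : (x : ∀ n, X n) ∈ V := by
          rw [← hVeq] at hx; exact hx
        obtain ⟨N, hN⟩ := Set.mem_iUnion.mp (hVcov hxV)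
        refine ⟨N, ?_, ?_⟩
        · exact (hψmem N _).1 ((hrO N _).2 hN)
        · intro y hy
          have : (y : ∀ n, X n) ∈ O N := (hrO N _).1 ((hψmem N _).2 hy)
          have : (y : ∀ n, X n) ∈ V := hOV N this
          rw [← hVeq]; exact this
    · -- empty product: everything is trivial
      refine ⟨fun _ _ => 0, htriv, ?_⟩
      intro x _
      exact absurd ⟨(x : ∀ n, X n)⟩ hne
  · -- Lindelöf case
    rcases Set.eq_empty_or_nonempty G with hGe | ⟨x0, hx0⟩
    · refine ⟨fun _ _ => 0, htriv, ?_⟩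
      intro x hx
      rw [hGe] at hx
      exact absurd hx (Set.notMem_empty x)
    · have hbox : ∀ w : G, ∃ g : (∀ n, X n) → ℝ, Continuous g ∧ FinDet g ∧
          (∀ z, g z ∈ Set.Icc (0:ℝ) 1) ∧ g ((w : S) : ∀ n, X n) = 1 ∧
          ∀ z, 0 < g z → z ∈ V := by
        intro w
        have : ((w : S) : ∀ n, X n) ∈ V := by
          have h2 : (w : S) ∈ Subtype.val ⁻¹' V := by rw [hVeq]; exact w.2
          exact h2
        exact exists_box_fun hVopen this
      choose g hgc hgd hgI hg1 hgV using hbox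
      -- open cover of the closed pieces of `G`
      set U : G → Set S := fun w => {s : S | 0 < g w (s : ∀ n, X n)} with hUdef
      have hUopen : ∀ w, IsOpen (U w) :=
        fun w => isOpen_lt continuous_const ((hgc w).comp continuous_subtype_val)
      set F : ℕ → Set S := fun k => {s : S | 1/((k:ℝ)+1) ≤ |φ s|} with hF
      have hFG : ∀ k, F k ⊆ G := by
        intro k s hs
        have hφs : φ s ≠ 0 := by
          intro h
          have hle : (1:ℝ)/((k:ℝ)+1) ≤ |φ s| := hs
          rw [h, abs_zero] at hle
          have : (0:ℝ) < 1/((k:ℝ)+1) := by positivity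
          linarith
        by_contra hsG
        have : s ∈ Gᶜ := hsG
        rw [hφe] at this
        exact hφs this
      have hFcl : ∀ k, IsClosed (F k) := by
        intro k
        exact isClosed_le continuous_const hφc.abs
      have hFcov : ∀ k, F k ⊆ ⋃ w : G, U w := by
        intro k s hs
        refine Set.mem_iUnion.2 ⟨⟨s, hFG k hs⟩, ?_⟩
        simp only [hUdef, Set.mem_setOf_eq]
        rw [hg1 ⟨s, hFG k hs⟩]
        exact one_pos
      have hsub : ∀ k, ∃ t : Set G, t.Countable ∧ F k ⊆ ⋃ w ∈ t, U w := by
        intro k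
        exact ((hFcl k).isLindelof).elim_countable_subcover U hUopen (hFcov k)
      choose t htc htcov using hsub
      set T : Set G := insert ⟨x0, hx0⟩ (⋃ k, t k) with hT
      have hTc : T.Countable := (Set.countable_iUnion htc).insert _
      obtain ⟨e, he⟩ := hTc.exists_eq_range ⟨_, Set.mem_insert _ _⟩
      refine ⟨fun n => g (e n), fun n => ⟨hgc (e n), hgd (e n), hgI (e n)⟩, ?_⟩
      refine key_sum S G _ (fun n z => hgI (e n) z) ?_
      intro x hx
      have hφx : φ x ≠ 0 := by
        intro h
        have : x ∈ Gᶜ := by rw [hφe]; exact h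
        exact this hx
      obtain ⟨k, hk⟩ := exists_nat_one_div_lt (abs_pos.2 hφx)
      have hxF : x ∈ F k := le_of_lt hk
      obtain ⟨w, hw, hxU⟩ := Set.mem_iUnion₂.mp (htcov k hxF)
      have hwT : w ∈ T := Set.mem_insert_of_mem _ (Set.mem_iUnion.2 ⟨k, hw⟩)
      rw [he] at hwT
      obtain ⟨n, hn⟩ := hwT
      refine ⟨n, ?_, ?_⟩
      · rw [hn]
        exact hxU
      · intro y hy
        have : (y : ∀ n, X n) ∈ V := hgV (e n) _ hy
        rw [← hVeq]
        exact this
end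

section
/- Let P = ∏_{n=1}^∞ X_n be a product of a sequence of completely regular (Tychonoff) spaces, let X ⊆ P be a subspace such that either P is perfectly normal or X is Lindelöf, and let A ⊆ X be simultaneously a functionally F_σ-set and a functionally G_δ-set in X. Then the characteristic function χ_A : X → [0,1] is the pointwise limit of a sequence of functions from CF(X,[0,1]). -/
open Filter Topology

open Set in
lemma zeroSet_of_closed_gdelta {P : Type*} [TopologicalSpace P] [NormalSpace P]
    {C : Set P} (hC : IsClosed C) (hGd : IsGδ C) :
    ∃ φ : P → ℝ, Continuous φ ∧ (∀ x, 0 ≤ φ x) ∧ C = φ ⁻¹' {0} := by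
  obtain ⟨V, hVopen, hCV⟩ := hGd.eq_iInter_nat
  have hsub : ∀ n, C ⊆ V n := fun n => hCV ▸ Set.iInter_subset V n
  have hd : ∀ n, Disjoint C (V n)ᶜ := fun n =>
    Set.disjoint_left.mpr fun x hx hxc => hxc (hsub n hx)
  choose f hf0 hf1 hf01 using fun n =>
    exists_continuous_zero_one_of_isClosed hC (hVopen n).isClosed_compl (hd n)
  have hbd : ∀ n (x : P), ‖(2⁻¹ : ℝ) ^ n * f n x‖ ≤ (2⁻¹ : ℝ) ^ n := by
    intro n x
    have h1 := (hf01 n x).1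
    have h2 := (hf01 n x).2
    rw [Real.norm_eq_abs, abs_mul, abs_pow]
    rw [abs_of_nonneg (by norm_num : (0:ℝ) ≤ 2⁻¹), abs_of_nonneg h1]
    nlinarith [pow_pos (by norm_num : (0:ℝ) < 2⁻¹) n]
  have hgeom : Summable (fun n : ℕ => (2⁻¹ : ℝ) ^ n) :=
    summable_geometric_of_lt_one (by norm_num) (by norm_num)
  have hsumm : ∀ x : P, Summable (fun n : ℕ => (2⁻¹ : ℝ) ^ n * f n x) := by
    intro x
    refine Summable.of_nonneg_of_le (fun n => ?_) (fun n => ?_) hgeom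
    · exact mul_nonneg (by positivity) (hf01 n x).1
    · have := hbd n x; rwa [Real.norm_eq_abs, abs_of_nonneg (mul_nonneg (by positivity) (hf01 n x).1)] at this
  refine ⟨fun x => ∑' n, (2⁻¹ : ℝ) ^ n * f n x, ?_, ?_, ?_⟩
  · exact continuous_tsum (fun n => continuous_const.mul (f n).continuous) hgeom hbd
  · intro x
    exact tsum_nonneg fun n => mul_nonneg (by positivity) (hf01 n x).1
  · ext x
    simp only [Set.mem_preimage, Set.mem_singleton_iff]
    constructor
    · intro hx
      have : (fun n : ℕ => (2⁻¹ : ℝ) ^ n * f n x) = fun _ => 0 := by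
        funext n
        rw [hf0 n hx]
        simp
    
      rw [this, tsum_zero]
    · intro hx
      by_contra hxC
      have hm : ∃ m, x ∉ V m := by
        by_contra h
        push_neg at h
        exact hxC (hCV ▸ Set.mem_iInter.mpr h)
      obtain ⟨m, hm⟩ := hm
      have hfm : f m x = 1 := hf1 m hm
      have hpos : 0 < ∑' n, (2⁻¹ : ℝ) ^ n * f n x := by
        refine Summable.tsum_pos (hsumm x) (fun n => mul_nonneg (by positivity) (hf01 n x).1) m ?_
        rw [hfm]
        positivity
      exact hpos.ne' hx


open Set in
lemma exists_lam {X : ℕ → Type*} [∀ n, TopologicalSpace (X n)] [∀ n, T35Space (X n)]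
    (S : Set (∀ n, X n))
    (hPX : PerfectlyNormalSpace (∀ n, X n) ∨ LindelofSpace S)
    {U : Set S} (hU : FunctionallyOpen U) :
    ∃ lam : ℕ → S → ℝ,
      (∀ k, Continuous (lam k) ∧ FinDetOn S (lam k) ∧ (∀ x, 0 ≤ lam k x) ∧
        (∀ x, 0 < lam k x → x ∈ U)) ∧
      (∀ x ∈ U, ∃ k, 0 < lam k x) := by
  classical
  obtain ⟨φ, hφc, hφe⟩ := hU
  have hUmem : ∀ x : S, x ∈ U ↔ φ x ≠ 0 := by
    intro x
    constructor
    · intro hx hx0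
      have : x ∈ Uᶜ := hφe ▸ hx0
      exact this hx
    · intro hx
      by_contra h
      exact hx (by have : x ∈ Uᶜ := h; rw [hφe] at this; exact this)
  have hUopen : IsOpen U := by
    rw [← isClosed_compl_iff, hφe]
    exact isClosed_singleton.preimage hφc
  obtain ⟨U', hU'open, hU'pre⟩ := isOpen_induced_iff.mp hUopen
  rcases hPX with hPN | hL
  · -- perfectly normal case
    haveI := hPN
    by_cases hne : Nonempty (∀ n, X n)
    · obtain ⟨q⟩ := hne
      set V : ℕ → Set (∀ n, X n) := fun N =>
        ⋃₀ {O | IsOpen O ∧ O ⊆ U' ∧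
          ∀ z w : (∀ n, X n), (∀ i ≤ N, z i = w i) → (z ∈ O ↔ w ∈ O)} with hV
      have hVopen : ∀ N, IsOpen (V N) := fun N => isOpen_sUnion fun O hO => hO.1
      have hVsub : ∀ N, V N ⊆ U' := fun N => Set.sUnion_subset fun O hO => hO.2.1
      have hVcyl : ∀ N (z w : ∀ n, X n), (∀ i ≤ N, z i = w i) → (z ∈ V N ↔ w ∈ V N) := by
        intro N z w h
        constructor
        · rintro ⟨O, hO, hz⟩
          exact ⟨O, hO, (hO.2.2 z w h).mp hz⟩
        · rintro ⟨O, hO, hw⟩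
          exact ⟨O, hO, (hO.2.2 z w h).mpr hw⟩
      have hcover : ∀ p ∈ U', ∃ N, p ∈ V N := by
        intro p hp
        obtain ⟨I, u, hu, hsub⟩ := isOpen_pi_iff.mp hU'open p hp
        refine ⟨I.sup id, ?_⟩
        refine ⟨(I : Set ℕ).pi u, ⟨isOpen_set_pi I.finite_toSet (fun a ha => (hu a ha).1),
          hsub, ?_⟩, ?_⟩
        · intro z w h
          constructor
          · intro hz a ha
            rw [← h a (Finset.le_sup (f := id) ha)]
            exact hz a ha
          · intro hw a ha
            rw [h a (Finset.le_sup (f := id) ha)]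
            exact hw a ha
        · exact fun a ha => (hu a ha).2
      have hΦ : ∀ N, ∃ Φ : (∀ n, X n) → ℝ, Continuous Φ ∧ (∀ p, 0 ≤ Φ p) ∧
          (V N)ᶜ = Φ ⁻¹' {0} :=
        fun N => zeroSet_of_closed_gdelta (hVopen N).isClosed_compl
          (PerfectlyNormalSpace.closed_gdelta (hVopen N).isClosed_compl)
      choose Φ hΦc hΦnn hΦe using hΦ
      have hΦV : ∀ N p, p ∈ V N ↔ Φ N p ≠ 0 := by
        intro N p
        constructor
        · intro hp h0
          have : p ∈ (V N)ᶜ := (hΦe N) ▸ h0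
          exact this hp
        · intro h
          by_contra hp
          have : p ∈ (V N)ᶜ := hp
          rw [hΦe N] at this
          exact h this
      set r : ℕ → (∀ n, X n) → (∀ n, X n) := fun N p i => if i ≤ N then p i else q i with hr
      have hrc : ∀ N, Continuous (r N) := by
        intro N
        apply continuous_pi
        intro i
        by_cases h : i ≤ N
        · simp only [hr, if_pos h]
          exact continuous_apply i
        · simp only [hr, if_neg h]
          exact continuous_const
      have hragree : ∀ N p, ∀ i ≤ N, r N p i = p i := by
        intro N p i hi
        simp only [hr, if_pos hi]
      have hrV : ∀ N p, r N p ∈ V N ↔ p ∈ V N :=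
        fun N p => hVcyl N (r N p) p (fun i hi => hragree N p i hi)
      refine ⟨fun N x => Φ N (r N x.1), fun N => ⟨?_, ?_, ?_, ?_⟩, ?_⟩
      · exact (hΦc N).comp ((hrc N).comp continuous_subtype_val)
      · refine ⟨N, fun x y h => ?_⟩
        have hreq : r N x.1 = r N y.1 := by
          funext i
          by_cases hi : i ≤ N
          · simp only [hr, if_pos hi]
            exact h i hi
          · simp only [hr, if_neg hi]
        show Φ N (r N x.1) = Φ N (r N y.1)
        rw [hreq]
      · exact fun x => hΦnn N _
      · intro x hx
        have : r N x.1 ∈ V N := (hΦV N _).mpr hx.ne'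
        have hxV : x.1 ∈ V N := (hrV N x.1).mp this
        rw [← hU'pre]
        exact hVsub N hxV
      · intro x hx
        have hx' : x.1 ∈ U' := by rw [← hU'pre] at hx; exact hx
        obtain ⟨N, hN⟩ := hcover x.1 hx'
        refine ⟨N, ?_⟩
        have : r N x.1 ∈ V N := (hrV N x.1).mpr hN
        exact lt_of_le_of_ne (hΦnn N _) (Ne.symm ((hΦV N _).mp this))
    · refine ⟨fun _ _ => 0, fun k => ⟨continuous_const, ⟨0, fun _ _ _ => rfl⟩,
        fun _ => le_refl 0, fun x h => absurd h (lt_irrefl 0)⟩, fun x _ => (hne ⟨x.1⟩).elim⟩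
  · -- Lindelöf case
    haveI := hL
    have hgex : ∀ xu : {x : S // x ∈ U}, ∃ g : S → ℝ, Continuous g ∧ FinDetOn S g ∧
        (∀ y, 0 ≤ g y) ∧ (∀ y, 0 < g y → y ∈ U) ∧ 0 < g xu.1 := by
      intro xu
      have hx' : (xu.1 : ∀ n, X n) ∈ U' := by
        have h2 : (xu.1 : S) ∈ Subtype.val ⁻¹' U' := by
          rw [hU'pre]; exact xu.2
        exact h2
      obtain ⟨I, u, hu, hsub⟩ := isOpen_pi_iff.mp hU'open xu.1.1 hx'
      have hsep : ∀ i : {i // i ∈ I}, ∃ f : X i.1 → unitInterval, Continuous f ∧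
          f ((xu.1 : ∀ n, X n) i.1) = 0 ∧ Set.EqOn f 1 (u i.1)ᶜ := by
        intro i
        exact CompletelyRegularSpace.completely_regular _ _ (hu i.1 i.2).1.isClosed_compl
          (fun h => h (hu i.1 i.2).2)
      choose f hfc hf0 hf1 using hsep
      refine ⟨fun y => ∏ i ∈ I.attach, (1 - (f i ((y : ∀ n, X n) i.1) : ℝ)), ?_, ?_, ?_, ?_, ?_⟩
      · apply continuous_finset_prod
        intro i _
        exact continuous_const.sub (continuous_subtype_val.comp ((hfc i).comp
          ((continuous_apply i.1).comp continuous_subtype_val)))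
      · refine ⟨I.sup id, fun y z h => ?_⟩
        refine Finset.prod_congr rfl fun i _ => ?_
        rw [h i.1 (Finset.le_sup (f := id) i.2)]
      · intro y
        apply Finset.prod_nonneg
        intro i _
        have := (f i ((y : ∀ n, X n) i.1)).2.2
        linarith
      · intro y hy
        have hne : ∀ i ∈ I.attach, (1 - (f i ((y : ∀ n, X n) i.1) : ℝ)) ≠ 0 :=
          Finset.prod_ne_zero_iff.mp hy.ne'
        have hmem : (y : ∀ n, X n) ∈ (I : Set ℕ).pi u := by
          intro a ha
          by_contra hcon
          have h1 : f ⟨a, ha⟩ ((y : ∀ n, X n) a) = 1 := hf1 ⟨a, ha⟩ hcon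
          have := hne ⟨a, ha⟩ (Finset.mem_attach _ _)
          rw [h1] at this
          simp at this
        rw [← hU'pre]
        exact hsub hmem
      · apply Finset.prod_pos
        intro i _
        rw [hf0 i]
        norm_num
    choose g hgc hgfd hgnn hgU hgpos using hgex
    set C : ℕ → Set S := fun m => {y : S | 1 / ((m : ℝ) + 1) ≤ |φ y|} with hC
    have hCclosed : ∀ m, IsClosed (C m) :=
      fun m => isClosed_Ici.preimage (hφc.abs)
    have hCU : ∀ m, C m ⊆ U := by
      intro m y hy
      rw [hUmem]
      intro h0
      have habs : |φ y| = 0 := by rw [h0]; simp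
      simp only [hC, Set.mem_setOf_eq] at hy
      rw [habs] at hy
      have : (0:ℝ) < 1 / ((m:ℝ)+1) := by positivity
      linarith
    have hUC : ∀ x ∈ U, ∃ m, x ∈ C m := by
      intro x hx
      have : φ x ≠ 0 := (hUmem x).mp hx
      have habs : 0 < |φ x| := abs_pos.mpr this
      obtain ⟨m, hm⟩ := exists_nat_one_div_lt habs
      exact ⟨m, le_of_lt hm⟩
    have hLin : ∀ m, IsLindelof (C m) :=
      fun m => isLindelof_univ.of_isClosed_subset (hCclosed m) (Set.subset_univ _)
    have hsubcov : ∀ m, ∃ rr : Set {x : S // x ∈ U}, rr.Countable ∧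
        C m ⊆ ⋃ xu ∈ rr, {y : S | 0 < g xu y} := by
      intro m
      apply (hLin m).elim_countable_subcover
      · intro xu
        exact isOpen_lt continuous_const (hgc xu)
      · intro y hy
        have hyU : y ∈ U := hCU m hy
        exact Set.mem_iUnion.mpr ⟨⟨y, hyU⟩, hgpos ⟨y, hyU⟩⟩
    choose rr hrrc hrrcov using hsubcov
    set T : ℕ → Set (S → ℝ) := fun m => (fun xu => g xu) '' (rr m) ∪ {fun _ => 0} with hT
    have hTc : ∀ m, (T m).Countable := fun m =>
      (((hrrc m).image _).union (Set.countable_singleton _))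
    have hTne : ∀ m, (T m).Nonempty := fun m => ⟨fun _ => 0, Or.inr rfl⟩
    have := fun m => (hTc m).exists_eq_range (hTne m)
    choose e he using this
    refine ⟨fun k => e k.unpair.1 k.unpair.2, ?_, ?_⟩
    · intro k
      have hmem : e k.unpair.1 k.unpair.2 ∈ T k.unpair.1 := by
        rw [he k.unpair.1]
        exact Set.mem_range_self _
      show Continuous (e k.unpair.1 k.unpair.2) ∧ FinDetOn S (e k.unpair.1 k.unpair.2) ∧
        (∀ x, 0 ≤ e k.unpair.1 k.unpair.2 x) ∧ (∀ x, 0 < e k.unpair.1 k.unpair.2 x → x ∈ U)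
      rcases hmem with ⟨xu, _, heq⟩ | h0
      · rw [← heq]
        exact ⟨hgc xu, hgfd xu, hgnn xu, hgU xu⟩
      · simp only [Set.mem_singleton_iff] at h0
        rw [h0]
        exact ⟨continuous_const, ⟨0, fun _ _ _ => rfl⟩, fun _ => le_refl 0,
          fun x h => absurd h (lt_irrefl 0)⟩
    · intro x hx
      obtain ⟨m, hm⟩ := hUC x hx
      have := hrrcov m hm
      obtain ⟨xu, hxu, hpos⟩ := Set.mem_iUnion₂.mp this
      have hgT : g xu ∈ T m := Or.inl ⟨xu, hxu, rfl⟩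
      rw [he m] at hgT
      obtain ⟨j, hj⟩ := hgT
      refine ⟨Nat.pair m j, ?_⟩
      show 0 < e (Nat.pair m j).unpair.1 (Nat.pair m j).unpair.2 x
      simp only [Nat.unpair_pair]
      rw [hj]
      exact hpos


lemma funOpen_biInter {Z : Type*} [TopologicalSpace Z] {U : ℕ → Set Z}
    (h : ∀ m, FunctionallyOpen (U m)) (s : Finset ℕ) :
    FunctionallyOpen (⋂ m ∈ s, U m) := by
  choose ψ hψc hψe using h
  refine ⟨fun x => ∏ m ∈ s, ψ m x, continuous_finset_prod _ (fun m _ => hψc m), ?_⟩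
  ext x
  have key : ∀ m, x ∈ (U m)ᶜ ↔ ψ m x = 0 := fun m => Set.ext_iff.mp (hψe m) x
  constructor
  · intro hx
    rw [Set.mem_compl_iff, Set.mem_iInter₂] at hx
    push_neg at hx
    obtain ⟨m, hms, hxU⟩ := hx
    exact Finset.prod_eq_zero hms ((key m).mp hxU)
  · intro hx
    rw [Set.mem_preimage, Set.mem_singleton_iff] at hx
    obtain ⟨m, hms, hψ0⟩ := Finset.prod_eq_zero_iff.mp hx
    rw [Set.mem_compl_iff, Set.mem_iInter₂]
    push_neg
    exact ⟨m, hms, (key m).mpr hψ0⟩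

/-- Let `P = ∏ₙ Xₙ` be a product of Tychonoff spaces, `X ⊆ P` a subspace such
that `P` is perfectly normal or `X` is Lindelöf, and let `A ⊆ X` be simultaneously a
functionally F_σ-set and a functionally G_δ-set in `X`.  Then `χ_A` is the pointwise limit of
a sequence of continuous finitely determined functions `X → [0,1]`. -/
theorem stmt7 {X : ℕ → Type*} [∀ n, TopologicalSpace (X n)] [∀ n, T35Space (X n)]
    (S : Set (∀ n, X n))
    (hPX : PerfectlyNormalSpace (∀ n, X n) ∨ LindelofSpace S)
    (A : Set S)
    (hFsig : ∃ F : ℕ → Set S, (∀ n, FunctionallyClosed (F n)) ∧ A = ⋃ n, F n)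
    (hGdel : ∃ U : ℕ → Set S, (∀ n, FunctionallyOpen (U n)) ∧ A = ⋂ n, U n) :
    ∃ f : ℕ → S → ℝ,
      (∀ n, Continuous (f n) ∧ FinDetOn S (f n) ∧ ∀ x, f n x ∈ Set.Icc (0 : ℝ) 1) ∧
      ∀ x : S, Tendsto (fun n => f n x) atTop (𝓝 (A.indicator (fun _ => (1 : ℝ)) x)) := by
  classical
  obtain ⟨Fs, hFs, hAF⟩ := hFsig
  obtain ⟨Us, hUs, hAU⟩ := hGdel
  have hGfo : ∀ n, FunctionallyOpen (⋂ m ∈ Finset.range (n+1), Us m) :=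
    fun n => funOpen_biInter hUs _
  have hFoc : ∀ m, FunctionallyOpen (Fs m)ᶜ := by
    intro m
    unfold FunctionallyOpen
    rw [compl_compl]
    exact hFs m
  have hHfo : ∀ n, FunctionallyOpen (⋂ m ∈ Finset.range (n+1), (Fs m)ᶜ) :=
    fun n => funOpen_biInter hFoc _
  choose lam hlamP hlamCov using fun n => exists_lam S hPX (hGfo n)
  choose mu hmuP hmuCov using fun n => exists_lam S hPX (hHfo n)
  -- basic facts
  have hAsubG : ∀ n, ∀ x ∈ A, x ∈ ⋂ m ∈ Finset.range (n+1), Us m := by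
    intro n x hx
    have hx' : x ∈ ⋂ k, Us k := by rw [← hAU]; exact hx
    exact Set.mem_iInter₂.mpr fun m _ => Set.mem_iInter.mp hx' m
  have hAcsubH : ∀ n, ∀ x, x ∉ A → x ∈ ⋂ m ∈ Finset.range (n+1), (Fs m)ᶜ := by
    intro n x hx
    refine Set.mem_iInter₂.mpr fun m _ => fun hxF => hx ?_
    rw [hAF]
    exact Set.mem_iUnion.mpr ⟨m, hxF⟩
  have hnotA : ∀ x, x ∉ A → ∃ m₁, ∀ n, m₁ ≤ n → ∀ k, lam n k x = 0 := by
    intro x hx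
    have : ¬ ∀ m, x ∈ Us m := fun h => hx (by rw [hAU]; exact Set.mem_iInter.mpr h)
    push_neg at this
    obtain ⟨m₁, hm₁⟩ := this
    refine ⟨m₁, fun n hn k => ?_⟩
    have hxG : x ∉ ⋂ m ∈ Finset.range (n+1), Us m := fun h =>
      hm₁ (Set.mem_iInter₂.mp h m₁ (Finset.mem_range.mpr (Nat.lt_succ_of_le hn)))
    exact le_antisymm (not_lt.mp fun hpos => hxG ((hlamP n k).2.2.2 x hpos))
      ((hlamP n k).2.2.1 x)
  have hinA : ∀ x, x ∈ A → ∃ m₀, ∀ n, m₀ ≤ n → ∀ k, mu n k x = 0 := by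
    intro x hx
    have hx' : x ∈ ⋃ m, Fs m := by rw [← hAF]; exact hx
    obtain ⟨m₀, hm₀⟩ := Set.mem_iUnion.mp hx'
    refine ⟨m₀, fun n hn k => ?_⟩
    have hxH : x ∉ ⋂ m ∈ Finset.range (n+1), (Fs m)ᶜ := fun h =>
      (Set.mem_iInter₂.mp h m₀ (Finset.mem_range.mpr (Nat.lt_succ_of_le hn))) hm₀
    exact le_antisymm (not_lt.mp fun hpos => hxH ((hmuP n k).2.2.2 x hpos))
      ((hmuP n k).2.2.1 x)
  -- the approximating sequence
  refine ⟨fun j x => min 1 (∑ n ∈ Finset.range (j+1),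
      (min 1 (((j:ℝ)+1) * ∑ k ∈ Finset.range (j+1), lam n k x)) *
      (1 - min 1 (((j:ℝ)+1) * ∑ p ∈ Finset.Icc n j, ∑ k ∈ Finset.range (j+1), mu p k x))),
    ?_, ?_⟩
  · intro j
    refine ⟨?_, ?_, ?_⟩
    · apply continuous_const.min
      apply continuous_finset_sum
      intro n _
      apply Continuous.mul
      · exact continuous_const.min (continuous_const.mul
          (continuous_finset_sum _ fun k _ => (hlamP n k).1))
      · exact continuous_const.sub (continuous_const.min (continuous_const.mul
          (continuous_finset_sum _ fun p _ => continuous_finset_sum _ fun k _ => (hmuP p k).1)))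
    · choose Nlam hNlam using fun n k => (hlamP n k).2.1
      choose Nmu hNmu using fun n k => (hmuP n k).2.1
      refine ⟨((Finset.range (j+1)).sup fun n => (Finset.range (j+1)).sup fun k => Nlam n k) ⊔
              ((Finset.range (j+1)).sup fun p => (Finset.range (j+1)).sup fun k => Nmu p k),
        fun x y h => ?_⟩
      have hlam_eq : ∀ n ∈ Finset.range (j+1), ∀ k ∈ Finset.range (j+1),
          lam n k x = lam n k y := by
        intro n hn k hk
        refine hNlam n k x y fun i hi => h i (le_trans hi (le_trans (le_trans
          (Finset.le_sup (f := fun k => Nlam n k) hk)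
          (Finset.le_sup (f := fun n => (Finset.range (j+1)).sup fun k => Nlam n k) hn))
          le_sup_left))
      have hmu_eq : ∀ p ∈ Finset.range (j+1), ∀ k ∈ Finset.range (j+1),
          mu p k x = mu p k y := by
        intro p hp k hk
        refine hNmu p k x y fun i hi => h i (le_trans hi (le_trans (le_trans
          (Finset.le_sup (f := fun k => Nmu p k) hk)
          (Finset.le_sup (f := fun p => (Finset.range (j+1)).sup fun k => Nmu p k) hp))
          le_sup_right))
      show min 1 _ = min 1 _
      congr 1
      refine Finset.sum_congr rfl fun n hn => ?_
      have e1 : ∑ k ∈ Finset.range (j+1), lam n k x = ∑ k ∈ Finset.range (j+1), lam n k y :=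
        Finset.sum_congr rfl fun k hk => hlam_eq n hn k hk
      have e2 : ∑ p ∈ Finset.Icc n j, ∑ k ∈ Finset.range (j+1), mu p k x =
          ∑ p ∈ Finset.Icc n j, ∑ k ∈ Finset.range (j+1), mu p k y :=
        Finset.sum_congr rfl fun p hp => Finset.sum_congr rfl fun k hk =>
          hmu_eq p (Finset.mem_range.mpr (Nat.lt_succ_of_le (Finset.mem_Icc.mp hp).2)) k hk
      rw [e1, e2]
    · intro x
      constructor
      · refine le_min zero_le_one (Finset.sum_nonneg fun n _ => mul_nonneg ?_ ?_)
        · exact le_min zero_le_one (mul_nonneg (by positivity)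
            (Finset.sum_nonneg fun k _ => (hlamP n k).2.2.1 x))
        · exact sub_nonneg.mpr (min_le_left _ _)
      · exact min_le_left _ _
  · intro x
    by_cases hx : x ∈ A
    · rw [Set.indicator_of_mem hx]
      obtain ⟨m₀, hm₀⟩ := hinA x hx
      obtain ⟨k₀, hk₀⟩ := hlamCov m₀ x (hAsubG m₀ x hx)
      obtain ⟨J, hJ⟩ : ∃ J : ℕ, 1 ≤ ((J:ℝ)+1) * lam m₀ k₀ x := by
        obtain ⟨J, hJ⟩ := exists_nat_ge (1 / lam m₀ k₀ x)
        refine ⟨J, ?_⟩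
        rw [div_le_iff₀ hk₀] at hJ
        nlinarith [hk₀]
      refine Filter.Tendsto.congr' ?_ tendsto_const_nhds
      rw [Filter.EventuallyEq, eventually_atTop]
      refine ⟨m₀ ⊔ k₀ ⊔ J, fun j hj => ?_⟩
      have hjm₀ : m₀ ≤ j := le_trans (le_trans le_sup_left le_sup_left) hj
      have hjk₀ : k₀ ≤ j := le_trans (le_trans le_sup_right le_sup_left) hj
      have hjJ : J ≤ j := le_trans le_sup_right hj
      have hterm : (min 1 (((j:ℝ)+1) * ∑ k ∈ Finset.range (j+1), lam m₀ k x)) *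
          (1 - min 1 (((j:ℝ)+1) * ∑ p ∈ Finset.Icc m₀ j, ∑ k ∈ Finset.range (j+1), mu p k x))
          = 1 := by
        have h2 : ∑ p ∈ Finset.Icc m₀ j, ∑ k ∈ Finset.range (j+1), mu p k x = 0 :=
          Finset.sum_eq_zero fun p hp => Finset.sum_eq_zero fun k _ =>
            hm₀ p (Finset.mem_Icc.mp hp).1 k
        have h1 : 1 ≤ ((j:ℝ)+1) * ∑ k ∈ Finset.range (j+1), lam m₀ k x := by
          have hsum : lam m₀ k₀ x ≤ ∑ k ∈ Finset.range (j+1), lam m₀ k x :=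
            Finset.single_le_sum (fun k _ => (hlamP m₀ k).2.2.1 x)
              (Finset.mem_range.mpr (Nat.lt_succ_of_le hjk₀))
          have hJj : ((J:ℝ)+1) ≤ ((j:ℝ)+1) := by
            have : (J:ℝ) ≤ (j:ℝ) := Nat.cast_le.mpr hjJ
            linarith
          calc (1:ℝ) ≤ ((J:ℝ)+1) * lam m₀ k₀ x := hJ
            _ ≤ ((j:ℝ)+1) * lam m₀ k₀ x := mul_le_mul_of_nonneg_right hJj (le_of_lt hk₀)
            _ ≤ ((j:ℝ)+1) * ∑ k ∈ Finset.range (j+1), lam m₀ k x :=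
                mul_le_mul_of_nonneg_left hsum (by positivity)
        rw [h2, mul_zero, min_eq_left h1, min_eq_right zero_le_one]
        norm_num
      have htermnn : ∀ n ∈ Finset.range (j+1),
          0 ≤ (min 1 (((j:ℝ)+1) * ∑ k ∈ Finset.range (j+1), lam n k x)) *
          (1 - min 1 (((j:ℝ)+1) * ∑ p ∈ Finset.Icc n j, ∑ k ∈ Finset.range (j+1), mu p k x)) := by
        intro n _
        refine mul_nonneg (le_min zero_le_one (mul_nonneg (by positivity)
          (Finset.sum_nonneg fun k _ => (hlamP n k).2.2.1 x)))
          (sub_nonneg.mpr (min_le_left _ _))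
      have hsum1 : 1 ≤ ∑ n ∈ Finset.range (j+1),
          (min 1 (((j:ℝ)+1) * ∑ k ∈ Finset.range (j+1), lam n k x)) *
          (1 - min 1 (((j:ℝ)+1) * ∑ p ∈ Finset.Icc n j, ∑ k ∈ Finset.range (j+1), mu p k x)) := by
        have h := Finset.single_le_sum htermnn (Finset.mem_range.mpr (Nat.lt_succ_of_le hjm₀))
        rw [hterm] at h
        exact h
      beta_reduce
      exact (min_eq_left hsum1).symm
    · rw [Set.indicator_of_notMem hx]
      obtain ⟨m₁, hm₁⟩ := hnotA x hx
      choose kk hkk using fun n => hmuCov n x (hAcsubH n x hx)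
      have hJJex : ∀ n, ∃ J : ℕ, 1 ≤ ((J:ℝ)+1) * mu n (kk n) x := by
        intro n
        obtain ⟨J, hJ⟩ := exists_nat_ge (1 / mu n (kk n) x)
        refine ⟨J, ?_⟩
        rw [div_le_iff₀ (hkk n)] at hJ
        nlinarith [hkk n]
      choose JJ hJJ using hJJex
      refine Filter.Tendsto.congr' ?_ tendsto_const_nhds
      rw [Filter.EventuallyEq, eventually_atTop]
      refine ⟨m₁ ⊔ (Finset.range m₁).sup (fun n => kk n ⊔ JJ n), fun j hj => ?_⟩
      have hjm₁ : m₁ ≤ j := le_trans le_sup_left hj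
      have hsum0 : ∑ n ∈ Finset.range (j+1),
          (min 1 (((j:ℝ)+1) * ∑ k ∈ Finset.range (j+1), lam n k x)) *
          (1 - min 1 (((j:ℝ)+1) * ∑ p ∈ Finset.Icc n j, ∑ k ∈ Finset.range (j+1), mu p k x))
          = 0 := by
        refine Finset.sum_eq_zero fun n hn => ?_
        by_cases hcase : m₁ ≤ n
        · have h0 : ∑ k ∈ Finset.range (j+1), lam n k x = 0 :=
            Finset.sum_eq_zero fun k _ => hm₁ n hcase k
          rw [h0, mul_zero, min_eq_right zero_le_one, zero_mul]
        · push_neg at hcase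
          have hmemr : n ∈ Finset.range m₁ := Finset.mem_range.mpr hcase
          have hkkj : kk n ≤ j :=
            le_trans (le_trans le_sup_left (Finset.le_sup (f := fun n => kk n ⊔ JJ n) hmemr))
              (le_trans le_sup_right hj)
          have hJJj : JJ n ≤ j :=
            le_trans (le_trans le_sup_right (Finset.le_sup (f := fun n => kk n ⊔ JJ n) hmemr))
              (le_trans le_sup_right hj)
          have hnj : n ≤ j := le_trans (le_of_lt hcase) hjm₁
          have hmon : mu n (kk n) x ≤
              ∑ p ∈ Finset.Icc n j, ∑ k ∈ Finset.range (j+1), mu p k x := by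
            calc mu n (kk n) x ≤ ∑ k ∈ Finset.range (j+1), mu n k x :=
                Finset.single_le_sum (fun k _ => (hmuP n k).2.2.1 x)
                  (Finset.mem_range.mpr (Nat.lt_succ_of_le hkkj))
              _ ≤ ∑ p ∈ Finset.Icc n j, ∑ k ∈ Finset.range (j+1), mu p k x :=
                Finset.single_le_sum
                  (fun p _ => Finset.sum_nonneg fun k _ => (hmuP p k).2.2.1 x)
                  (Finset.mem_Icc.mpr ⟨le_refl n, hnj⟩)
          have h1 : 1 ≤ ((j:ℝ)+1) *
              ∑ p ∈ Finset.Icc n j, ∑ k ∈ Finset.range (j+1), mu p k x := by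
            have hJj : ((JJ n:ℝ)+1) ≤ ((j:ℝ)+1) := by
              have : ((JJ n):ℝ) ≤ (j:ℝ) := Nat.cast_le.mpr hJJj
              linarith
            calc (1:ℝ) ≤ ((JJ n:ℝ)+1) * mu n (kk n) x := hJJ n
              _ ≤ ((j:ℝ)+1) * mu n (kk n) x :=
                  mul_le_mul_of_nonneg_right hJj (le_of_lt (hkk n))
              _ ≤ ((j:ℝ)+1) * ∑ p ∈ Finset.Icc n j, ∑ k ∈ Finset.range (j+1), mu p k x :=
                  mul_le_mul_of_nonneg_left hmon (by positivity)
          rw [min_eq_left h1, sub_self, mul_zero]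
      beta_reduce
      rw [hsum0]
      exact (min_eq_right zero_le_one).symm
end

section
/- Let P = ∏_{n=1}^∞ X_n be a product of a sequence of completely regular (Tychonoff) spaces and let X ⊆ P be a subspace such that either P is perfectly normal or X is Lindelöf. Then every function f : X → ℝ of the first Lebesgue class taking only finitely many values is the pointwise limit of a sequence of functions from CF(X). -/
open Filter Topology

open Set

namespace Stmt8Aux
set_option linter.unusedSectionVars false
variable {X : ℕ → Type*} [∀ n, TopologicalSpace (X n)]


lemma findet_const {S : Set (∀ n, X n)} {Y : Type*} (c : Y) : FinDetOn S (fun _ => c) :=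
  ⟨0, fun _ _ _ => rfl⟩

lemma findet_op2 {S : Set (∀ n, X n)} {Y : Type*} {f g : S → ℝ} (op : ℝ → ℝ → Y)
    (hf : FinDetOn S f) (hg : FinDetOn S g) : FinDetOn S (fun x => op (f x) (g x)) := by
  obtain ⟨N, hN⟩ := hf; obtain ⟨M, hM⟩ := hg
  refine ⟨max N M, fun x y h => ?_⟩
  simp only []
  rw [hN x y (fun i hi => h i (le_trans hi (le_max_left _ _))),
      hM x y (fun i hi => h i (le_trans hi (le_max_right _ _)))]

lemma findet_sum {S : Set (∀ n, X n)} {ι : Type*} (T : Finset ι) (G : ι → S → ℝ)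
    (h : ∀ c ∈ T, FinDetOn S (G c)) : FinDetOn S (fun x => ∑ c ∈ T, G c x) := by
  classical
  induction T using Finset.induction_on with
  | empty => simpa using findet_const (0:ℝ)
  | @insert a s ha ih =>
    simp only [Finset.sum_insert ha]
    exact findet_op2 (· + ·) (h a (Finset.mem_insert_self a s))
      (ih fun c hc => h c (Finset.mem_insert_of_mem hc))

/-- iterated max -/
def iterMax {α : Type*} (h : ℕ → α → ℝ) : ℕ → α → ℝ
  | 0 => h 0
  | (N+1) => fun x => max (iterMax h N x) (h (N+1) x)

lemma iterMax_continuous {α : Type*} [TopologicalSpace α] {h : ℕ → α → ℝ}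
    (hc : ∀ l, Continuous (h l)) (N : ℕ) : Continuous (iterMax h N) := by
  induction N with
  | zero => exact hc 0
  | succ n ih => exact ih.max (hc (n+1))

lemma iterMax_findet {S : Set (∀ n, X n)} {h : ℕ → S → ℝ}
    (hf : ∀ l, FinDetOn S (h l)) (N : ℕ) : FinDetOn S (iterMax h N) := by
  induction N with
  | zero => exact hf 0
  | succ n ih => exact findet_op2 max ih (hf (n+1))

lemma le_iterMax {α : Type*} {h : ℕ → α → ℝ} {l N : ℕ} (hl : l ≤ N) (x : α) :
    h l x ≤ iterMax h N x := by
  induction N with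
  | zero => simp_all [iterMax]
  | succ n ih =>
    rcases Nat.lt_succ_iff_lt_or_eq.mp (Nat.lt_succ_of_le hl) with h' | h'
    · exact le_trans (ih (Nat.lt_succ_iff.mp h')) (le_max_left _ _)
    · subst h'; exact le_max_right _ _

lemma iterMax_le {α : Type*} {h : ℕ → α → ℝ} {b : ℝ} {N : ℕ} {x : α}
    (hb : ∀ l ≤ N, h l x ≤ b) : iterMax h N x ≤ b := by
  induction N with
  | zero => exact hb 0 le_rfl
  | succ n ih =>
    exact max_le (ih fun l hl => hb l (le_trans hl (Nat.le_succ n))) (hb (n+1) le_rfl)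


/-- restriction to the first `l+1` coordinates -/
def resMap (l : ℕ) : (∀ n, X n) → (∀ i : Fin (l+1), X i) := fun y i => y i

lemma continuous_resMap (l : ℕ) : Continuous (resMap (X := X) l) :=
  continuous_pi fun _ => continuous_apply _

lemma findet_res {S : Set (∀ n, X n)} {Y : Type*} (l : ℕ) (ζ : (∀ i : Fin (l+1), X i) → Y) :
    FinDetOn S (fun x => ζ (resMap l x.val)) := by
  refine ⟨l, fun x y h => ?_⟩
  have : resMap l x.val = resMap l y.val :=
    funext fun i => h i.val (Nat.lt_succ_iff.mp i.isLt)
  simp only [this]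

/-- section of the restriction, with base point `a` -/
def secMap (a : ∀ n, X n) (l : ℕ) : (∀ i : Fin (l+1), X i) → (∀ n, X n) :=
  fun q n => if h : n < l + 1 then q ⟨n, h⟩ else a n

lemma continuous_secMap (a : ∀ n, X n) (l : ℕ) : Continuous (secMap (X := X) a l) := by
  refine continuous_pi fun n => ?_
  by_cases h : n < l + 1 <;> simp only [secMap, h, dif_pos, dif_neg, not_false_iff]
  · exact continuous_apply _
  · exact continuous_const

lemma res_sec (a : ∀ n, X n) (l : ℕ) (q : ∀ i : Fin (l+1), X i) :
    resMap l (secMap a l q) = q := by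
  funext i
  simp [resMap, secMap, i.isLt]

/-- key separation-at-a-finite-level lemma -/
lemma exists_level {S : Set (∀ n, X n)} (E : Set ↥S) (hE : IsClosed E) (x : ↥S) (hx : x ∉ E) :
    ∃ l : ℕ, resMap l x.val ∉ closure (resMap l '' (Subtype.val '' E)) := by
  classical
  have hEc : IsOpen (Eᶜ) := hE.isOpen_compl
  rw [isOpen_induced_iff] at hEc
  obtain ⟨U, hU, hUE⟩ := hEc
  have hxU : x.val ∈ U := by
    have : x ∈ (Subtype.val) ⁻¹' U := by rw [hUE]; exact hx
    exact this
  obtain ⟨I, u, hIu, hsub⟩ := isOpen_pi_iff.mp hU x.val hxU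
  refine ⟨I.sup id, ?_⟩
  set l := I.sup id with hl
  have hlt : ∀ i ∈ I, i < l + 1 := fun i hi =>
    Nat.lt_succ_of_le (Finset.le_sup (f := id) hi)
  -- the open neighbourhood in the finite product
  set g : ℕ → Set (∀ i : Fin (l+1), X i) := fun i =>
    if h : i ∈ I then (fun q => q ⟨i, hlt i h⟩) ⁻¹' (u i) else univ with hg
  have hgo : ∀ i, IsOpen (g i) := by
    intro i
    by_cases h : i ∈ I <;> simp only [hg, h, dif_pos, dif_neg, not_false_iff]
    · exact (hIu i h).1.preimage (continuous_apply (⟨i, hlt i h⟩ : Fin (l+1)))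
    · exact isOpen_univ
  have hVo : IsOpen (⋂ i ∈ I, g i) := isOpen_biInter_finset fun i _ => hgo i
  have hxV : resMap l x.val ∈ ⋂ i ∈ I, g i := by
    refine mem_iInter₂.mpr fun i hi => ?_
    simp only [hg, dif_pos hi, mem_preimage]
    exact (hIu i hi).2
  intro hcl
  rcases (mem_closure_iff.mp hcl) _ hVo hxV with ⟨q, hqV, hqE⟩
  obtain ⟨e, heE, rfl⟩ := hqE
  obtain ⟨ε, hεE, rfl⟩ := heE
  -- ε.val lies in the basic box, hence in U, contradiction
  have : ε.val ∈ (I : Set ℕ).pi u := by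
    intro i hi
    have hi' : i ∈ I := Finset.mem_coe.mp hi
    have h2 := mem_iInter₂.mp hqV i hi'
    simp only [hg, dif_pos hi', mem_preimage] at h2
    exact h2
  have hU' : ε ∈ (Subtype.val) ⁻¹' U := hsub this
  rw [hUE] at hU'
  exact hU' hεE

/-- in a normal space, a closed Gδ set is a zero set -/
lemma exists_zero_set {P : Type*} [TopologicalSpace P] [NormalSpace P]
    {K : Set P} (hK : IsClosed K) (hG : IsGδ K) :
    ∃ ζ : P → ℝ, Continuous ζ ∧ (∀ x, 0 ≤ ζ x) ∧ (∀ x, ζ x = 0 ↔ x ∈ K) := by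
  obtain ⟨U, hUo, hKU⟩ := isGδ_iff_eq_iInter_nat.mp hG
  have hsub : ∀ n, K ⊆ U n := fun n => hKU ▸ iInter_subset U n
  have hfn : ∀ n : ℕ, ∃ fn : C(P, ℝ), EqOn fn 0 K ∧ EqOn fn 1 (U n)ᶜ ∧
      ∀ x, fn x ∈ Icc (0:ℝ) 1 := fun n =>
    exists_continuous_zero_one_of_isClosed hK (hUo n).isClosed_compl
      (disjoint_left.mpr fun a ha hc => hc (hsub n ha))
  choose fn hfn0 hfn1 hfnI using hfn
  have hsummable : ∀ x : P, Summable fun n : ℕ => (1/2 : ℝ)^n * fn n x := by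
    intro x
    refine Summable.of_nonneg_of_le (fun n => ?_) (fun n => ?_)
      (summable_geometric_of_lt_one (by norm_num) (by norm_num) : Summable fun n : ℕ => (1/2:ℝ)^n)
    · exact mul_nonneg (by positivity) (hfnI n x).1
    · calc (1/2:ℝ)^n * fn n x ≤ (1/2:ℝ)^n * 1 := by
            exact mul_le_mul_of_nonneg_left (hfnI n x).2 (by positivity)
        _ = (1/2:ℝ)^n := mul_one _
  refine ⟨fun x => ∑' n, (1/2:ℝ)^n * fn n x, ?_, ?_, ?_⟩
  · refine continuous_tsum (fun n => continuous_const.mul (fn n).continuous)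
      (summable_geometric_of_lt_one (by norm_num) (by norm_num) : Summable fun n : ℕ => (1/2:ℝ)^n)
      (fun n x => ?_)
    rw [Real.norm_eq_abs, abs_mul, abs_of_nonneg (by positivity : (0:ℝ) ≤ (1/2:ℝ)^n),
      abs_of_nonneg (hfnI n x).1]
    calc (1/2:ℝ)^n * fn n x ≤ (1/2:ℝ)^n * 1 :=
          mul_le_mul_of_nonneg_left (hfnI n x).2 (by positivity)
      _ = (1/2:ℝ)^n := mul_one _
  · exact fun x => tsum_nonneg fun n => mul_nonneg (by positivity) (hfnI n x).1
  · intro x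
    constructor
    · intro h0
      by_contra hxK
      have : x ∉ ⋂ n, U n := by rwa [← hKU]
      obtain ⟨n, hn⟩ := by simpa [mem_iInter] using this
      have h1 : fn n x = 1 := hfn1 n hn
      have : (1/2:ℝ)^n * fn n x ≤ ∑' m, (1/2:ℝ)^m * fn m x :=
        Summable.le_tsum (hsummable x) n fun m _ => mul_nonneg (by positivity) (hfnI m x).1
      rw [h1, mul_one] at this
      simp only at h0
      rw [h0] at this
      have hpos : (0:ℝ) < (1/2:ℝ)^n := by positivity
      linarith
    · intro hxK
      have hz : ∀ n : ℕ, (1/2:ℝ)^n * fn n x = 0 := fun n => by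
        rw [show fn n x = 0 from hfn0 n hxK, mul_zero]
      have : ∑' n : ℕ, (1/2:ℝ)^n * fn n x = ∑' _ : ℕ, (0:ℝ) := tsum_congr hz
      simpa using this

variable [∀ n, T35Space (X n)]

/-- Main technical lemma: countable family of CF functions vanishing on `E`
and eventually ≥ 1/2 on `F`. -/
lemma lemA {S : Set (∀ n, X n)} (a : ∀ n, X n)
    (hPX : PerfectlyNormalSpace (∀ n, X n) ∨ LindelofSpace ↥S)
    (E F : Set ↥S) (hE : IsClosed E) (hF : IsClosed F) (hd : ∀ x ∈ F, x ∉ E) :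
    ∃ θ : ℕ → ↥S → ℝ, (∀ l, Continuous (θ l)) ∧ (∀ l, FinDetOn S (θ l)) ∧
      (∀ l x, θ l x ∈ Icc (0:ℝ) 1) ∧ (∀ l, ∀ x ∈ E, θ l x = 0) ∧
      (∀ x ∈ F, ∃ l, 1/2 ≤ θ l x) := by
  classical
  rcases hPX with hPN | hL
  · -- perfectly normal case
    haveI : PerfectlyNormalSpace (∀ n, X n) := hPN
    -- for each level l, a CF function whose zero set is the closure of the saturation of E
    have key : ∀ l : ℕ, ∃ ζ : (∀ n, X n) → ℝ, Continuous ζ ∧ (∀ y, 0 ≤ ζ y) ∧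
        (∀ y, ζ y = 0 ↔ y ∈ closure (resMap l ⁻¹' (resMap l '' (Subtype.val '' E)))) := by
      intro l
      exact exists_zero_set isClosed_closure (PerfectlyNormalSpace.closed_gdelta isClosed_closure)
    choose ζ hζc hζ0 hζz using key
    set Θ : ℕ → ℕ → ↥S → ℝ := fun l r x =>
      min 1 ((r : ℝ) * ζ l (secMap a l (resMap l x.val))) with hΘ
    refine ⟨fun m => Θ m.unpair.1 m.unpair.2, fun m => ?_, fun m => ?_, fun m x => ?_,
      fun m x hx => ?_, fun x hxF => ?_⟩
    · exact continuous_const.min (continuous_const.mul ((hζc _).comp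
        ((continuous_secMap a _).comp ((continuous_resMap _).comp continuous_subtype_val))))
    · exact findet_res m.unpair.1
        (fun q => min 1 ((m.unpair.2 : ℝ) * ζ m.unpair.1 (secMap a m.unpair.1 q)))
    · constructor
      · exact le_min zero_le_one (mul_nonneg (Nat.cast_nonneg _) (hζ0 _ _))
      · exact min_le_left _ _
    · -- vanishing on E
      set l := m.unpair.1
      have hmem : secMap a l (resMap l x.val) ∈
          closure (resMap l ⁻¹' (resMap l '' (Subtype.val '' E))) := by
        apply subset_closure
        show resMap l (secMap a l (resMap l x.val)) ∈ resMap l '' (Subtype.val '' E)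
        rw [res_sec]
        exact mem_image_of_mem _ (mem_image_of_mem _ hx)
      have : ζ l (secMap a l (resMap l x.val)) = 0 := (hζz l _).mpr hmem
      show min 1 (((m.unpair.2 : ℕ) : ℝ) * ζ l (secMap a l (resMap l x.val))) = 0
      rw [this]; simp
    · -- coverage on F
      obtain ⟨l, hl⟩ := exists_level E hE x (hd x hxF)
      have hpos : 0 < ζ l (secMap a l (resMap l x.val)) := by
        rcases lt_or_eq_of_le (hζ0 l (secMap a l (resMap l x.val))) with h | h
        · exact h
        · exfalso
          have hmem := (hζz l _).mp h.symm
          apply hl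
          have : resMap l (secMap a l (resMap l x.val)) ∈
              resMap l '' closure (resMap l ⁻¹' (resMap l '' (Subtype.val '' E))) :=
            mem_image_of_mem _ hmem
          rw [res_sec] at this
          refine (closure_mono (image_preimage_subset _ _))
            ((image_closure_subset_closure_image (continuous_resMap l)) this)
      obtain ⟨r, hr⟩ := exists_nat_ge (1 / ζ l (secMap a l (resMap l x.val)))
      refine ⟨Nat.pair l r, ?_⟩
      have h1 : 1 ≤ (r : ℝ) * ζ l (secMap a l (resMap l x.val)) := by
        rw [div_le_iff₀ hpos] at hr
        linarith
      simp only [hΘ, Nat.unpair_pair]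
      rw [min_eq_left h1]
      norm_num
  · -- Lindelöf case
    haveI : LindelofSpace ↥S := hL
    by_cases hFne : F.Nonempty
    swap
    · refine ⟨fun _ _ => 0, fun _ => continuous_const, fun _ => findet_const 0,
        fun _ _ => ⟨le_rfl, zero_le_one⟩, fun _ _ _ => rfl, fun x hxF => ?_⟩
      exact absurd ⟨x, hxF⟩ hFne
    have key : ∀ x : ↥S, ∃ ϑ : ↥S → ℝ, Continuous ϑ ∧ FinDetOn S ϑ ∧
        (∀ y, ϑ y ∈ Icc (0:ℝ) 1) ∧ (∀ y ∈ E, ϑ y = 0) ∧ (x ∈ F → ϑ x = 1) := by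
      intro x
      by_cases hxF : x ∈ F
      swap
      · exact ⟨fun _ => 0, continuous_const, findet_const 0,
          fun _ => ⟨le_rfl, zero_le_one⟩, fun _ _ => rfl, fun h => absurd h hxF⟩
      have hx : x ∉ E := hd x hxF
      have hEc : IsOpen (Eᶜ) := hE.isOpen_compl
      rw [isOpen_induced_iff] at hEc
      obtain ⟨U, hU, hUE⟩ := hEc
      have hxU : x.val ∈ U := by
        have : x ∈ (Subtype.val) ⁻¹' U := by rw [hUE]; exact hx
        exact this
      obtain ⟨I, u, hIu, hsub⟩ := isOpen_pi_iff.mp hU x.val hxU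
      -- for each coordinate in I, separate x.val i from (u i)ᶜ
      have hψ : ∀ i : ℕ, ∃ ψ : X i → ℝ, Continuous ψ ∧ (∀ t, ψ t ∈ Icc (0:ℝ) 1) ∧
          (i ∈ I → (ψ (x.val i) = 1 ∧ ∀ t ∉ u i, ψ t = 0)) := by
        intro i
        by_cases hi : i ∈ I
        · obtain ⟨g, hgc, hgx, hg1⟩ := CompletelyRegularSpace.completely_regular
            (x.val i) (u i)ᶜ (hIu i hi).1.isClosed_compl (by simp [(hIu i hi).2])
          refine ⟨fun t => 1 - (g t : ℝ), (continuous_const.sub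
            (continuous_induced_dom.comp hgc)), fun t => ?_, fun _ => ⟨?_, fun t ht => ?_⟩⟩
          · have := (g t).2
            simp only [mem_Icc] at this ⊢
            constructor <;> [linarith [this.2]; linarith [this.1]]
          · simp only []; rw [hgx]; norm_num
          · simp only []; rw [show g t = 1 from hg1 ht]; norm_num
        · exact ⟨fun _ => 1, continuous_const, fun _ => ⟨zero_le_one, le_rfl⟩,
            fun h => absurd h hi⟩
      choose ψ hψc hψI hψsep using hψ
      refine ⟨fun y => ∏ i ∈ I, ψ i (y.val i), ?_, ?_, ?_, ?_, ?_⟩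
      · exact continuous_finset_prod I fun i _ =>
          (hψc i).comp ((continuous_apply i).comp continuous_subtype_val)
      · refine ⟨I.sup id, fun y z h => ?_⟩
        simp only []
        refine Finset.prod_congr rfl fun i hi => ?_
        rw [h i (Finset.le_sup (f := id) hi)]
      · intro y
        constructor
        · exact Finset.prod_nonneg fun i _ => (hψI i (y.val i)).1
        · exact Finset.prod_le_one (fun i _ => (hψI i (y.val i)).1)
            (fun i _ => (hψI i (y.val i)).2)
      · intro y hyE
        have : ∃ i ∈ I, y.val i ∉ u i := by
          by_contra hcon
          push_neg at hcon
          have : y.val ∈ (I : Set ℕ).pi u := fun i hi => hcon i (Finset.mem_coe.mp hi)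
          have hyU : y ∈ (Subtype.val) ⁻¹' U := hsub this
          rw [hUE] at hyU
          exact hyU hyE
        obtain ⟨i, hiI, hiu⟩ := this
        exact Finset.prod_eq_zero hiI ((hψsep i hiI).2 _ hiu)
      · intro _
        refine Finset.prod_eq_one fun i hi => (hψsep i hi).1
    choose Θ hΘc hΘfd hΘI hΘE hΘ1 using key
    have hcover : F ⊆ ⋃ x : ↥S, (Θ x) ⁻¹' (Ioi (1/2 : ℝ)) := by
      intro y hyF
      exact mem_iUnion.mpr ⟨y, by simp [hΘ1 y hyF]; norm_num⟩
    obtain ⟨r, hrc, hrsub⟩ := (hF.isLindelof).elim_countable_subcover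
      (fun x : ↥S => (Θ x) ⁻¹' (Ioi (1/2 : ℝ)))
      (fun x => (isOpen_Ioi).preimage (hΘc x)) hcover
    have hrne : r.Nonempty := by
      obtain ⟨y, hyF⟩ := hFne
      obtain ⟨x, hxr, -⟩ := mem_iUnion₂.mp (hrsub hyF)
      exact ⟨x, hxr⟩
    obtain ⟨e, he⟩ := hrc.exists_eq_range hrne
    refine ⟨fun m => Θ (e m), fun m => hΘc _, fun m => hΘfd _, fun m x => hΘI _ _,
      fun m x hx => hΘE _ _ hx, fun x hxF => ?_⟩
    obtain ⟨z, hzr, hzx⟩ := mem_iUnion₂.mp (hrsub hxF)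
    rw [he] at hzr
    obtain ⟨m, rfl⟩ := hzr
    exact ⟨m, le_of_lt hzx⟩

end Stmt8Aux

open Stmt8Aux

/-- Let `P = ∏ₙ Xₙ` be a product of Tychonoff spaces and `X ⊆ P` a subspace such
that `P` is perfectly normal or `X` is Lindelöf.  Then every first Lebesgue class function
`f : X → ℝ` with finite image is the pointwise limit of a sequence of continuous finitely
determined functions. -/
theorem stmt8 {X : ℕ → Type*} [∀ n, TopologicalSpace (X n)] [∀ n, T35Space (X n)]
    (S : Set (∀ n, X n))
    (hPX : PerfectlyNormalSpace (∀ n, X n) ∨ LindelofSpace S)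
    (f : S → ℝ) (hf : LebesgueOne f) (hfin : (Set.range f).Finite) :
    ∃ g : ℕ → S → ℝ, (∀ n, Continuous (g n) ∧ FinDetOn S (g n)) ∧
      ∀ x : S, Tendsto (fun n => g n x) atTop (𝓝 (f x)) := by
  classical
  by_cases hne : Nonempty ↥S
  swap
  · exact ⟨fun _ _ => 0, fun _ => ⟨continuous_const, ⟨0, fun _ _ _ => rfl⟩⟩,
      fun x => absurd ⟨x⟩ hne⟩
  obtain ⟨x₀⟩ := hne
  set a := (x₀ : ∀ n, X n) with ha
  set T := hfin.toFinset with hT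
  -- each level set is F_σ
  have hFs : ∀ c : ℝ, IsFsigma (f ⁻¹' {c}) := by
    intro c
    by_cases hc : c ∈ Set.range f
    · have hcl : IsClosed (Set.range f \ {c}) := (hfin.subset diff_subset).isClosed
      have hop := hf _ hcl.isOpen_compl
      have heq : f ⁻¹' (Set.range f \ {c})ᶜ = f ⁻¹' {c} := by
        ext x
        simp only [mem_preimage, mem_compl_iff, mem_diff, mem_singleton_iff, not_and, not_not]
        exact ⟨fun h => h ⟨x, rfl⟩, fun h _ => h⟩
      rwa [heq] at hop
    · have : f ⁻¹' {c} = ∅ := by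
        ext x
        simp only [mem_preimage, mem_singleton_iff, mem_empty_iff_false, iff_false]
        exact fun h => hc ⟨x, h⟩
      exact ⟨fun _ => ∅, fun _ => isClosed_empty, by simp [this]⟩
  choose F₀ hF₀c hF₀U using hFs
  -- cumulative closed approximations of the level sets
  set Fc : ℝ → ℕ → Set ↥S := fun c n => ⋃ m ∈ Finset.range (n+1), F₀ c m with hFcdef
  have hFcc : ∀ c n, IsClosed (Fc c n) := fun c n =>
    isClosed_biUnion_finset fun m _ => hF₀c c m
  have hFcsub : ∀ c n, Fc c n ⊆ f ⁻¹' {c} := by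
    intro c n x hx
    obtain ⟨m, -, hm⟩ := mem_iUnion₂.mp hx
    rw [hF₀U c]
    exact mem_iUnion.mpr ⟨m, hm⟩
  -- the sets to avoid
  set Ec : ℝ → ℕ → Set ↥S := fun c n => ⋃ d ∈ T.erase c, Fc d n with hEcdef
  have hEcc : ∀ c n, IsClosed (Ec c n) := fun c n =>
    isClosed_biUnion_finset fun d _ => hFcc d n
  have hdisj : ∀ c n, ∀ x ∈ Fc c n, x ∉ Ec c n := by
    intro c n x hx hxE
    obtain ⟨d, hd, hxd⟩ := mem_iUnion₂.mp hxE
    have h1 : f x = c := hFcsub c n hx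
    have h2 : f x = d := hFcsub d n hxd
    exact (Finset.ne_of_mem_erase hd) (h2 ▸ h1)
  -- apply the technical lemma
  have hlem := fun (c : ℝ) (n : ℕ) =>
    lemA a hPX (Ec c n) (Fc c n) (hEcc c n) (hFcc c n) (hdisj c n)
  choose θ hθc hθfd hθI hθE hθcov using hlem
  -- assemble the approximating functions
  set M : ℝ → ℕ → ℕ → ↥S → ℝ := fun c n N => iterMax (θ c n) N with hMdef
  set W : ℝ → ℕ → ↥S → ℝ :=
    fun c N x => ∑ n ∈ Finset.range (N+1), 2^n * M c n N x with hWdef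
  have hMnonneg : ∀ c n N x, 0 ≤ M c n N x :=
    fun c n N x => le_trans (hθI c n 0 x).1 (le_iterMax (Nat.zero_le N) x)
  have hWnonneg : ∀ c N x, 0 ≤ W c N x := fun c N x =>
    Finset.sum_nonneg fun n _ => mul_nonneg (by positivity) (hMnonneg c n N x)
  have hDpos : ∀ N x, (0:ℝ) < 1 + ∑ c ∈ T, W c N x := fun N x =>
    lt_of_lt_of_le one_pos (le_add_of_nonneg_right
      (Finset.sum_nonneg fun c _ => hWnonneg c N x))
  set g : ℕ → ↥S → ℝ :=
    fun N x => (∑ c ∈ T, c * W c N x) / (1 + ∑ c ∈ T, W c N x) with hgdef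
  have hWc : ∀ c N, Continuous (W c N) := fun c N =>
    continuous_finset_sum _ fun n _ =>
      continuous_const.mul (iterMax_continuous (hθc c n) N)
  have hWfd : ∀ c N, FinDetOn S (W c N) := fun c N =>
    findet_sum _ _ fun n _ =>
      findet_op2 (fun p q => p * q) (findet_const ((2:ℝ)^n)) (iterMax_findet (hθfd c n) N)
  refine ⟨g, fun N => ⟨?_, ?_⟩, ?_⟩
  · -- continuity
    exact Continuous.div
      (continuous_finset_sum _ fun c _ => continuous_const.mul (hWc c N))
      (continuous_const.add (continuous_finset_sum _ fun c _ => hWc c N))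
      (fun x => ne_of_gt (hDpos N x))
  · -- finite determination
    exact findet_op2 (fun p q => p / q)
      (findet_sum _ _ fun c _ =>
        findet_op2 (fun p q => p * q) (findet_const c) (hWfd c N))
      (findet_op2 (fun p q => p + q) (findet_const 1)
        (findet_sum _ _ fun c _ => hWfd c N))
  -- pointwise convergence
  intro x
  set d := f x with hd
  have hdT : d ∈ T := hfin.mem_toFinset.mpr ⟨x, rfl⟩
  obtain ⟨m₀, hm₀⟩ : ∃ m₀, x ∈ F₀ d m₀ := by
    have : x ∈ f ⁻¹' {d} := rfl
    rw [hF₀U d] at this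
    exact mem_iUnion.mp this
  have hxFc : ∀ n, m₀ ≤ n → x ∈ Fc d n := fun n hn =>
    mem_iUnion₂.mpr ⟨m₀, Finset.mem_range.mpr (by omega), hm₀⟩
  -- wrong-value W's stay bounded
  have hMzero : ∀ c, c ≠ d → ∀ n N, m₀ ≤ n → M c n N x = 0 := by
    intro c hc n N hn
    have hxE : x ∈ Ec c n :=
      mem_iUnion₂.mpr ⟨d, Finset.mem_erase.mpr ⟨fun h => hc h.symm, hdT⟩, hxFc n hn⟩
    have hle : M c n N x ≤ 0 := iterMax_le fun l _ => le_of_eq (hθE c n l x hxE)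
    exact le_antisymm hle (hMnonneg c n N x)
  have hgeo : ∀ m : ℕ, ∑ n ∈ Finset.range m, (2:ℝ)^n = 2^m - 1 := by
    intro m
    induction m with
    | zero => simp
    | succ k ih => rw [Finset.sum_range_succ, ih]; ring
  have hWbound : ∀ c, c ≠ d → ∀ N, W c N x ≤ 2^m₀ := by
    intro c hc N
    have step1 : W c N x ≤ ∑ n ∈ Finset.range (N+1), (if n < m₀ then (2:ℝ)^n else 0) := by
      refine Finset.sum_le_sum fun n _ => ?_
      by_cases hn : n < m₀
      · rw [if_pos hn]
        calc (2:ℝ)^n * M c n N x ≤ (2:ℝ)^n * 1 :=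
              mul_le_mul_of_nonneg_left (iterMax_le fun l _ => (hθI c n l x).2)
                (by positivity)
          _ = (2:ℝ)^n := mul_one _
      · rw [if_neg hn, hMzero c hc n N (le_of_not_gt hn), mul_zero]
    have step2 : ∑ n ∈ Finset.range (N+1), (if n < m₀ then (2:ℝ)^n else 0)
        ≤ ∑ n ∈ Finset.range m₀, (2:ℝ)^n := by
      rw [← Finset.sum_filter]
      refine Finset.sum_le_sum_of_subset_of_nonneg ?_ (fun n _ _ => by positivity)
      intro n hn
      simp only [Finset.mem_filter, Finset.mem_range] at hn ⊢
      exact hn.2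
    calc W c N x ≤ _ := step1
      _ ≤ ∑ n ∈ Finset.range m₀, (2:ℝ)^n := step2
      _ = 2^m₀ - 1 := hgeo m₀
      _ ≤ 2^m₀ := by linarith
  -- the right W tends to infinity
  have htop : Tendsto (fun N => W d N x) atTop atTop := by
    rw [tendsto_atTop]
    intro b
    obtain ⟨k, hk⟩ := pow_unbounded_of_one_lt (2*b) (one_lt_two (α := ℝ))
    set n₁ := max k m₀ with hn₁
    obtain ⟨l₀, hl₀⟩ := hθcov d n₁ x (hxFc n₁ (le_max_right _ _))
    filter_upwards [eventually_ge_atTop (max n₁ l₀)] with N hN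
    have hn₁N : n₁ ≤ N := le_trans (le_max_left _ _) hN
    have hl₀N : l₀ ≤ N := le_trans (le_max_right _ _) hN
    have hMge : (1/2 : ℝ) ≤ M d n₁ N x := le_trans hl₀ (le_iterMax hl₀N x)
    have hterm : (2:ℝ)^n₁ * (1/2) ≤ (2:ℝ)^n₁ * M d n₁ N x :=
      mul_le_mul_of_nonneg_left hMge (by positivity)
    have hsingle : (2:ℝ)^n₁ * M d n₁ N x ≤ W d N x := by
      refine Finset.single_le_sum (f := fun n => (2:ℝ)^n * M d n N x)
        (fun n _ => mul_nonneg (by positivity) (hMnonneg d n N x))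
        (Finset.mem_range.mpr (by omega))
    have h2k : b ≤ (2:ℝ)^n₁ * (1/2) := by
      have : (2:ℝ)^k ≤ (2:ℝ)^n₁ := pow_le_pow_right₀ (by norm_num) (le_max_left _ _)
      nlinarith
    linarith
  -- conclusion
  set K := (∑ c ∈ T, |c - d| * 2^m₀) + |d| with hK
  have hDtop : Tendsto (fun N => 1 + ∑ c ∈ T, W c N x) atTop atTop := by
    refine tendsto_atTop_mono (fun N => ?_) (tendsto_atTop_add_const_left _ 1 htop)
    exact add_le_add_right
      (Finset.single_le_sum (fun c _ => hWnonneg c N x) hdT) 1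
  have hnum : ∀ N, |(∑ c ∈ T, c * W c N x) - d * (1 + ∑ c ∈ T, W c N x)| ≤ K := by
    intro N
    have heq : (∑ c ∈ T, c * W c N x) - d * (1 + ∑ c ∈ T, W c N x)
        = (∑ c ∈ T, (c - d) * W c N x) - d := by
      rw [mul_add, mul_one, Finset.mul_sum]
      rw [show (∑ c ∈ T, (c - d) * W c N x)
          = ∑ c ∈ T, (c * W c N x - d * W c N x) from
        Finset.sum_congr rfl fun c _ => by ring]
      rw [Finset.sum_sub_distrib]
      ring
    rw [heq]
    calc |(∑ c ∈ T, (c - d) * W c N x) - d|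
        ≤ |∑ c ∈ T, (c - d) * W c N x| + |d| := abs_sub _ _
      _ ≤ (∑ c ∈ T, |(c - d) * W c N x|) + |d| :=
          add_le_add_left (Finset.abs_sum_le_sum_abs _ _) _
      _ ≤ (∑ c ∈ T, |c - d| * 2^m₀) + |d| := by
          refine add_le_add_left (Finset.sum_le_sum fun c hc => ?_) _
          rw [abs_mul, abs_of_nonneg (hWnonneg c N x)]
          by_cases hcd : c = d
          · subst hcd; simp
          · exact mul_le_mul_of_nonneg_left (hWbound c hcd N) (abs_nonneg _)
  have h1 : Tendsto (fun N => K / (1 + ∑ c ∈ T, W c N x)) atTop (𝓝 0) :=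
    Tendsto.div_atTop tendsto_const_nhds hDtop
  have h2 : ∀ N, ‖g N x - d‖ ≤ K / (1 + ∑ c ∈ T, W c N x) := by
    intro N
    have hD := hDpos N x
    have heq : g N x - d
        = ((∑ c ∈ T, c * W c N x) - d * (1 + ∑ c ∈ T, W c N x))
          / (1 + ∑ c ∈ T, W c N x) := by
      rw [hgdef]
      field_simp
    rw [heq, Real.norm_eq_abs, abs_div, abs_of_pos hD]
    gcongr
    exact hnum N
  have h3 : Tendsto (fun N => g N x - d) atTop (𝓝 0) := squeeze_zero_norm h2 h1
  have := h3.add (tendsto_const_nhds (x := d))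
  simpa using this
end

section
/- Let P = ∏_{n=1}^∞ X_n be a product of a sequence of completely regular (Tychonoff) spaces and let X ⊆ P be a subspace such that either P is perfectly normal or X is Lindelöf. If f : X → ℝ is of the first Lebesgue class and its image f(X) is countable and discrete (as a subspace of ℝ), then f is the pointwise limit of a sequence of functions from CF(X). -/
open Filter Topology

set_option linter.unusedSectionVars false
set_option linter.unusedVariables false
set_option maxHeartbeats 1000000
set_option synthInstance.maxHeartbeats 1000000

section StatementNine

open Set

section Tau
variable {X : ℕ → Type*} [∀ n, TopologicalSpace (X n)]

/-- truncation of a sequence at level `q`, filling the tail with `s₀`. -/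
def tauTr (s₀ : ∀ n, X n) (q : ℕ) (w : ∀ n, X n) : ∀ n, X n :=
  fun i => if i ≤ q then w i else s₀ i

lemma tauTr_continuous (s₀ : ∀ n, X n) (q : ℕ) : Continuous (tauTr s₀ q) := by
  apply continuous_pi
  intro i
  by_cases h : i ≤ q
  · simpa [tauTr, h] using continuous_apply i
  · simpa [tauTr, h] using continuous_const

lemma tauTr_coord (s₀ : ∀ n, X n) {q i : ℕ} (h : i ≤ q) (w : ∀ n, X n) :
    tauTr s₀ q w i = w i := by simp [tauTr, h]

lemma tauTr_comp (s₀ : ∀ n, X n) {q r : ℕ} (h : q ≤ r) (w : ∀ n, X n) :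
    tauTr s₀ q (tauTr s₀ r w) = tauTr s₀ q w := by
  funext i
  by_cases hi : i ≤ q
  · simp [tauTr, hi, hi.trans h]
  · simp [tauTr, hi]

lemma tauTr_agree (s₀ : ∀ n, X n) {q : ℕ} {x y : ∀ n, X n}
    (h : ∀ i ≤ q, x i = y i) : tauTr s₀ q x = tauTr s₀ q y := by
  funext i
  by_cases hi : i ≤ q
  · simp [tauTr, hi, h i hi]
  · simp [tauTr, hi]

/-- Escape lemma: a point outside a closed set of the subspace `S` is eventually
separated from it at some finite level. -/
lemma tauTr_escape (S : Set (∀ n, X n)) (s₀ : ∀ n, X n) {F : Set ↥S}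
    (hF : IsClosed F) {x : ↥S} (hx : x ∉ F) :
    ∃ q : ℕ, tauTr s₀ q ↑x ∉ closure ((fun z : ↥S => tauTr s₀ q ↑z) '' F) := by
  obtain ⟨C, hC, rfl⟩ := isClosed_induced_iff.mp hF
  have hxC : (x : ∀ n, X n) ∈ Cᶜ := hx
  obtain ⟨I, u, hu, hpi⟩ := isOpen_pi_iff.mp hC.isOpen_compl _ hxC
  refine ⟨I.sup id, ?_⟩
  intro hcl
  have hnb : IsOpen ((I : Set ℕ).pi u) := isOpen_set_pi I.finite_toSet (fun a ha => (hu a ha).1)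
  have hmem : tauTr s₀ (I.sup id) ↑x ∈ (I : Set ℕ).pi u := by
    intro i hi
    rw [tauTr_coord s₀ (show i ≤ I.sup id from Finset.le_sup (f := id) (Finset.mem_coe.mp hi))]
    exact (hu i hi).2
  obtain ⟨w, hw1, hw2⟩ := (mem_closure_iff.mp hcl) _ hnb hmem
  obtain ⟨z, hzF, rfl⟩ := hw2
  have : (z : ∀ n, X n) ∈ (I : Set ℕ).pi u := by
    intro i hi
    have h2 : tauTr s₀ (I.sup id) (↑z) i ∈ u i := hw1 i hi
    rwa [tauTr_coord s₀ (show i ≤ I.sup id from Finset.le_sup (f := id) (Finset.mem_coe.mp hi))] at h2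
  exact (hpi this) hzF

end Tau

section CR
variable {X : ℕ → Type*} [∀ n, TopologicalSpace (X n)] [∀ n, T35Space (X n)]

/-- Complete-regularity-type separation in a countable product of Tychonoff spaces. -/
lemma pi_cr_sep {K : Set (∀ n, X n)} (hK : IsClosed K) {z : ∀ n, X n} (hz : z ∉ K) :
    ∃ h : (∀ n, X n) → ℝ, Continuous h ∧ h z = 1 ∧ Set.EqOn h 0 K := by
  obtain ⟨I, u, hu, hpi⟩ := isOpen_pi_iff.mp hK.isOpen_compl _ hz
  have sep : ∀ i ∈ I, ∃ f : X i → unitInterval, Continuous f ∧ f (z i) = 0 ∧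
      Set.EqOn f 1 (u i)ᶜ := by
    intro i hi
    exact CompletelyRegularSpace.completely_regular (z i) (u i)ᶜ
      (hu i hi).1.isClosed_compl (by simp [(hu i hi).2])
  choose f hfc hfz hfK using sep
  classical
  refine ⟨fun w => ∏ i ∈ I.attach, (1 - ((f i i.2 (w i) : ℝ))), ?_, ?_, ?_⟩
  · apply continuous_finset_prod
    intro i _
    exact continuous_const.sub
      ((continuous_subtype_val.comp (hfc i i.2)).comp (continuous_apply (i : ℕ)))
  · show (∏ i ∈ I.attach, (1 - ((f i i.2 (z i) : ℝ)))) = 1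
    have : ∀ i ∈ I.attach, (1 - ((f (i : ℕ) i.2 (z i) : ℝ))) = 1 := by
      intro i _
      rw [hfz i i.2]
      norm_num
    rw [Finset.prod_congr rfl this]
    simp
  · intro w hw
    have hwpi : w ∉ (I : Set ℕ).pi u := fun hmem => (hpi hmem) hw
    have hex : ∃ i, ∃ h : i ∈ I, w i ∉ u i := by
      by_contra hcon
      push_neg at hcon
      exact hwpi (fun i hi => hcon i (Finset.mem_coe.mp hi))
    obtain ⟨i, hiI, hiu⟩ := hex
    show (∏ j ∈ I.attach, (1 - ((f (j : ℕ) j.2 (w j) : ℝ)))) = 0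
    have h1 : f i hiI (w i) = 1 := hfK i hiI hiu
    apply Finset.prod_eq_zero (Finset.mem_attach I ⟨i, hiI⟩)
    rw [h1]
    norm_num
end CR

section Pieces
variable {X : ℕ → Type*} [∀ n, TopologicalSpace (X n)]

/-- The property of a sequence of "cylindrical pieces" adapted to the pair `(F, E)`. -/
def PiecesFor (S : Set (∀ n, X n)) (s₀ : ∀ n, X n) (F E : Set ↥S)
    (e : ℕ → ℕ × Set (∀ n, X n)) : Prop :=
  (∀ t, IsClosed (e t).2) ∧
  (∀ t, ∀ w ∈ (e t).2, w ∉ closure ((fun z : ↥S => tauTr s₀ (e t).1 ↑z) '' F)) ∧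
  (∀ x ∈ E, ∃ t, tauTr s₀ (e t).1 ↑x ∈ (e t).2)

variable [∀ n, T35Space (X n)]

lemma pieces_of_lindelof (S : Set (∀ n, X n)) (s₀ : ∀ n, X n) [LindelofSpace ↥S]
    {F E : Set ↥S} (hF : IsClosed F) (hE : IsClosed E) (hd : Disjoint F E) :
    ∃ e : ℕ → ℕ × Set (∀ n, X n), PiecesFor S s₀ F E e := by
  classical
  -- for every point of `E`, pick a level and a separating function
  have key : ∀ xe : ↥E, ∃ q : ℕ, ∃ h : (∀ n, X n) → ℝ, Continuous h ∧
      h (tauTr s₀ q ↑(xe : ↥S)) = 1 ∧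
      Set.EqOn h 0 (closure ((fun z : ↥S => tauTr s₀ q ↑z) '' F)) := by
    intro xe
    have hxF : (xe : ↥S) ∉ F := fun hmem => absurd xe.2 (Set.disjoint_left.mp hd hmem)
    obtain ⟨q, hq⟩ := tauTr_escape S s₀ hF hxF
    obtain ⟨h, hc, h1, h0⟩ := pi_cr_sep isClosed_closure hq
    exact ⟨q, h, hc, h1, h0⟩
  choose q h hc h1 h0 using key
  -- open cover of E
  set U : ↥E → Set ↥S := fun xe => (fun x : ↥S => tauTr s₀ (q xe) ↑x) ⁻¹' (h xe ⁻¹' Ioi (1/2 : ℝ))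
    with hU
  have hUopen : ∀ xe, IsOpen (U xe) := fun xe =>
    ((isOpen_Ioi).preimage (hc xe)).preimage ((tauTr_continuous s₀ (q xe)).comp continuous_subtype_val)
  have hcov : E ⊆ ⋃ xe, U xe := by
    intro x hx
    refine mem_iUnion.mpr ⟨⟨x, hx⟩, ?_⟩
    simp only [hU, mem_preimage, mem_Ioi]
    rw [h1 ⟨x, hx⟩]
    norm_num
  obtain ⟨r, hrc, hrcov⟩ := (hE.isLindelof).elim_countable_subcover U hUopen hcov
  -- assemble pieces
  set Pc : Set (ℕ × Set (∀ n, X n)) :=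
    insert (0, (∅ : Set (∀ n, X n)))
      ((fun xe => ((q xe), (h xe) ⁻¹' Ici (1/2 : ℝ))) '' r) with hPc
  have hPcc : Pc.Countable := (hrc.image _).insert _
  have hPcne : Pc.Nonempty := ⟨_, Set.mem_insert _ _⟩
  obtain ⟨e, he⟩ := hPcc.exists_eq_range hPcne
  refine ⟨e, ?_, ?_, ?_⟩
  · intro t
    have : e t ∈ Pc := by rw [he]; exact mem_range_self t
    rcases Set.mem_insert_iff.mp this with h' | h'
    · rw [h']; exact isClosed_empty
    · obtain ⟨xe, _, hxe⟩ := h'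
      rw [← hxe]
      exact isClosed_Ici.preimage (hc xe)
  · intro t w hw hwcl
    have : e t ∈ Pc := by rw [he]; exact mem_range_self t
    rcases Set.mem_insert_iff.mp this with h' | h'
    · rw [h'] at hw; exact hw
    · obtain ⟨xe, _, hxe⟩ := h'
      rw [← hxe] at hw hwcl
      have hz : h xe w = 0 := h0 xe hwcl
      have : (1/2 : ℝ) ≤ h xe w := hw
      rw [hz] at this
      norm_num at this
  · intro x hx
    have hex : ∃ xe ∈ r, x ∈ U xe := by
      have := hrcov hx
      simpa only [mem_iUnion, exists_prop] using this
    obtain ⟨xe, hxe, hxU⟩ := hex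
    have hmem : ((q xe), (h xe) ⁻¹' Ici (1/2 : ℝ)) ∈ Pc :=
      Set.mem_insert_iff.mpr (Or.inr ⟨xe, hxe, rfl⟩)
    rw [he] at hmem
    obtain ⟨t, ht⟩ := hmem
    refine ⟨t, ?_⟩
    rw [ht]
    have h2 : (1/2 : ℝ) < h xe (tauTr s₀ (q xe) ↑x) := hxU
    exact le_of_lt h2

lemma pieces_of_pn (S : Set (∀ n, X n)) (s₀ : ∀ n, X n)
    (hPN : PerfectlyNormalSpace (∀ n, X n))
    {F E : Set ↥S} (hF : IsClosed F) (hE : IsClosed E) (hd : Disjoint F E) :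
    ∃ e : ℕ → ℕ × Set (∀ n, X n), PiecesFor S s₀ F E e := by
  classical
  have gd : ∀ qn : ℕ, ∃ T : Set (Set (∀ n, X n)), (∀ t ∈ T, IsOpen t) ∧ T.Countable ∧
      closure ((fun z : ↥S => tauTr s₀ qn ↑z) '' F) = ⋂₀ T := fun qn =>
    hPN.closed_gdelta isClosed_closure
  choose T hTo hTc hTeq using gd
  set Pc : Set (ℕ × Set (∀ n, X n)) :=
    insert (0, (∅ : Set (∀ n, X n))) (⋃ qn : ℕ, (fun t => (qn, tᶜ)) '' T qn) with hPc
  have hPcc : Pc.Countable :=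
    ((countable_iUnion (fun qn => (hTc qn).image _)).insert _)
  obtain ⟨e, he⟩ := hPcc.exists_eq_range ⟨_, Set.mem_insert _ _⟩
  refine ⟨e, ?_, ?_, ?_⟩
  · intro t
    have : e t ∈ Pc := by rw [he]; exact mem_range_self t
    rcases Set.mem_insert_iff.mp this with h' | h'
    · rw [h']; exact isClosed_empty
    · obtain ⟨qn, ⟨s, hs, hpair⟩⟩ := mem_iUnion.mp h'
      rw [← hpair]
      exact (hTo qn s hs).isClosed_compl
  · intro t w hw hwcl
    have : e t ∈ Pc := by rw [he]; exact mem_range_self t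
    rcases Set.mem_insert_iff.mp this with h' | h'
    · rw [h'] at hw; exact hw
    · obtain ⟨qn, ⟨s, hs, hpair⟩⟩ := mem_iUnion.mp h'
      rw [← hpair] at hw hwcl
      have : w ∈ ⋂₀ T qn := by rw [← hTeq qn]; exact hwcl
      exact hw (this s hs)
  · intro x hx
    have hxF : x ∉ F := fun hmem => absurd hx (Set.disjoint_left.mp hd hmem)
    obtain ⟨qn, hq⟩ := tauTr_escape S s₀ hF hxF
    rw [hTeq qn] at hq
    have hex : ∃ s ∈ T qn, tauTr s₀ qn ↑x ∉ s := by
      by_contra hcon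
      push_neg at hcon
      exact hq (Set.mem_sInter.mpr (fun s hs => hcon s hs))
    obtain ⟨s, hs, hns⟩ := hex
    have hmem : (qn, sᶜ) ∈ Pc :=
      Set.mem_insert_iff.mpr (Or.inr (mem_iUnion.mpr ⟨qn, ⟨s, hs, rfl⟩⟩))
    rw [he] at hmem
    obtain ⟨t, ht⟩ := hmem
    exact ⟨t, by rw [ht]; exact hns⟩

end Pieces
section CFU
variable {X : ℕ → Type*} [∀ n, TopologicalSpace (X n)]

/-- Key lemma: given a closed set `F` and pieces adapted to `(F, E)`, there is a sequence of
finitely determined continuous functions equal to `1` on `F` and eventually `0` at each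
point of `E`. -/
lemma cfu_exists (S : Set (∀ n, X n)) (s₀ : ∀ n, X n)
    (hnorm : ∀ r : ℕ, NormalSpace ↥(Set.range (fun z : ↥S => tauTr s₀ r ↑z)))
    {F E : Set ↥S} {e : ℕ → ℕ × Set (∀ n, X n)} (hp : PiecesFor S s₀ F E e) :
    ∃ σ : ℕ → ↥S → ℝ, (∀ r, Continuous (σ r)) ∧
      (∀ r, ∀ x y : ↥S, (∀ i ≤ r, (x : ∀ n, X n) i = (y : ∀ n, X n) i) → σ r x = σ r y) ∧
      (∀ r, ∀ x, x ∈ F → σ r x = 1) ∧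
      (∀ x ∈ E, ∀ᶠ r in atTop, σ r x = 0) := by
  classical
  obtain ⟨hcl, hdis, hcov⟩ := hp
  have main : ∀ r : ℕ, ∃ σr : ↥S → ℝ, Continuous σr ∧
      (∀ x y : ↥S, (∀ i ≤ r, (x : ∀ n, X n) i = (y : ∀ n, X n) i) → σr x = σr y) ∧
      (∀ x, x ∈ F → σr x = 1) ∧
      (∀ x : ↥S, ∀ t ≤ r, (e t).1 ≤ r → tauTr s₀ (e t).1 ↑x ∈ (e t).2 → σr x = 0) := by
    intro r
    haveI := hnorm r
    set Tr : ↥S → (∀ n, X n) := fun z => tauTr s₀ r ↑z with hTr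
    set Zr : Set (∀ n, X n) := Set.range Tr with hZr
    set Dp : Set (∀ n, X n) :=
      ⋃ t ∈ Finset.range (r+1),
        (if (e t).1 ≤ r then (tauTr s₀ (e t).1) ⁻¹' (e t).2 else ∅) with hDp
    have hDpcl : IsClosed Dp := by
      apply Set.Finite.isClosed_biUnion (Finset.finite_toSet _)
      intro t _
      split_ifs
      · exact (hcl t).preimage (tauTr_continuous s₀ (e t).1)
      · exact isClosed_empty
    have hdisj : Disjoint Dp (closure (Tr '' F)) := by
      rw [Set.disjoint_left]
      intro w hwD hwC
      obtain ⟨t, _, hwt⟩ := Set.mem_iUnion₂.mp hwD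
      by_cases hqt : (e t).1 ≤ r
      · rw [if_pos hqt] at hwt
        have h1 : tauTr s₀ (e t).1 w ∈ (e t).2 := hwt
        have h2 : tauTr s₀ (e t).1 w ∈
            closure ((fun z : ↥S => tauTr s₀ (e t).1 ↑z) '' F) := by
          have himg : tauTr s₀ (e t).1 w ∈ tauTr s₀ (e t).1 '' closure (Tr '' F) :=
            Set.mem_image_of_mem _ hwC
          have hsub := image_closure_subset_closure_image
            (f := tauTr s₀ (e t).1) (s := Tr '' F) (tauTr_continuous s₀ (e t).1)
          have heq : tauTr s₀ (e t).1 '' (Tr '' F)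
              = (fun z : ↥S => tauTr s₀ (e t).1 ↑z) '' F := by
            rw [Set.image_image]
            exact Set.image_congr (fun z _ => tauTr_comp s₀ hqt ↑z)
          rw [heq] at hsub
          exact hsub himg
        exact hdis t _ h1 h2
      · rw [if_neg hqt] at hwt
        exact hwt
    have hCcl : IsClosed (Subtype.val ⁻¹' (closure (Tr '' F)) : Set ↥Zr) :=
      isClosed_closure.preimage continuous_subtype_val
    have hDcl : IsClosed (Subtype.val ⁻¹' Dp : Set ↥Zr) :=
      hDpcl.preimage continuous_subtype_val
    obtain ⟨fr, hf0, hf1, _⟩ :=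
      exists_continuous_zero_one_of_isClosed hDcl hCcl
        (Disjoint.preimage _ hdisj)
    refine ⟨fun x => fr ⟨Tr x, Set.mem_range_self x⟩, ?_, ?_, ?_, ?_⟩
    · exact fr.continuous.comp
        (Continuous.subtype_mk ((tauTr_continuous s₀ r).comp continuous_subtype_val) _)
    · intro x y hxy
      have : Tr x = Tr y := tauTr_agree s₀ hxy
      simp only [this]
    · intro x hxF
      apply hf1
      exact Set.mem_preimage.mpr (subset_closure (Set.mem_image_of_mem Tr hxF))
    · intro x t htr hqtr hmem
      apply hf0
      have hx' : Tr x ∈ Dp := by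
        apply Set.mem_biUnion (Finset.mem_range.mpr (show t < r + 1 by omega))
        rw [if_pos hqtr]
        show tauTr s₀ (e t).1 (Tr x) ∈ (e t).2
        have hcomp : tauTr s₀ (e t).1 (Tr x) = tauTr s₀ (e t).1 ↑x := tauTr_comp s₀ hqtr ↑x
        rw [hcomp]
        exact hmem
      exact hx'
  choose σ hσc hσdet hσ1 hσ0 using main
  refine ⟨σ, hσc, hσdet, hσ1, ?_⟩
  intro x hxE
  obtain ⟨t₀, ht₀⟩ := hcov x hxE
  rw [eventually_atTop]
  refine ⟨max t₀ (e t₀).1, fun r hr => ?_⟩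
  exact hσ0 r x t₀ (le_trans (le_max_left _ _) hr) (le_trans (le_max_right _ _) hr) ht₀

end CFU
/-- Let `P = ∏ₙ Xₙ` be a product of Tychonoff spaces and `X ⊆ P` a subspace such
that `P` is perfectly normal or `X` is Lindelöf.  If `f : X → ℝ` is of the first Lebesgue
class and its image is countable and discrete, then `f` is the pointwise limit of a sequence
of continuous finitely determined functions. -/
theorem stmt9 {X : ℕ → Type*} [∀ n, TopologicalSpace (X n)] [∀ n, T35Space (X n)]
    (S : Set (∀ n, X n))
    (hPX : PerfectlyNormalSpace (∀ n, X n) ∨ LindelofSpace S)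
    (f : S → ℝ) (hf : LebesgueOne f)
    (hcnt : (Set.range f).Countable) (hdisc : DiscreteTopology (Set.range f)) :
    ∃ g : ℕ → S → ℝ, (∀ n, Continuous (g n) ∧ FinDetOn S (g n)) ∧
      ∀ x : S, Tendsto (fun n => g n x) atTop (𝓝 (f x)) := by
  classical
  rcases isEmpty_or_nonempty ↥S with hS | hS
  · exact ⟨fun _ _ => 0, fun n => ⟨continuous_const, ⟨0, fun x y _ => rfl⟩⟩,
      fun x => (hS.elim x)⟩
  obtain ⟨x₀⟩ := hS
  set s₀ : ∀ n, X n := ↑x₀ with hs₀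
  -- normality of the level-r images
  have hnorm : ∀ r : ℕ, NormalSpace ↥(Set.range (fun z : ↥S => tauTr s₀ r ↑z)) := by
    intro r
    rcases hPX with hPN | hLin
    · haveI := hPN
      haveI h1 : CompletelyNormalSpace (∀ n, X n) := inferInstance
      haveI h2 : CompletelyNormalSpace ↥(Set.range (fun z : ↥S => tauTr s₀ r ↑z)) :=
        inferInstance
      exact h2.toNormalSpace
    · haveI := hLin
      haveI : LindelofSpace ↥(Set.range (fun z : ↥S => tauTr s₀ r ↑z)) := by
        have h1 : IsLindelof (Set.range (fun z : ↥S => tauTr s₀ r ↑z)) :=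
          isLindelof_range ((tauTr_continuous s₀ r).comp continuous_subtype_val)
        exact isLindelof_iff_LindelofSpace.mp h1
      haveI h3 : RegularSpace (∀ n, X n) := inferInstance
      haveI h4 : RegularSpace ↥(Set.range (fun z : ↥S => tauTr s₀ r ↑z)) := inferInstance
      exact NormalSpace.of_regularSpace_lindelofSpace
  -- the CF-Urysohn-type separation
  have cfu : ∀ F E : Set ↥S, IsClosed F → IsClosed E → Disjoint F E →
      ∃ σ : ℕ → ↥S → ℝ, (∀ r, Continuous (σ r)) ∧
      (∀ r, ∀ x y : ↥S, (∀ i ≤ r, (x : ∀ n, X n) i = (y : ∀ n, X n) i) → σ r x = σ r y) ∧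
      (∀ r, ∀ x, x ∈ F → σ r x = 1) ∧
      (∀ x ∈ E, ∀ᶠ r in atTop, σ r x = 0) := by
    intro F E hF hE hd
    rcases hPX with hPN | hLin
    · obtain ⟨e, hp⟩ := pieces_of_pn S s₀ hPN hF hE hd
      exact cfu_exists S s₀ hnorm hp
    · haveI := hLin
      obtain ⟨e, hp⟩ := pieces_of_lindelof S s₀ hF hE hd
      exact cfu_exists S s₀ hnorm hp
  -- enumerate the range of f
  obtain ⟨y, hy⟩ := hcnt.exists_eq_range ⟨f x₀, Set.mem_range_self x₀⟩
  -- fibers are F_sigma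
  have hBk : ∀ k : ℕ, IsFsigma (f ⁻¹' {y k}) := by
    intro k
    have hyk : y k ∈ Set.range f := by rw [hy]; exact Set.mem_range_self k
    have hopen : IsOpen ({(⟨y k, hyk⟩ : ↥(Set.range f))} : Set ↥(Set.range f)) :=
      isOpen_discrete _
    obtain ⟨V, hV, hVeq⟩ := isOpen_induced_iff.mp hopen
    have hfib : f ⁻¹' {y k} = f ⁻¹' V := by
      ext x
      simp only [Set.mem_preimage, Set.mem_singleton_iff]
      constructor
      · intro h
        have hmem : (⟨f x, Set.mem_range_self x⟩ : ↥(Set.range f))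
            ∈ ({(⟨y k, hyk⟩ : ↥(Set.range f))} : Set ↥(Set.range f)) := by
          apply Set.mem_singleton_iff.mpr
          exact Subtype.ext h
        rw [← hVeq] at hmem
        exact hmem
      · intro h
        have hmem : (⟨f x, Set.mem_range_self x⟩ : ↥(Set.range f))
            ∈ Subtype.val ⁻¹' V := h
        rw [hVeq] at hmem
        have := Set.mem_singleton_iff.mp hmem
        exact congrArg Subtype.val this
    rw [hfib]
    exact hf V hV
  choose F0 hF0cl hF0eq using hBk
  have hBkc : ∀ k : ℕ, IsFsigma (f ⁻¹' {y k}ᶜ) := fun k => hf _ isOpen_compl_singleton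
  choose E0 hE0cl hE0eq using hBkc
  set Fc : ℕ → ℕ → Set ↥S := fun k p => ⋃ i ∈ Finset.range (p+1), F0 k i with hFc
  set Ec : ℕ → ℕ → Set ↥S := fun k p => ⋃ i ∈ Finset.range (p+1), E0 k i with hEc
  have hFccl : ∀ k p, IsClosed (Fc k p) :=
    fun k p => Set.Finite.isClosed_biUnion (Finset.finite_toSet _) (fun i _ => hF0cl k i)
  have hEccl : ∀ k p, IsClosed (Ec k p) :=
    fun k p => Set.Finite.isClosed_biUnion (Finset.finite_toSet _) (fun i _ => hE0cl k i)
  have hFcsub : ∀ k p, Fc k p ⊆ f ⁻¹' {y k} := by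
    intro k p
    rw [hF0eq k]
    exact Set.iUnion₂_subset (fun i _ => Set.subset_iUnion (F0 k) i)
  have hEcsub : ∀ k p, Ec k p ⊆ f ⁻¹' {y k}ᶜ := by
    intro k p
    rw [hE0eq k]
    exact Set.iUnion₂_subset (fun i _ => Set.subset_iUnion (E0 k) i)
  have hdisFE : ∀ k p m, Disjoint (Fc k p) (Ec k m) := by
    intro k p m
    rw [Set.disjoint_left]
    intro a ha ha'
    exact (hEcsub k m ha') (hFcsub k p ha)
  have hEcmono : ∀ k {m p : ℕ}, m ≤ p → Ec k m ⊆ Ec k p := by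
    intro k m p hmp a ha
    obtain ⟨i, hi, hai⟩ := Set.mem_iUnion₂.mp ha
    exact Set.mem_iUnion₂.mpr ⟨i, Finset.mem_range.mpr (by
      have := Finset.mem_range.mp hi; omega), hai⟩
  -- choose the separating families
  have hσA : ∀ k p m : ℕ, ∃ σ : ℕ → ↥S → ℝ, (∀ r, Continuous (σ r)) ∧
      (∀ r, ∀ x y : ↥S, (∀ i ≤ r, (x : ∀ n, X n) i = (y : ∀ n, X n) i) → σ r x = σ r y) ∧
      (∀ r, ∀ x, x ∈ Fc k p → σ r x = 1) ∧
      (∀ x ∈ Ec k m, ∀ᶠ r in atTop, σ r x = 0) :=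
    fun k p m => cfu (Fc k p) (Ec k m) (hFccl k p) (hEccl k m) (hdisFE k p m)
  choose σA hA1 hA2 hA3 hA4 using hσA
  have hσB : ∀ k p : ℕ, ∃ σ : ℕ → ↥S → ℝ, (∀ r, Continuous (σ r)) ∧
      (∀ r, ∀ x y : ↥S, (∀ i ≤ r, (x : ∀ n, X n) i = (y : ∀ n, X n) i) → σ r x = σ r y) ∧
      (∀ r, ∀ x, x ∈ Ec k p → σ r x = 1) ∧
      (∀ x ∈ Fc k p, ∀ᶠ r in atTop, σ r x = 0) :=
    fun k p => cfu (Ec k p) (Fc k p) (hEccl k p) (hFccl k p) (hdisFE k p p).symm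
  choose σB hB1 hB2 hB3 hB4 using hσB
  -- the approximating functions
  set A : ℕ → ℕ → ℕ → ↥S → ℝ := fun k p n x =>
    (∏ m ∈ Finset.range (n+1), σA k p m n x) * (1 - σB k p n x) with hAdef
  set ψ : ℕ → ℕ → ↥S → ℝ := fun k n x =>
    1 - ∏ p ∈ Finset.range (n+1), (1 - A k p n x) with hψdef
  set g : ℕ → ↥S → ℝ := fun n x =>
    ∑ k ∈ Finset.range (n+1), y k * (ψ k n x * ∏ l ∈ Finset.range k, (1 - ψ l n x))
    with hgdef
  have hψcont : ∀ k n, Continuous (fun x => ψ k n x) := by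
    intro k n
    simp only [hψdef, hAdef]
    apply continuous_const.sub
    apply continuous_finset_prod
    intro p _
    apply continuous_const.sub
    exact (continuous_finset_prod _ (fun m _ => hA1 k p m n)).mul
      (continuous_const.sub (hB1 k p n))
  have hψdet : ∀ k n, ∀ x x' : ↥S,
      (∀ i ≤ n, (x : ∀ n, X n) i = (x' : ∀ n, X n) i) → ψ k n x = ψ k n x' := by
    intro k n x x' hagr
    simp only [hψdef, hAdef]
    congr 1
    apply Finset.prod_congr rfl
    intro p _
    have h1 : ∀ m ∈ Finset.range (n+1), σA k p m n x = σA k p m n x' :=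
      fun m _ => hA2 k p m n x x' hagr
    rw [Finset.prod_congr rfl h1, hB2 k p n x x' hagr]
  refine ⟨g, ?_, ?_⟩
  · intro n
    constructor
    · simp only [hgdef]
      apply continuous_finset_sum
      intro k _
      exact continuous_const.mul ((hψcont k n).mul
        (continuous_finset_prod _ (fun l _ => continuous_const.sub (hψcont l n))))
    · refine ⟨n, fun x x' hagr => ?_⟩
      simp only [hgdef]
      apply Finset.sum_congr rfl
      intro k _
      rw [hψdet k n x x' hagr]
      congr 1
      congr 1
      exact Finset.prod_congr rfl (fun l _ => by rw [hψdet l n x x' hagr])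
  · intro x
    have hex : ∃ j, f x = y j := by
      have hmem : f x ∈ Set.range y := by rw [← hy]; exact Set.mem_range_self x
      obtain ⟨j', hj'⟩ := hmem
      exact ⟨j', hj'.symm⟩
    set j := Nat.find hex with hjdef
    have hj : f x = y j := Nat.find_spec hex
    have hjmin : ∀ l, l < j → f x ≠ y l := fun l hl => Nat.find_min hex hl
    -- (a) eventually ψ j n x = 1
    have hxBj : x ∈ f ⁻¹' {y j} := hj
    have hxF : ∃ p₀, x ∈ Fc j p₀ := by
      rw [hF0eq j] at hxBj
      obtain ⟨i, hi⟩ := Set.mem_iUnion.mp hxBj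
      exact ⟨i, Set.mem_iUnion₂.mpr ⟨i, Finset.mem_range.mpr (by omega), hi⟩⟩
    obtain ⟨p₀, hp₀⟩ := hxF
    have ha : ∀ᶠ n in atTop, ψ j n x = 1 := by
      have hBev : ∀ᶠ n in atTop, σB j p₀ n x = 0 := hB4 j p₀ x hp₀
      filter_upwards [hBev, eventually_ge_atTop p₀] with n h0 hn
      simp only [hψdef, hAdef]
      have hA1' : (∏ m ∈ Finset.range (n+1), σA j p₀ m n x) * (1 - σB j p₀ n x) = 1 := by
        have hall : ∀ m ∈ Finset.range (n+1), σA j p₀ m n x = 1 :=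
          fun m _ => hA3 j p₀ m n x hp₀
        rw [Finset.prod_eq_one hall, h0]
        ring
      have hz : ∏ p ∈ Finset.range (n+1),
          (1 - (∏ m ∈ Finset.range (n+1), σA j p m n x) * (1 - σB j p n x)) = 0 := by
        apply Finset.prod_eq_zero (Finset.mem_range.mpr (show p₀ < n + 1 by omega))
        rw [hA1']
        ring
      rw [hz]
      ring
    -- (b) for l with f x ≠ y l, eventually ψ l n x = 0
    have hb : ∀ l, f x ≠ y l → ∀ᶠ n in atTop, ψ l n x = 0 := by
      intro l hne
      have hxc : x ∈ f ⁻¹' {y l}ᶜ := by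
        simp only [Set.mem_preimage, Set.mem_compl_iff, Set.mem_singleton_iff]
        exact hne
      have hxE : ∃ m₀, x ∈ Ec l m₀ := by
        rw [hE0eq l] at hxc
        obtain ⟨i, hi⟩ := Set.mem_iUnion.mp hxc
        exact ⟨i, Set.mem_iUnion₂.mpr ⟨i, Finset.mem_range.mpr (by omega), hi⟩⟩
      obtain ⟨m₀, hm₀⟩ := hxE
      have hsmall : ∀ᶠ n in atTop, ∀ p ∈ Finset.range m₀, σA l p m₀ n x = 0 := by
        rw [Filter.eventually_all_finset]
        intro p _
        exact hA4 l p m₀ x hm₀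
      filter_upwards [hsmall, eventually_ge_atTop m₀] with n hp hn
      simp only [hψdef, hAdef]
      have hall : ∀ p ∈ Finset.range (n+1),
          (1 - (∏ m ∈ Finset.range (n+1), σA l p m n x) * (1 - σB l p n x)) = 1 := by
        intro p hpmem
        by_cases hcase : p < m₀
        · have hzz : ∏ m ∈ Finset.range (n+1), σA l p m n x = 0 :=
            Finset.prod_eq_zero (Finset.mem_range.mpr (show m₀ < n + 1 by omega))
              (hp p (Finset.mem_range.mpr hcase))
          rw [hzz]
          ring
        · have hmem : x ∈ Ec l p := hEcmono l (by omega) hm₀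
          rw [hB3 l p n x hmem]
          ring
      rw [Finset.prod_congr rfl hall]
      simp
    have hball : ∀ᶠ n in atTop, ∀ l ∈ Finset.range j, ψ l n x = 0 := by
      rw [Filter.eventually_all_finset]
      intro l hl
      exact hb l (hjmin l (Finset.mem_range.mp hl))
    have heq : ∀ᶠ n in atTop, g n x = y j := by
      filter_upwards [ha, hball, eventually_ge_atTop j] with n h1 h0s hn
      simp only [hgdef]
      rw [Finset.sum_eq_single j]
      · rw [h1]
        have hone : ∏ l ∈ Finset.range j, (1 - ψ l n x) = 1 :=
          Finset.prod_eq_one (fun l hl => by rw [h0s l hl]; ring)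
        rw [hone]
        ring
      · intro k _ hkj
        rcases lt_or_gt_of_ne hkj with hlt | hgt
        · rw [h0s k (Finset.mem_range.mpr hlt)]
          ring
        · have hzz : ∏ l ∈ Finset.range k, (1 - ψ l n x) = 0 := by
            apply Finset.prod_eq_zero (Finset.mem_range.mpr hgt)
            rw [h1]
            ring
          rw [hzz]
          ring
      · intro hj'
        exact absurd (Finset.mem_range.mpr (show j < n + 1 by omega)) hj'
    rw [hj]
    exact Filter.Tendsto.congr'
      (show (fun _ => y j) =ᶠ[atTop] fun n => g n x from heq.mono fun n h => h.symm)
      tendsto_const_nhds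

end StatementNine
end
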